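/- arXiv:1709.04700 — 13 statements merged into one kernel-verified Lean document; each statement's English description precedes it below -/
import Mathlib

section
/- Let X be a uniformly convex Banach space with modulus of uniform convexity δ_X (i.e., for all x, y in the closed unit ball with ‖x − y‖ ≥ ε one has ‖(x+y)/2‖ ≤ 1 − δ_X(ε)). Let C ⊆ X be a closed convex set, p the metric projection of a point x onto C, and suppose q ∈ C satisfies ‖p − q‖ ≥ ε > 0 and ‖x − q‖ ≤ β with β > 0 and ‖x − p‖ ≤ ‖x − q‖. Then ‖x − p‖ + ‖x − p‖·δ_X(ε/β) ≤ ‖x − q‖. -/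
/-- Uniform convexity estimate for metric projections. -/
theorem stmt_2 {X : Type*} [NormedAddCommGroup X] [NormedSpace ℝ X] [CompleteSpace X]
    (δ : ℝ → ℝ)
    (hδpos : ∀ ε ∈ Set.Ioc (0:ℝ) 2, 0 < δ ε ∧ δ ε ≤ 1)
    (hδ : ∀ ε ∈ Set.Ioc (0:ℝ) 2, ∀ u v : X, ‖u‖ ≤ 1 → ‖v‖ ≤ 1 → ε ≤ ‖u - v‖ →
      ‖(1/2 : ℝ) • (u + v)‖ ≤ 1 - δ ε)
    (C : Set X) (hCconv : Convex ℝ C) (hCclosed : IsClosed C)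
    (x p q : X) (hp : p ∈ C) (hproj : ∀ z ∈ C, ‖x - p‖ ≤ ‖x - z‖)
    (hq : q ∈ C) (ε β : ℝ) (hε : 0 < ε) (hpq : ε ≤ ‖p - q‖)
    (hβ : 0 < β) (hxq : ‖x - q‖ ≤ β) (hle : ‖x - p‖ ≤ ‖x - q‖) :
    ‖x - p‖ + ‖x - p‖ * δ (ε / β) ≤ ‖x - q‖ := by
  set d := ‖x - p‖ with hd
  set D := ‖x - q‖ with hDdef
  have htri : ‖p - q‖ ≤ d + D := by
    calc ‖p - q‖ = ‖(p - x) + (x - q)‖ := by abel_nf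
    _ ≤ ‖p - x‖ + ‖x - q‖ := norm_add_le _ _
    _ = d + D := by rw [norm_sub_rev]
  have hD : 0 < D := by
    by_contra h
    push_neg at h
    have hD0 : D = 0 := le_antisymm h (norm_nonneg _)
    have hd0 : d = 0 := le_antisymm (hD0 ▸ hle) (norm_nonneg _)
    have : ε ≤ 0 := by linarith [hpq.trans htri]
    linarith
  have hmem : ε / β ∈ Set.Ioc (0:ℝ) 2 := by
    constructor
    · exact div_pos hε hβ
    · rw [div_le_iff₀ hβ]
      nlinarith [hpq.trans htri]
  have hu : ‖(1/D : ℝ) • (x - p)‖ ≤ 1 := by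
    rw [norm_smul, Real.norm_eq_abs, abs_of_pos (by positivity : (0:ℝ) < 1/D)]
    rw [div_mul_eq_mul_div, one_mul, div_le_one hD]
    exact hle
  have hv : ‖(1/D : ℝ) • (x - q)‖ ≤ 1 := by
    rw [norm_smul, Real.norm_eq_abs, abs_of_pos (by positivity : (0:ℝ) < 1/D)]
    rw [div_mul_eq_mul_div, one_mul, div_le_one hD]
  have hsub : ε / β ≤ ‖(1/D : ℝ) • (x - p) - (1/D : ℝ) • (x - q)‖ := by
    have : (1/D : ℝ) • (x - p) - (1/D : ℝ) • (x - q) = (1/D : ℝ) • (q - p) := by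
      rw [← smul_sub]; congr 1; abel
    rw [this, norm_smul, Real.norm_eq_abs, abs_of_pos (by positivity : (0:ℝ) < 1/D),
      norm_sub_rev]
    calc ε / β ≤ ε / D := by
          apply div_le_div_of_nonneg_left hε.le hD hxq
    _ ≤ ‖p - q‖ / D := by gcongr
    _ = 1/D * ‖p - q‖ := by ring
  have key := hδ (ε/β) hmem _ _ hu hv hsub
  have hmC : (1/2 : ℝ) • p + (1/2 : ℝ) • q ∈ C :=
    hCconv hp hq (by norm_num) (by norm_num) (by norm_num)
  have hproj' : d ≤ ‖x - ((1/2 : ℝ) • p + (1/2 : ℝ) • q)‖ := hproj _ hmC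
  have hEq : (1/2 : ℝ) • ((1/D : ℝ) • (x - p) + (1/D : ℝ) • (x - q))
      = (1/D : ℝ) • (x - ((1/2 : ℝ) • p + (1/2 : ℝ) • q)) := by
    module
  rw [hEq, norm_smul, Real.norm_eq_abs, abs_of_pos (by positivity : (0:ℝ) < 1/D)] at key
  have hmid : ‖x - ((1/2 : ℝ) • p + (1/2 : ℝ) • q)‖ ≤ D * (1 - δ (ε/β)) := by
    have := key
    rw [div_mul_eq_mul_div, one_mul, div_le_iff₀ hD] at this
    linarith [this]
  have hδp := (hδpos (ε/β) hmem).1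
  nlinarith [hproj'.trans hmid, mul_le_mul_of_nonneg_right hle hδp.le]
end

section
/- Let X be a normed space, h : X → ℝ ∪ {∞} a convex function, C ⊆ X convex, and γ : (0,∞) → (0,∞) a function such that h((1−t)x + ty) ≤ (1−t)h(x) + t h(y) − t(1−t)γ(ε) for all t ∈ [0,1] and all x, y ∈ C ∩ dom h with ‖x − y‖ ≥ ε. Then for all x, y ∈ C ∩ dom h with ‖x − y‖ ≥ ε and all x* ∈ ∂h(x), y* ∈ ∂h(y), one has ⟨x* − y*, x − y⟩ ≥ 2γ(ε). -/
/-- Zălinescu: a uniformly convex function has a uniformly monotone subdifferential. -/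
theorem stmt_3 {X : Type*} [NormedAddCommGroup X] [NormedSpace ℝ X]
    (h : X → EReal) (hbot : ∀ x, h x ≠ ⊥)
    (hconv : ∀ x y : X, ∀ t ∈ Set.Icc (0:ℝ) 1,
      h ((1 - t) • x + t • y) ≤ ((1 - t : ℝ) : EReal) * h x + ((t : ℝ) : EReal) * h y)
    (C : Set X) (hC : Convex ℝ C)
    (γ : ℝ → ℝ) (hγpos : ∀ ε > (0:ℝ), 0 < γ ε)
    (ε : ℝ) (hε : 0 < ε)
    (hγ : ∀ t ∈ Set.Icc (0:ℝ) 1, ∀ x ∈ C, ∀ y ∈ C, h x ≠ ⊤ → h y ≠ ⊤ → ε ≤ ‖x - y‖ →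
      h ((1 - t) • x + t • y) ≤ ((1 - t : ℝ) : EReal) * h x + ((t : ℝ) : EReal) * h y
        - ((t * (1 - t) * γ ε : ℝ) : EReal))
    (x y : X) (hx : x ∈ C) (hy : y ∈ C) (hxT : h x ≠ ⊤) (hyT : h y ≠ ⊤)
    (hxy : ε ≤ ‖x - y‖)
    (x' y' : X →L[ℝ] ℝ)
    (hx' : ∀ v, h x + ((x' (v - x) : ℝ) : EReal) ≤ h v)
    (hy' : ∀ v, h y + ((y' (v - y) : ℝ) : EReal) ≤ h v) :
    2 * γ ε ≤ x' (x - y) - y' (x - y) := by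
  have key : ∀ u ∈ C, ∀ v ∈ C, h u ≠ ⊤ → h v ≠ ⊤ → ε ≤ ‖u - v‖ →
      ∀ f : X →L[ℝ] ℝ, (∀ w, h u + ((f (w - u) : ℝ) : EReal) ≤ h w) →
      f (v - u) ≤ (h v).toReal - (h u).toReal - γ ε := by
    intro u hu v hv huT hvT huv f hf
    set a := (h u).toReal with ha
    set b := (h v).toReal with hb
    have hua : h u = (a : EReal) := (EReal.coe_toReal huT (hbot u)).symm
    have hvb : h v = (b : EReal) := (EReal.coe_toReal hvT (hbot v)).symm
    have step : ∀ t : ℝ, 0 < t → t < 1 → f (v - u) ≤ b - a - (1 - t) * γ ε := by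
      intro t ht0 ht1
      have htI : t ∈ Set.Icc (0:ℝ) 1 := ⟨le_of_lt ht0, le_of_lt ht1⟩
      have h1 := hf ((1 - t) • u + t • v)
      have harg : ((1 - t) • u + t • v) - u = t • (v - u) := by
        rw [sub_smul, one_smul, smul_sub]; abel
      rw [harg, map_smul] at h1
      have h2 := hγ t htI u hu v hv huT hvT huv
      have h3 : ((a + t * f (v - u) : ℝ) : EReal)
          ≤ (((1 - t) * a + t * b - t * (1 - t) * γ ε : ℝ) : EReal) := by
        calc ((a + t * f (v - u) : ℝ) : EReal)
            = h u + ((t * f (v - u) : ℝ) : EReal) := by rw [hua]; exact_mod_cast rfl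
          _ ≤ h ((1 - t) • u + t • v) := h1
          _ ≤ ((1 - t : ℝ) : EReal) * h u + ((t : ℝ) : EReal) * h v
              - ((t * (1 - t) * γ ε : ℝ) : EReal) := h2
          _ = (((1 - t) * a + t * b - t * (1 - t) * γ ε : ℝ) : EReal) := by
              rw [hua, hvb]
              rw [← EReal.coe_mul, ← EReal.coe_mul, ← EReal.coe_add, ← EReal.coe_sub]
      have h4 : a + t * f (v - u) ≤ (1 - t) * a + t * b - t * (1 - t) * γ ε :=
        EReal.coe_le_coe_iff.mp h3
      nlinarith [h4, ht0]
    have hγε := hγpos ε hε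
    refine le_of_forall_pos_le_add ?_
    intro δ hδ
    set t : ℝ := min (δ / γ ε) (1/2) with htdef
    have ht0 : 0 < t := lt_min (div_pos hδ hγε) (by norm_num)
    have ht1 : t < 1 := lt_of_le_of_lt (min_le_right _ _) (by norm_num)
    have h5 := step t ht0 ht1
    have h6 : t * γ ε ≤ δ := by
      have : t ≤ δ / γ ε := min_le_left _ _
      calc t * γ ε ≤ (δ / γ ε) * γ ε := by nlinarith
        _ = δ := by field_simp
    nlinarith
  have k1 := key x hx y hy hxT hyT hxy x' hx'
  have k2 := key y hy x hx hyT hxT (by rwa [norm_sub_rev]) y' hy'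
  have e1 : x' (x - y) = - x' (y - x) := by rw [← neg_sub y x, map_neg]
  linarith [e1, k1, k2]
end

section
/- Let X be a normed space and h : X → ℝ ∪ {∞} convex. If for some δ : (0,∞) → (0,∞) and convex set C one has δ(ε) ≤ ½h(x) + ½h(y) − h((x+y)/2) whenever x, y ∈ C ∩ dom h and ‖x − y‖ ≥ ε, then h((1−t)x + ty) ≤ (1−t)h(x) + t h(y) − 2 t(1−t) δ(ε) for all t ∈ [0,1] and x, y ∈ C ∩ dom h with ‖x − y‖ ≥ ε. -/
/-!
Write `m = (x + y)/2`. A point of the segment `[x, y]` lies either on `[x, m]` (for `t ≤ 1/2`)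
or on `[m, y]` (for `t ≥ 1/2`), at parameter `2t` resp. `2t - 1`. Convexity along that
half-segment, combined with the midpoint gap `h m ≤ (h x + h y)/2 - δ(ε)`, gives the bound
with the loss `2 min(t, 1 - t) δ(ε) ≥ 2 t (1 - t) δ(ε)`.
-/

open Set

section
variable {X : Type*} [AddCommGroup X] [Module ℝ X]

theorem smul_add_smul_midpoint_left (x y : X) (t : ℝ) :
    (1 - 2 * t) • x + (2 * t) • ((1 / 2 : ℝ) • (x + y)) = (1 - t) • x + t • y := by
  module

theorem smul_midpoint_add_smul_right (x y : X) (t : ℝ) :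
    (1 - (2 * t - 1)) • ((1 / 2 : ℝ) • (x + y)) + (2 * t - 1) • y = (1 - t) • x + t • y := by
  module

theorem EReal.le_coe_of_convex {h : X → EReal}
    (hconv : ∀ x y : X, ∀ t ∈ Icc (0:ℝ) 1,
      h ((1 - t) • x + t • y) ≤ ((1 - t : ℝ) : EReal) * h x + ((t : ℝ) : EReal) * h y)
    {x y : X} {a b : ℝ} (hx : h x = a) (hy : h y = b) {t : ℝ} (ht : t ∈ Icc 0 1) :
    h ((1 - t) • x + t • y) ≤ (((1 - t) * a + t * b : ℝ) : EReal) := by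
  simpa only [hx, hy, ← EReal.coe_mul, ← EReal.coe_add] using hconv x y t ht

theorem EReal.le_coe_sub_of_midpoint_gap {h : X → EReal}
    (hconv : ∀ x y : X, ∀ t ∈ Icc (0:ℝ) 1,
      h ((1 - t) • x + t • y) ≤ ((1 - t : ℝ) : EReal) * h x + ((t : ℝ) : EReal) * h y)
    {x y : X} {a b c d : ℝ} (hx : h x = a) (hy : h y = b) (hm : h ((1 / 2 : ℝ) • (x + y)) = c)
    (hd : 0 ≤ d) (hgap : d ≤ a / 2 + b / 2 - c) {t : ℝ} (ht : t ∈ Icc 0 1) :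
    h ((1 - t) • x + t • y) ≤ (((1 - t) * a + t * b - 2 * t * (1 - t) * d : ℝ) : EReal) := by
  obtain ⟨ht0, ht1⟩ := ht
  rcases le_total t (1 / 2) with hle | hge
  · calc h ((1 - t) • x + t • y)
        = h ((1 - 2 * t) • x + (2 * t) • ((1 / 2 : ℝ) • (x + y))) := by
          rw [smul_add_smul_midpoint_left]
      _ ≤ (((1 - 2 * t) * a + 2 * t * c : ℝ) : EReal) :=
          EReal.le_coe_of_convex hconv hx hm ⟨by linarith, by linarith⟩
      _ ≤ _ := by
          gcongr
          nlinarith [mul_nonneg (mul_nonneg ht0 ht0) hd]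
  · calc h ((1 - t) • x + t • y)
        = h ((1 - (2 * t - 1)) • ((1 / 2 : ℝ) • (x + y)) + (2 * t - 1) • y) := by
          rw [smul_midpoint_add_smul_right]
      _ ≤ (((1 - (2 * t - 1)) * c + (2 * t - 1) * b : ℝ) : EReal) :=
          EReal.le_coe_of_convex hconv hm hy ⟨by linarith, by linarith⟩
      _ ≤ _ := by
          gcongr
          have ht1' : 0 ≤ 1 - t := by linarith
          nlinarith [mul_nonneg (mul_nonneg ht1' ht1') hd]

end

theorem EReal.exists_coe_eq_of_coe_le_half_add_half_sub {u v w : EReal} {a b d : ℝ}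
    (hu : u = a) (hv : v = b) (hw : w ≠ ⊥)
    (hgap : (d : EReal) ≤ ((1 / 2 : ℝ) : EReal) * u + ((1 / 2 : ℝ) : EReal) * v - w) :
    ∃ c : ℝ, w = c ∧ d ≤ a / 2 + b / 2 - c := by
  rw [hu, hv, ← EReal.coe_mul, ← EReal.coe_mul, ← EReal.coe_add] at hgap
  have hwtop : w ≠ ⊤ := by
    rintro rfl
    simp at hgap
  refine ⟨w.toReal, (EReal.coe_toReal hwtop hw).symm, ?_⟩
  rw [← EReal.coe_toReal hwtop hw, ← EReal.coe_sub, EReal.coe_le_coe_iff] at hgap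
  linarith

theorem stmt_4_general {X : Type*} [NormedAddCommGroup X] [NormedSpace ℝ X]
    (h : X → EReal) (hbot : ∀ x, h x ≠ ⊥)
    (hconv : ∀ x y : X, ∀ t ∈ Set.Icc (0:ℝ) 1,
      h ((1 - t) • x + t • y) ≤ ((1 - t : ℝ) : EReal) * h x + ((t : ℝ) : EReal) * h y)
    (C : Set X)
    (δ : ℝ → ℝ) (hδpos : ∀ ε > (0:ℝ), 0 < δ ε)
    (ε : ℝ) (hε : 0 < ε)
    (hδ : ∀ x ∈ C, ∀ y ∈ C, h x ≠ ⊤ → h y ≠ ⊤ → ε ≤ ‖x - y‖ →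
      ((δ ε : ℝ) : EReal) ≤ ((1/2 : ℝ) : EReal) * h x + ((1/2 : ℝ) : EReal) * h y
        - h ((1/2 : ℝ) • (x + y))) :
    ∀ t ∈ Set.Icc (0:ℝ) 1, ∀ x ∈ C, ∀ y ∈ C, h x ≠ ⊤ → h y ≠ ⊤ → ε ≤ ‖x - y‖ →
      h ((1 - t) • x + t • y) ≤ ((1 - t : ℝ) : EReal) * h x + ((t : ℝ) : EReal) * h y
        - ((2 * t * (1 - t) * δ ε : ℝ) : EReal) := by
  intro t ht x hx y hy hxtop hytop hxy
  have hxa := (EReal.coe_toReal hxtop (hbot x)).symm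
  have hyb := (EReal.coe_toReal hytop (hbot y)).symm
  obtain ⟨c, hmc, hgap⟩ := EReal.exists_coe_eq_of_coe_le_half_add_half_sub hxa hyb (hbot _)
    (hδ x hx y hy hxtop hytop hxy)
  calc h ((1 - t) • x + t • y)
      ≤ (((1 - t) * (h x).toReal + t * (h y).toReal - 2 * t * (1 - t) * δ ε : ℝ) : EReal) :=
        EReal.le_coe_sub_of_midpoint_gap hconv hxa hyb hmc (hδpos ε hε).le hgap ht
    _ = _ := by
        rw [hxa, hyb]
        norm_cast

/-- Midpoint modulus of uniform convexity implies the gauge form with `2 t (1-t) δ(ε)`. -/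
theorem stmt_4 {X : Type*} [NormedAddCommGroup X] [NormedSpace ℝ X]
    (h : X → EReal) (hbot : ∀ x, h x ≠ ⊥)
    (hconv : ∀ x y : X, ∀ t ∈ Set.Icc (0:ℝ) 1,
      h ((1 - t) • x + t • y) ≤ ((1 - t : ℝ) : EReal) * h x + ((t : ℝ) : EReal) * h y)
    (C : Set X) (hC : Convex ℝ C)
    (δ : ℝ → ℝ) (hδpos : ∀ ε > (0:ℝ), 0 < δ ε)
    (ε : ℝ) (hε : 0 < ε)
    (hδ : ∀ x ∈ C, ∀ y ∈ C, h x ≠ ⊤ → h y ≠ ⊤ → ε ≤ ‖x - y‖ →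
      ((δ ε : ℝ) : EReal) ≤ ((1/2 : ℝ) : EReal) * h x + ((1/2 : ℝ) : EReal) * h y
        - h ((1/2 : ℝ) • (x + y))) :
    ∀ t ∈ Set.Icc (0:ℝ) 1, ∀ x ∈ C, ∀ y ∈ C, h x ≠ ⊤ → h y ≠ ⊤ → ε ≤ ‖x - y‖ →
      h ((1 - t) • x + t • y) ≤ ((1 - t : ℝ) : EReal) * h x + ((t : ℝ) : EReal) * h y
        - ((2 * t * (1 - t) * δ ε : ℝ) : EReal) :=
  stmt_4_general h hbot hconv C δ hδpos ε hε hδ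
end

section
/- Let X be a uniformly convex Banach space with modulus δ_X, Φ a Young function, and r > 0. Define ξ_{Φ,r}(ε) > 0 such that Φ(β) ≥ Φ(α) + ξ_{Φ,r}(ε) whenever 0 ≤ α, β ≤ r and β ≥ α + ε; let ω_{Φ,r}(ε) > 0 be a modulus of uniform continuity of Φ on [0,r]; let δ_{Φ,r} be a modulus of uniform convexity of Φ on [0,r]. Set ε̆ = (1/3)ξ_{Φ,r}((ε/4)δ_X(ε/(2r))), ε̃ = min{ε/2, ω_{Φ,(3/2)r}(2ε̆)}, and δ_r(ε) = min{δ_{Φ,r}(ε̃), ε̆}. Then for all α, β ∈ [0,r] and all x, y in the closed unit ball of X with ‖αx − βy‖ ≥ ε, one has Φ(‖αx + βy‖/2) ≤ ½Φ(α) + ½Φ(β) − δ_r(ε). -/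
set_option maxHeartbeats 1600000 in
/-- Explicit modulus of uniform convexity of `Φ ∘ ‖·‖` on a ball of radius `r`
in a uniformly convex Banach space. -/
theorem stmt_5 {X : Type*} [NormedAddCommGroup X] [NormedSpace ℝ X] [CompleteSpace X]
    (δX : ℝ → ℝ)
    (hδXpos : ∀ ε ∈ Set.Ioc (0:ℝ) 2, 0 < δX ε ∧ δX ε ≤ 1)
    (hδX : ∀ ε ∈ Set.Ioc (0:ℝ) 2, ∀ u v : X, ‖u‖ ≤ 1 → ‖v‖ ≤ 1 → ε ≤ ‖u - v‖ →
      ‖(1/2 : ℝ) • (u + v)‖ ≤ 1 - δX ε)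
    (Φ : ℝ → ℝ) (hΦc : ContinuousOn Φ (Set.Ici 0))
    (hΦconv : StrictConvexOn ℝ (Set.Ici 0) Φ)
    (hΦmono : StrictMonoOn Φ (Set.Ici 0))
    (hΦ0 : Φ 0 = 0)
    (r : ℝ) (hr : 0 < r)
    (ξ ω δΦ : ℝ → ℝ)
    (hξpos : ∀ ε > (0:ℝ), 0 < ξ ε)
    (hξ : ∀ ε > (0:ℝ), ∀ α ∈ Set.Icc (0:ℝ) r, ∀ β ∈ Set.Icc (0:ℝ) r,
      α + ε ≤ β → Φ α + ξ ε ≤ Φ β)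
    (hωpos : ∀ ε > (0:ℝ), 0 < ω ε)
    (hω : ∀ ε > (0:ℝ), ∀ α ∈ Set.Icc (0:ℝ) (3/2 * r), ∀ β ∈ Set.Icc (0:ℝ) (3/2 * r),
      |α - β| < ω ε → |Φ α - Φ β| < ε)
    (hδΦpos : ∀ ε > (0:ℝ), 0 < δΦ ε)
    (hδΦ : ∀ ε > (0:ℝ), ∀ a ∈ Set.Icc (0:ℝ) r, ∀ b ∈ Set.Icc (0:ℝ) r, ε ≤ |a - b| →
      Φ ((a + b) / 2) ≤ Φ a / 2 + Φ b / 2 - δΦ ε)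
    (ε : ℝ) (hε : 0 < ε)
    (α β : ℝ) (hα : α ∈ Set.Icc (0:ℝ) r) (hβ : β ∈ Set.Icc (0:ℝ) r)
    (x y : X) (hx : ‖x‖ ≤ 1) (hy : ‖y‖ ≤ 1)
    (hsep : ε ≤ ‖α • x - β • y‖) :
    Φ (‖α • x + β • y‖ / 2) ≤ Φ α / 2 + Φ β / 2 -
      min (δΦ (min (ε / 2) (ω (2 * (ξ (ε / 4 * δX (ε / (2 * r))) / 3)))))
          (ξ (ε / 4 * δX (ε / (2 * r))) / 3) := by
  obtain ⟨hα0, hαr⟩ := hα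
  obtain ⟨hβ0, hβr⟩ := hβ
  have hnx : ‖α • x‖ ≤ α := by
    rw [norm_smul, Real.norm_eq_abs, abs_of_nonneg hα0]
    nlinarith [norm_nonneg x]
  have hny : ‖β • y‖ ≤ β := by
    rw [norm_smul, Real.norm_eq_abs, abs_of_nonneg hβ0]
    nlinarith [norm_nonneg y]
  have hε2r : ε ≤ 2 * r := by
    have h := norm_sub_le (α • x) (β • y)
    linarith
  have hmem : ε / (2 * r) ∈ Set.Ioc (0:ℝ) 2 := by
    constructor
    · positivity
    · rw [div_le_iff₀ (by linarith)]; linarith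
  obtain ⟨hd0, hd1⟩ := hδXpos _ hmem
  set d := δX (ε / (2 * r)) with hdeq
  set t := ε / 4 * d with hteq
  have ht0 : 0 < t := by positivity
  have hξt0 : 0 < ξ t := hξpos t ht0
  set eB := ξ t / 3 with heBeq
  have heB0 : 0 < eB := by rw [heBeq]; linarith
  have hω0 : 0 < ω (2 * eB) := hωpos _ (by linarith)
  set eT := min (ε / 2) (ω (2 * eB)) with heTeq
  have heT0 : 0 < eT := lt_min (by linarith) hω0
  have heTε : eT ≤ ε / 2 := min_le_left _ _
  have heTω : eT ≤ ω (2 * eB) := min_le_right _ _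
  have hs0 : (0:ℝ) ≤ ‖α • x + β • y‖ / 2 := by positivity
  have hsum : ‖α • x + β • y‖ ≤ α + β := (norm_add_le _ _).trans (by linarith)
  have hmid : Φ ((α + β) / 2) ≤ Φ α / 2 + Φ β / 2 := by
    have h := hΦconv.convexOn.2 (Set.mem_Ici.mpr hα0) (Set.mem_Ici.mpr hβ0)
      (by norm_num : (0:ℝ) ≤ 1/2) (by norm_num : (0:ℝ) ≤ 1/2) (by norm_num)
    simp only [smul_eq_mul] at h
    calc Φ ((α + β) / 2) = Φ (1/2 * α + 1/2 * β) := by congr 1; ring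
      _ ≤ 1/2 * Φ α + 1/2 * Φ β := h
      _ = Φ α / 2 + Φ β / 2 := by ring
  rcases le_or_gt eT |α - β| with hcase | hcase
  · -- case |α - β| ≥ eT : use the modulus of Φ
    have h1 := hδΦ eT heT0 α ⟨hα0, hαr⟩ β ⟨hβ0, hβr⟩ hcase
    have h2 : Φ (‖α • x + β • y‖ / 2) ≤ Φ ((α + β) / 2) :=
      hΦmono.monotoneOn (Set.mem_Ici.mpr hs0)
        (Set.mem_Ici.mpr (by linarith)) (by linarith)
    have h3 : min (δΦ eT) eB ≤ δΦ eT := min_le_left _ _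
    linarith
  · -- case |α - β| < eT : use uniform convexity of X
    set a := (α + β) / 2 with haeq
    have ha0 : (0:ℝ) ≤ a := by rw [haeq]; linarith
    have har : a ≤ r := by rw [haeq]; linarith
    have hαa : |α - a| = |α - β| / 2 := by
      rw [haeq]; rw [show α - (α + β) / 2 = (α - β) / 2 by ring, abs_div]
      norm_num
    have hβa : |β - a| = |α - β| / 2 := by
      rw [haeq]; rw [show β - (α + β) / 2 = -((α - β) / 2) by ring, abs_neg, abs_div]
      norm_num
    have hnxa : ‖(α - a) • x‖ ≤ |α - β| / 2 := by
      rw [norm_smul, Real.norm_eq_abs, hαa]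
      nlinarith [abs_nonneg (α - β), norm_nonneg x]
    have hnya : ‖(β - a) • y‖ ≤ |α - β| / 2 := by
      rw [norm_smul, Real.norm_eq_abs, hβa]
      nlinarith [abs_nonneg (α - β), norm_nonneg y]
    have hna : ‖a • (x - y)‖ = a * ‖x - y‖ := by
      rw [norm_smul, Real.norm_eq_abs, abs_of_nonneg ha0]
    have hdecomp : α • x - β • y = a • (x - y) + ((α - a) • x - (β - a) • y) := by
      module
    have hlow : ε - |α - β| ≤ a * ‖x - y‖ := by
      have h1 : ‖α • x - β • y‖ ≤ ‖a • (x - y)‖ + (‖(α - a) • x‖ + ‖(β - a) • y‖) := by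
        rw [hdecomp]
        exact (norm_add_le _ _).trans (by gcongr; exact norm_sub_le _ _)
      rw [hna] at h1
      linarith
    have hxy2 : ‖x - y‖ ≤ 2 := (norm_sub_le _ _).trans (by linarith)
    have hax2 : a * ‖x - y‖ ≤ a * 2 := mul_le_mul_of_nonneg_left hxy2 ha0
    have haε : ε / 4 ≤ a := by linarith
    have hxylb : ε / (2 * r) ≤ ‖x - y‖ := by
      rw [div_le_iff₀ (by linarith)]
      have hrx : a * ‖x - y‖ ≤ r * ‖x - y‖ :=
        mul_le_mul_of_nonneg_right har (norm_nonneg _)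
      linarith
    have hX := hδX _ hmem x y hx hy hxylb
    have h12 : ‖(1/2:ℝ) • (x + y)‖ = ‖x + y‖ / 2 := by
      rw [norm_smul, Real.norm_eq_abs, abs_of_nonneg (by norm_num : (0:ℝ) ≤ 1/2)]
      ring
    have hxyup : ‖x + y‖ ≤ 2 * (1 - d) := by
      rw [h12] at hX; linarith
    have hdecomp2 : α • x + β • y = a • (x + y) + ((α - a) • x + (β - a) • y) := by
      module
    have hup : ‖α • x + β • y‖ ≤ 2 * a * (1 - d) + |α - β| := by
      have h1 : ‖α • x + β • y‖ ≤ ‖a • (x + y)‖ + (‖(α - a) • x‖ + ‖(β - a) • y‖) := by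
        rw [hdecomp2]
        exact (norm_add_le _ _).trans (by gcongr; exact norm_add_le _ _)
      have h2 : ‖a • (x + y)‖ ≤ a * (2 * (1 - d)) := by
        rw [norm_smul, Real.norm_eq_abs, abs_of_nonneg ha0]
        exact mul_le_mul_of_nonneg_left hxyup ha0
      nlinarith
    have htad : t ≤ a * d := by rw [hteq]; nlinarith
    have hsub : ‖α • x + β • y‖ / 2 ≤ a - t + eT / 2 := by nlinarith [hcase.le]
    have hat0 : (0:ℝ) ≤ a - t := by nlinarith
    have hatr : a - t ≤ r := by linarith
    have hξa : Φ (a - t) + ξ t ≤ Φ a :=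
      hξ t ht0 (a - t) ⟨hat0, hatr⟩ a ⟨ha0, har⟩ (by linarith)
    have hΦs : Φ (‖α • x + β • y‖ / 2) ≤ Φ (a - t) + 2 * eB := by
      rcases le_or_gt (‖α • x + β • y‖ / 2) (a - t) with h | h
      · have := hΦmono.monotoneOn (Set.mem_Ici.mpr hs0) (Set.mem_Ici.mpr hat0) h
        linarith
      · have hsr : ‖α • x + β • y‖ / 2 ≤ 3/2 * r := by linarith
        have habs : |‖α • x + β • y‖ / 2 - (a - t)| < ω (2 * eB) := by
          rw [abs_of_nonneg (by linarith)]
          linarith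
        have h1 := hω (2 * eB) (by linarith) (‖α • x + β • y‖ / 2) ⟨hs0, hsr⟩
          (a - t) ⟨hat0, by linarith⟩ habs
        have h2 := (abs_lt.mp h1).2
        linarith
    have hmineB : min (δΦ eT) eB ≤ eB := min_le_right _ _
    have h3eB : ξ t = 3 * eB := by rw [heBeq]; ring
    linarith
end

section
/- Let X be a uniformly convex Banach space, Φ a Young function with right derivative φ, f : X → ℝ ∪ {∞} a proper convex lower semicontinuous function, x ∈ X, and λ > 0. Then the function h(y) = f(y) + (1/φ(λ))·Φ(‖x − y‖) attains a unique minimizer on X. -/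
/-!
Every proper convex lower semicontinuous `f` has an affine minorant `B - A‖y‖` (Hahn–Banach
applied to its closed convex epigraph), so the superlinear growth of `Φ` makes
`h y = f y + Φ ‖x - y‖ / φ λ` coercive and its sublevel sets bounded. On a bounded set
`Φ ∘ ‖·‖` is uniformly midpoint convex: when `‖u‖` and `‖v‖` are far apart this is the strict
convexity of `Φ`, and when they are close, uniform convexity of `X` pushes `‖(u + v) / 2‖` a fixed
amount below both norms and strict monotonicity of `Φ` takes over. Hence `h` drops by a fixed
amount at the midpoint of any two far-apart points of a sublevel set. This makes every minimizing
sequence Cauchy and rules out two distinct minimizers; the limit of a minimizing sequence is a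
minimizer by lower semicontinuity.
-/

open Set Filter MeasureTheory

theorem MonotoneOn.intervalIntegrable_of_Ici {φ : ℝ → ℝ} {c a b : ℝ}
    (hφ : MonotoneOn φ (Ici c)) (ha : c ≤ a) (hb : c ≤ b) : IntervalIntegrable φ volume a b :=
  (hφ.mono fun _ hs => (le_min ha hb).trans hs.1).intervalIntegrable

namespace Young

variable {φ Φ : ℝ → ℝ} (hΦ : ∀ t, 0 ≤ t → Φ t = ∫ s in (0:ℝ)..t, φ s)
include hΦ

section Monotone

variable (hφ : MonotoneOn φ (Ici 0))
include hφ

theorem sub_eq_integral {c d : ℝ} (hc : 0 ≤ c) (hd : 0 ≤ d) :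
    Φ d - Φ c = ∫ s in c..d, φ s := by
  rw [hΦ c hc, hΦ d hd, sub_eq_iff_eq_add', intervalIntegral.integral_add_adjacent_intervals
    (hφ.intervalIntegrable_of_Ici le_rfl hc) (hφ.intervalIntegrable_of_Ici hc hd)]

theorem mul_sub_le_sub {c d : ℝ} (hc : 0 ≤ c) (hcd : c ≤ d) :
    φ c * (d - c) ≤ Φ d - Φ c := by
  rw [sub_eq_integral hΦ hφ hc (hc.trans hcd), mul_comm, ← smul_eq_mul,
    ← intervalIntegral.integral_const]
  exact intervalIntegral.integral_mono_on hcd intervalIntegrable_const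
    (hφ.intervalIntegrable_of_Ici hc (hc.trans hcd)) fun s hs => hφ hc (hc.trans hs.1) hs.1

theorem sub_le_mul_sub {c d : ℝ} (hc : 0 ≤ c) (hcd : c ≤ d) :
    Φ d - Φ c ≤ φ d * (d - c) := by
  rw [sub_eq_integral hΦ hφ hc (hc.trans hcd), mul_comm, ← smul_eq_mul,
    ← intervalIntegral.integral_const]
  exact intervalIntegral.integral_mono_on hcd (hφ.intervalIntegrable_of_Ici hc (hc.trans hcd))
    intervalIntegrable_const fun s hs => hφ (hc.trans hs.1) (hc.trans hcd) hs.2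

theorem continuousOn : ContinuousOn Φ (Ici 0) := by
  intro t (ht : 0 ≤ t)
  have hcont : ContinuousOn Φ (Icc 0 (t + 1)) := by
    have h := intervalIntegral.continuousOn_primitive_interval'
      (hφ.intervalIntegrable_of_Ici le_rfl (by linarith : (0:ℝ) ≤ t + 1)) left_mem_uIcc
    rw [uIcc_of_le (by linarith)] at h
    exact h.congr fun s hs => hΦ s hs.1
  exact (hcont t ⟨ht, by linarith⟩).mono_of_mem_nhdsWithin
    (mem_nhdsWithin.2 ⟨Iio (t + 1), isOpen_Iio, by simp, fun s hs => ⟨hs.2, hs.1.le⟩⟩)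

theorem nonneg (hφ0 : φ 0 = 0) {t : ℝ} (ht : 0 ≤ t) : 0 ≤ Φ t := by
  have h := mul_sub_le_sub hΦ hφ le_rfl ht
  rwa [hφ0, zero_mul, hΦ 0 le_rfl, intervalIntegral.integral_same, sub_zero] at h

theorem exists_mul_sub_le (hφ0 : φ 0 = 0) (hφtop : Tendsto φ atTop atTop) (A : ℝ) :
    ∃ K, ∀ t, 0 ≤ t → A * t - K ≤ Φ t := by
  obtain ⟨s, hsA, hs⟩ := ((hφtop.eventually_ge_atTop A).and (eventually_ge_atTop 0)).exists
  refine ⟨|A| * s, fun t ht => ?_⟩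
  rcases le_total s t with hst | hts
  · nlinarith [mul_sub_le_sub hΦ hφ hs hst, nonneg hΦ hφ hφ0 hs, le_abs_self A]
  · nlinarith [nonneg hΦ hφ hφ0 ht, le_abs_self A, abs_nonneg A]

end Monotone

variable (hφ : StrictMonoOn φ (Ici 0))
include hφ

theorem mul_sub_lt_sub {c d : ℝ} (hc : 0 ≤ c) (hcd : c < d) :
    φ c * (d - c) < Φ d - Φ c := by
  obtain ⟨w, hcw, hwd⟩ := exists_between hcd
  have hlow := mul_sub_le_sub hΦ hφ.monotoneOn hc hcw.le
  have hhigh := mul_sub_le_sub hΦ hφ.monotoneOn (hc.trans hcw.le) hwd.le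
  have hφw : φ c * (d - w) < φ w * (d - w) :=
    mul_lt_mul_of_pos_right (hφ hc (hc.trans hcw.le) hcw) (sub_pos.2 hwd)
  linarith

theorem strictConvexOn : StrictConvexOn ℝ (Ici 0) Φ := by
  refine strictConvexOn_of_slope_strict_mono_adjacent (convex_Ici 0) ?_
  intro x y z hx _ hxy hyz
  calc (Φ y - Φ x) / (y - x) ≤ φ y :=
        (div_le_iff₀ (sub_pos.2 hxy)).2 (sub_le_mul_sub hΦ hφ.monotoneOn hx hxy.le)
    _ < (Φ z - Φ y) / (z - y) :=
        (lt_div_iff₀ (sub_pos.2 hyz)).2 (mul_sub_lt_sub hΦ hφ (hx.trans hxy.le) hyz)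

theorem strictMonoOn (hφ0 : φ 0 = 0) : StrictMonoOn Φ (Ici 0) := by
  intro c (hc : 0 ≤ c) d _ hcd
  have hφc : 0 ≤ φ c := hφ0 ▸ hφ.monotoneOn (le_refl (0:ℝ)) hc hc
  linarith [mul_sub_lt_sub hΦ hφ hc hcd, mul_nonneg hφc (sub_nonneg.2 hcd.le)]

end Young

section StrictlyConvexReal

variable {Φ : ℝ → ℝ}

theorem StrictMonoOn.exists_pos_add_le (hmono : StrictMonoOn Φ (Ici 0))
    (hcont : ContinuousOn Φ (Ici 0)) (R : ℝ) {d : ℝ} (hd : 0 < d) :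
    ∃ η > 0, ∀ s t, 0 ≤ s → t ≤ R → s + d ≤ t → Φ s + η ≤ Φ t := by
  set K : Set (ℝ × ℝ) := (Icc 0 R ×ˢ Icc 0 R) ∩ {p | p.1 + d ≤ p.2}
  have hK : IsCompact K :=
    (isCompact_Icc.prod isCompact_Icc).inter_right (isClosed_le (by fun_prop) (by fun_prop))
  have hKcont : ContinuousOn (fun p : ℝ × ℝ => Φ p.2 - Φ p.1) K :=
    (hcont.comp continuous_snd.continuousOn fun p hp => hp.1.2.1).sub
      (hcont.comp continuous_fst.continuousOn fun p hp => hp.1.1.1)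
  obtain ⟨η, hη, hle⟩ := hK.exists_forall_le' hKcont (a := 0) fun p hp =>
    sub_pos.2 (hmono hp.1.1.1 hp.1.2.1 (by linarith [show p.1 + d ≤ p.2 from hp.2]))
  refine ⟨η, hη, fun s t hs htR hst => ?_⟩
  have := hle (s, t) ⟨⟨⟨hs, by linarith⟩, ⟨by linarith, htR⟩⟩, hst⟩
  simp only at this
  linarith

theorem StrictConvexOn.exists_pos_add_le_average (hconv : StrictConvexOn ℝ (Ici 0) Φ)
    (hcont : ContinuousOn Φ (Ici 0)) (R : ℝ) {κ : ℝ} (hκ : 0 < κ) :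
    ∃ η > 0, ∀ a b, 0 ≤ a → 0 ≤ b → a ≤ R → b ≤ R → κ ≤ |a - b| →
      Φ ((a + b) / 2) + η ≤ (Φ a + Φ b) / 2 := by
  set K : Set (ℝ × ℝ) := (Icc 0 R ×ˢ Icc 0 R) ∩ {p | κ ≤ |p.1 - p.2|}
  have hK : IsCompact K :=
    (isCompact_Icc.prod isCompact_Icc).inter_right (isClosed_le (by fun_prop) (by fun_prop))
  have hKcont : ContinuousOn (fun p : ℝ × ℝ => (Φ p.1 + Φ p.2) / 2 - Φ ((p.1 + p.2) / 2)) K := by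
    refine (((hcont.comp continuous_fst.continuousOn fun p hp => hp.1.1.1).add
      (hcont.comp continuous_snd.continuousOn fun p hp => hp.1.2.1)).div_const 2).sub
      (hcont.comp (by fun_prop) fun p hp => div_nonneg (add_nonneg hp.1.1.1 hp.1.2.1) zero_le_two)
  obtain ⟨η, hη, hle⟩ := hK.exists_forall_le' hKcont (a := 0) fun p hp => by
    have hne : p.1 ≠ p.2 := fun h => by
      have : κ ≤ |p.1 - p.2| := hp.2
      rw [h, sub_self, abs_zero] at this
      linarith
    have := hconv.2 hp.1.1.1 hp.1.2.1 hne (by norm_num : (0:ℝ) < 1 / 2)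
      (by norm_num : (0:ℝ) < 1 / 2) (by norm_num)
    simp only [smul_eq_mul] at this
    rw [show 1 / 2 * p.1 + 1 / 2 * p.2 = (p.1 + p.2) / 2 by ring] at this
    linarith
  refine ⟨η, hη, fun a b ha hb haR hbR hab => ?_⟩
  have := hle (a, b) ⟨⟨⟨ha, haR⟩, ⟨hb, hbR⟩⟩, hab⟩
  simp only at this
  linarith

end StrictlyConvexReal

section UniformConvexSpace

variable {X : Type*} [NormedAddCommGroup X] [NormedSpace ℝ X] [UniformConvexSpace X]

theorem exists_forall_norm_add_le_max_mul_two_sub {R ε : ℝ} (hR : 0 < R) (hε : 0 < ε) :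
    ∃ δ > 0, ∀ u v : X, ‖u‖ ≤ R → ‖v‖ ≤ R → ε ≤ ‖u - v‖ →
      ‖u + v‖ ≤ max ‖u‖ ‖v‖ * (2 - δ) := by
  obtain ⟨δ, hδ, hunit⟩ := exists_forall_closed_ball_dist_add_le_two_sub X (div_pos hε hR)
  refine ⟨δ, hδ, fun u v hu hv huv => ?_⟩
  set M := max ‖u‖ ‖v‖
  have hM : 0 < M := by
    linarith [norm_sub_le u v, le_max_left ‖u‖ ‖v‖, le_max_right ‖u‖ ‖v‖]
  have hscale : ∀ w : X, ‖M⁻¹ • w‖ = ‖w‖ / M := fun w => by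
    rw [norm_smul_of_nonneg (inv_nonneg.2 hM.le), inv_mul_eq_div]
  have h := hunit (x := M⁻¹ • u) (by rw [hscale, div_le_one hM]; exact le_max_left _ _)
    (y := M⁻¹ • v) (by rw [hscale, div_le_one hM]; exact le_max_right _ _) (by
      rw [← smul_sub, hscale, le_div_iff₀ hM, div_mul_eq_mul_div, div_le_iff₀ hR]
      nlinarith [max_le hu hv])
  rw [← smul_add, hscale, div_le_iff₀ hM] at h
  linarith

variable {Φ : ℝ → ℝ}

theorem exists_pos_comp_norm_midpoint_add_le (hcont : ContinuousOn Φ (Ici 0))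
    (hmono : StrictMonoOn Φ (Ici 0)) (hconv : StrictConvexOn ℝ (Ici 0) Φ)
    {R ε : ℝ} (hR : 0 < R) (hε : 0 < ε) :
    ∃ η > 0, ∀ u v : X, ‖u‖ ≤ R → ‖v‖ ≤ R → ε ≤ ‖u - v‖ →
      Φ ‖midpoint ℝ u v‖ + η ≤ (Φ ‖u‖ + Φ ‖v‖) / 2 := by
  obtain ⟨δ, hδ, hadd⟩ := exists_forall_norm_add_le_max_mul_two_sub (X := X) hR hε
  have hκ : 0 < ε * δ / 8 := by positivity
  obtain ⟨η₁, hη₁, hgap⟩ := hmono.exists_pos_add_le hcont R hκ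
  obtain ⟨η₂, hη₂, hmidgap⟩ := hconv.exists_pos_add_le_average hcont R hκ
  refine ⟨min η₁ η₂, lt_min hη₁ hη₂, fun u v hu hv huv => ?_⟩
  have hmid : ‖midpoint ℝ u v‖ = ‖u + v‖ / 2 := by
    rw [midpoint_eq_smul_add, invOf_eq_inv, norm_smul_of_nonneg (by norm_num), inv_mul_eq_div]
  rcases le_or_gt (ε * δ / 8) |‖u‖ - ‖v‖| with hfar | hnear
  · have hle : Φ ‖midpoint ℝ u v‖ ≤ Φ ((‖u‖ + ‖v‖) / 2) :=
      hmono.monotoneOn (norm_nonneg _) (show (0:ℝ) ≤ _ by positivity)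
        (by rw [hmid]; linarith [norm_add_le u v])
    linarith [hmidgap _ _ (norm_nonneg u) (norm_nonneg v) hu hv hfar, min_le_right η₁ η₂]
  · -- uniform convexity pushes the midpoint a fixed distance below the common norm
    have hM : ε ≤ 2 * max ‖u‖ ‖v‖ := by
      linarith [norm_sub_le u v, le_max_left ‖u‖ ‖v‖, le_max_right ‖u‖ ‖v‖]
    have hmidM : ‖midpoint ℝ u v‖ ≤ max ‖u‖ ‖v‖ - ε * δ / 4 := by
      rw [hmid]
      nlinarith [hadd u v hu hv huv, mul_nonneg (sub_nonneg.2 hM) hδ.le]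
    obtain ⟨hvu, huv'⟩ := abs_sub_lt_iff.1 hnear
    have hMu : max ‖u‖ ‖v‖ ≤ ‖u‖ + ε * δ / 8 := max_le (by linarith) (by linarith)
    have hMv : max ‖u‖ ‖v‖ ≤ ‖v‖ + ε * δ / 8 := max_le (by linarith) (by linarith)
    linarith [hgap ‖midpoint ℝ u v‖ ‖u‖ (norm_nonneg _) hu (by linarith),
      hgap ‖midpoint ℝ u v‖ ‖v‖ (norm_nonneg _) hv (by linarith), min_le_left η₁ η₂]

end UniformConvexSpace

section Minimization

variable {X : Type*} [NormedAddCommGroup X] [NormedSpace ℝ X]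

def UniformlyQuasiconvexOnSublevels (h : X → EReal) : Prop :=
  ∀ c ε : ℝ, 0 < ε → ∃ η > 0, ∀ y z : X, ∀ r : ℝ, r ≤ c → h y ≤ r → h z ≤ r →
    ε ≤ ‖y - z‖ → h (midpoint ℝ y z) ≤ ((r - η : ℝ) : EReal)

theorem UniformlyQuasiconvexOnSublevels.exists_dist_lt {h : X → EReal}
    (hq : UniformlyQuasiconvexOnSublevels h) {μ : ℝ} (hμ : ∀ y, (μ : EReal) ≤ h y) {ε : ℝ}
    (hε : 0 < ε) :
    ∃ t > 0, ∀ y z, h y ≤ ((μ + t : ℝ) : EReal) → h z ≤ ((μ + t : ℝ) : EReal) → dist y z < ε := by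
  obtain ⟨η, hη, hmid⟩ := hq (μ + 1) ε hε
  refine ⟨min 1 η / 2, by positivity, fun y z hy hz => ?_⟩
  by_contra! hyz
  have hlt := (hμ _).trans
    (hmid y z _ (by linarith [min_le_left 1 η]) hy hz (dist_eq_norm y z ▸ hyz))
  rw [EReal.coe_le_coe_iff] at hlt
  linarith [min_le_right 1 η]

theorem UniformlyQuasiconvexOnSublevels.existsUnique_forall_le [CompleteSpace X] {h : X → EReal}
    (hq : UniformlyQuasiconvexOnSublevels h) (hlsc : LowerSemicontinuous h) {C : ℝ}
    (hC : ∀ y, (C : EReal) ≤ h y) (hne : ∃ y, h y ≠ ⊤) :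
    ∃! m, ∀ y, h m ≤ h y := by
  obtain ⟨y₀, hy₀⟩ := hne
  obtain ⟨μ, hμ⟩ : ∃ μ : ℝ, (μ : EReal) = ⨅ y, h y :=
    ⟨_, EReal.coe_toReal ((iInf_le h y₀).trans_lt (lt_top_iff_ne_top.2 hy₀)).ne
      (ne_bot_of_le_ne_bot (EReal.coe_ne_bot C) (le_iInf hC))⟩
  have hμle : ∀ y, (μ : EReal) ≤ h y := fun y => hμ ▸ iInf_le h y
  have hclose := fun ε (hε : 0 < ε) => hq.exists_dist_lt hμle hε
  have hseq : ∀ n : ℕ, ∃ y, h y ≤ ((μ + 1 / (n + 1) : ℝ) : EReal) := fun n => by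
    have : ⨅ y, h y < ((μ + 1 / (n + 1) : ℝ) : EReal) := by
      rw [← hμ, EReal.coe_lt_coe_iff]; linarith [Nat.one_div_pos_of_nat (α := ℝ) (n := n)]
    obtain ⟨y, hy⟩ := iInf_lt_iff.1 this
    exact ⟨y, hy.le⟩
  choose y hy using hseq
  have hyle : ∀ N n : ℕ, N ≤ n → h (y n) ≤ ((μ + 1 / (N + 1) : ℝ) : EReal) := fun N n hNn =>
    (hy n).trans (EReal.coe_le_coe_iff.2 (by gcongr))
  have hcauchy : CauchySeq y := by
    refine Metric.cauchySeq_iff'.2 fun ε hε => ?_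
    obtain ⟨t, ht, hct⟩ := hclose ε hε
    obtain ⟨N, hN⟩ := exists_nat_one_div_lt ht
    have hle : ∀ n, N ≤ n → h (y n) ≤ ((μ + t : ℝ) : EReal) := fun n hn =>
      (hyle N n hn).trans (EReal.coe_le_coe_iff.2 (by linarith))
    exact ⟨N, fun n hn => hct _ _ (hle n hn) (hle N le_rfl)⟩
  obtain ⟨p, hp⟩ := cauchySeq_tendsto_of_complete hcauchy
  have hpμ : h p ≤ μ := by
    refine EReal.le_of_forall_lt_iff_le.1 fun z hz => ?_
    obtain ⟨N, hN⟩ := exists_nat_one_div_lt (sub_pos.2 (EReal.coe_lt_coe_iff.1 hz))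
    refine (hlsc.isClosed_preimage z).mem_of_tendsto hp (eventually_atTop.2 ⟨N, fun n hn => ?_⟩)
    exact (hyle N n hn).trans (EReal.coe_le_coe_iff.2 (by linarith))
  refine ⟨p, fun z => hpμ.trans (hμle z), fun q hq => eq_of_forall_dist_le fun ε hε => ?_⟩
  obtain ⟨t, ht, hct⟩ := hclose ε hε
  have hμt : (μ : EReal) ≤ ((μ + t : ℝ) : EReal) := EReal.coe_le_coe_iff.2 (by linarith)
  exact (hct q p ((hq p).trans (hpμ.trans hμt)) (hpμ.trans hμt)).le

end Minimization

theorem convex_combination_le_coe {X : Type*} [AddCommMonoid X] [Module ℝ X] {f : X → EReal}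
    (hfconv : ∀ x y : X, ∀ t ∈ Set.Icc (0:ℝ) 1,
      f (t • x + (1 - t) • y) ≤ ((t : ℝ) : EReal) * f x + ((1 - t : ℝ) : EReal) * f y)
    {p q : X} {a b : ℝ} (hp : f p ≤ a) (hq : f q ≤ b) {t : ℝ} (ht : t ∈ Icc (0:ℝ) 1) :
    f (t • p + (1 - t) • q) ≤ ((t * a + (1 - t) * b : ℝ) : EReal) := by
  refine (hfconv p q t ht).trans ?_
  rw [EReal.coe_add, EReal.coe_mul, EReal.coe_mul]
  gcongr
  · exact EReal.coe_nonneg.2 ht.1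
  · exact EReal.coe_nonneg.2 (sub_nonneg.2 ht.2)

section ConvexEReal

variable {X : Type*} [NormedAddCommGroup X] [NormedSpace ℝ X] {f : X → EReal}

theorem exists_coe_sub_mul_norm_le (hfbot : ∀ x, f x ≠ ⊥) (hfproper : ∃ x, f x ≠ ⊤)
    (hfconv : ∀ x y : X, ∀ t ∈ Set.Icc (0:ℝ) 1,
      f (t • x + (1 - t) • y) ≤ ((t : ℝ) : EReal) * f x + ((1 - t : ℝ) : EReal) * f y)
    (hflsc : LowerSemicontinuous f) :
    ∃ A B : ℝ, 0 ≤ A ∧ ∀ y : X, ((B - A * ‖y‖ : ℝ) : EReal) ≤ f y := by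
  obtain ⟨x₀, hx₀⟩ := hfproper
  set r₀ := (f x₀).toReal
  have hfx₀ : f x₀ = r₀ := (EReal.coe_toReal hx₀ (hfbot x₀)).symm
  set E : Set (X × ℝ) := {p | f p.1 ≤ p.2}
  have hclosed : IsClosed E :=
    hflsc.isClosed_epigraph.preimage (continuous_fst.prodMk (continuous_coe_real_ereal.comp
      continuous_snd))
  have hconv : Convex ℝ E := by
    intro p hp q hq s t hs ht hst
    obtain rfl : t = 1 - s := by linarith
    exact convex_combination_le_coe hfconv hp hq ⟨hs, by linarith⟩
  have hout : (x₀, r₀ - 1) ∉ E := fun h => by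
    have : f x₀ ≤ ((r₀ - 1 : ℝ) : EReal) := h
    rw [hfx₀, EReal.coe_le_coe_iff] at this
    linarith
  obtain ⟨L, u, hLE, hLout⟩ := geometric_hahn_banach_closed_point hconv hclosed hout
  set ℓ : X →L[ℝ] ℝ := L.comp (ContinuousLinearMap.inl ℝ X ℝ)
  set β := L (0, 1)
  have hL : ∀ y t, L (y, t) = ℓ y + t * β := fun y t => by
    rw [show (y, t) = (y, (0:ℝ)) + t • ((0:X), (1:ℝ)) by simp, map_add, map_smul, smul_eq_mul]
    rfl
  have hsep : ∀ y (s : ℝ), f y ≤ s → ℓ y + s * β < u := fun y s hs => hL y s ▸ hLE (y, s) hs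
  rw [hL] at hLout
  -- the separating hyperplane is not vertical: compare `(x₀, r₀) ∈ E` with `(x₀, r₀ - 1)`
  have hβ : β < 0 := by nlinarith [hsep x₀ r₀ hfx₀.le]
  refine ⟨‖ℓ‖ / -β, u / β, div_nonneg (norm_nonneg ℓ) (by linarith), fun y => ?_⟩
  by_cases hy : f y = ⊤
  · simp [hy]
  rw [← EReal.coe_toReal hy (hfbot y), EReal.coe_le_coe_iff]
  have h₁ := hsep y _ (EReal.coe_toReal hy (hfbot y)).ge
  have h₂ := (abs_le.1 ((ℓ.le_opNorm y).trans_eq' (Real.norm_eq_abs _).symm)).1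
  rw [show u / β - ‖ℓ‖ / -β * ‖y‖ = (u + ‖ℓ‖ * ‖y‖) / β by field_simp; ring,
    div_le_iff_of_neg hβ]
  linarith

end ConvexEReal

theorem exists_coe_add_norm_le_add_comp_norm {X : Type*} [NormedAddCommGroup X]
    {Φ : ℝ → ℝ} {f : X → EReal} {A B : ℝ} (hA : 0 ≤ A)
    (hAB : ∀ y : X, ((B - A * ‖y‖ : ℝ) : EReal) ≤ f y)
    (hgrowth : ∀ A, ∃ K, ∀ t, 0 ≤ t → A * t - K ≤ Φ t) (x : X) :
    ∃ K : ℝ, ∀ y, ((K + ‖x - y‖ : ℝ) : EReal) ≤ f y + ((Φ ‖x - y‖ : ℝ) : EReal) := by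
  obtain ⟨K, hK⟩ := hgrowth (A + 1)
  refine ⟨B - A * ‖x‖ - K, fun y => (add_le_add_left (hAB y) _).trans' ?_⟩
  rw [← EReal.coe_add, EReal.coe_le_coe_iff]
  have hy : ‖y‖ ≤ ‖x‖ + ‖x - y‖ := by simpa using norm_sub_le x (x - y)
  nlinarith [hK ‖x - y‖ (norm_nonneg _)]

section Proximal

variable {X : Type*} [NormedAddCommGroup X] [NormedSpace ℝ X] {Φ : ℝ → ℝ} {f : X → EReal}

theorem uniformlyQuasiconvexOnSublevels_add_comp_norm [UniformConvexSpace X]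
    (hcont : ContinuousOn Φ (Ici 0)) (hmono : StrictMonoOn Φ (Ici 0))
    (hconv : StrictConvexOn ℝ (Ici 0) Φ)
    (hfconv : ∀ x y : X, ∀ t ∈ Set.Icc (0:ℝ) 1,
      f (t • x + (1 - t) • y) ≤ ((t : ℝ) : EReal) * f x + ((1 - t : ℝ) : EReal) * f y)
    {x : X} {K : ℝ} (hK : ∀ y, ((K + ‖x - y‖ : ℝ) : EReal) ≤ f y + ((Φ ‖x - y‖ : ℝ) : EReal)) :
    UniformlyQuasiconvexOnSublevels fun y => f y + ((Φ ‖x - y‖ : ℝ) : EReal) := by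
  intro c ε hε
  obtain ⟨η, hη, hgap⟩ :=
    exists_pos_comp_norm_midpoint_add_le (X := X) hcont hmono hconv (R := max (c - K) 1)
      (by positivity) hε
  refine ⟨η, hη, fun y z r hrc hy hz hyz => ?_⟩
  have hbound : ∀ w, f w + ((Φ ‖x - w‖ : ℝ) : EReal) ≤ r → ‖x - w‖ ≤ max (c - K) 1 := by
    intro w hw
    have := (hK w).trans hw
    rw [EReal.coe_le_coe_iff] at this
    exact le_max_of_le_left (by linarith)
  have hf : ∀ w, f w + ((Φ ‖x - w‖ : ℝ) : EReal) ≤ r → f w ≤ ((r - Φ ‖x - w‖ : ℝ) : EReal) :=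
    fun w hw => by rwa [EReal.coe_sub, EReal.le_sub_iff_add_le (by simp) (by simp)]
  have hmid : midpoint ℝ y z = (1 / 2 : ℝ) • y + (1 - 1 / 2 : ℝ) • z := by
    rw [midpoint_eq_smul_add, invOf_eq_inv]; module
  have hfmid := convex_combination_le_coe hfconv (hf y hy) (hf z hz)
    (t := 1 / 2) ⟨by norm_num, by norm_num⟩
  have hΦmid := hgap (x - y) (x - z) (hbound y hy) (hbound z hz)
    (by rwa [sub_sub_sub_cancel_left, norm_sub_rev])
  rw [show midpoint ℝ (x - y) (x - z) = x - midpoint ℝ y z by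
    rw [hmid, midpoint_eq_smul_add, invOf_eq_inv]; module] at hΦmid
  rw [← hmid] at hfmid
  refine (add_le_add hfmid le_rfl).trans ?_
  rw [← EReal.coe_add, EReal.coe_le_coe_iff]
  linarith

theorem existsUnique_forall_add_comp_norm_le [CompleteSpace X] [UniformConvexSpace X]
    (hcont : ContinuousOn Φ (Ici 0)) (hmono : StrictMonoOn Φ (Ici 0))
    (hconv : StrictConvexOn ℝ (Ici 0) Φ) (hgrowth : ∀ A, ∃ K, ∀ t, 0 ≤ t → A * t - K ≤ Φ t)
    (hfbot : ∀ x, f x ≠ ⊥) (hfproper : ∃ x, f x ≠ ⊤)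
    (hfconv : ∀ x y : X, ∀ t ∈ Set.Icc (0:ℝ) 1,
      f (t • x + (1 - t) • y) ≤ ((t : ℝ) : EReal) * f x + ((1 - t : ℝ) : EReal) * f y)
    (hflsc : LowerSemicontinuous f) (x : X) :
    ∃! m : X, ∀ y : X,
      f m + ((Φ ‖x - m‖ : ℝ) : EReal) ≤ f y + ((Φ ‖x - y‖ : ℝ) : EReal) := by
  obtain ⟨A, B, hA, hAB⟩ := exists_coe_sub_mul_norm_le hfbot hfproper hfconv hflsc
  obtain ⟨K, hK⟩ := exists_coe_add_norm_le_add_comp_norm hA hAB hgrowth x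
  have hlsc : LowerSemicontinuous fun y => f y + ((Φ ‖x - y‖ : ℝ) : EReal) :=
    hflsc.add' (continuous_coe_real_ereal.comp (hcont.comp_continuous (by fun_prop)
      fun y => norm_nonneg (x - y))).lowerSemicontinuous
      fun y => EReal.continuousAt_add (.inr (by simp)) (.inr (by simp))
  have hq := uniformlyQuasiconvexOnSublevels_add_comp_norm hcont hmono hconv hfconv hK
  obtain ⟨y₀, hy₀⟩ := hfproper
  exact hq.existsUnique_forall_le hlsc (C := K)
    (fun y => (EReal.coe_le_coe_iff.2 (by simp)).trans (hK y))
    ⟨y₀, EReal.add_ne_top hy₀ (EReal.coe_ne_top _)⟩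

end Proximal

theorem UniformConvexSpace.of_modulus {X : Type*} [NormedAddCommGroup X] [NormedSpace ℝ X]
    {δX : ℝ → ℝ} (hδX : ∀ ε ∈ Set.Ioc (0:ℝ) 2, 0 < δX ε ∧ ∀ u v : X, ‖u‖ ≤ 1 → ‖v‖ ≤ 1 →
      ε ≤ ‖u - v‖ → ‖(1/2 : ℝ) • (u + v)‖ ≤ 1 - δX ε) :
    UniformConvexSpace X := by
  refine ⟨fun ε hε => ?_⟩
  rcases le_or_gt ε 2 with hε2 | hε2
  · obtain ⟨hδ, hmid⟩ := hδX ε ⟨hε, hε2⟩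
    refine ⟨2 * δX ε, by positivity, fun u hu v hv huv => ?_⟩
    have := hmid u v hu.le hv.le huv
    rw [norm_smul_of_nonneg (by norm_num)] at this
    linarith
  · refine ⟨1, one_pos, fun u hu v hv huv => ?_⟩
    linarith [norm_sub_le u v]

theorem stmt_6_general {X : Type*} [NormedAddCommGroup X] [NormedSpace ℝ X] [CompleteSpace X]
    (δX : ℝ → ℝ)
    (hδX : ∀ ε ∈ Set.Ioc (0:ℝ) 2, 0 < δX ε ∧ ∀ u v : X, ‖u‖ ≤ 1 → ‖v‖ ≤ 1 →
      ε ≤ ‖u - v‖ → ‖(1/2 : ℝ) • (u + v)‖ ≤ 1 - δX ε)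
    (φ Φ : ℝ → ℝ)
    (hφmono : StrictMonoOn φ (Set.Ici 0)) (hφ0 : φ 0 = 0)
    (hφtop : Filter.Tendsto φ Filter.atTop Filter.atTop)
    (hΦ : ∀ t : ℝ, 0 ≤ t → Φ t = ∫ s in (0:ℝ)..t, φ s)
    (f : X → EReal) (hfbot : ∀ x, f x ≠ ⊥) (hfproper : ∃ x, f x ≠ ⊤)
    (hfconv : ∀ x y : X, ∀ t ∈ Set.Icc (0:ℝ) 1,
      f (t • x + (1 - t) • y) ≤ ((t : ℝ) : EReal) * f x + ((1 - t : ℝ) : EReal) * f y)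
    (hflsc : LowerSemicontinuous f)
    (x : X) (lam : ℝ) (hlam : 0 < lam) :
    ∃! m : X, ∀ y : X,
      f m + ((Φ ‖x - m‖ / φ lam : ℝ) : EReal) ≤ f y + ((Φ ‖x - y‖ / φ lam : ℝ) : EReal) := by
  have := UniformConvexSpace.of_modulus hδX
  have hφlam : 0 < φ lam := hφ0 ▸ hφmono (le_refl (0:ℝ)) hlam.le hlam
  -- `Φ / φ lam` is again a Young function, with derivative `φ / φ lam`
  have hψ : StrictMonoOn (fun t => φ t / φ lam) (Ici 0) := fun a ha b hb hab =>
    div_lt_div_of_pos_right (hφmono ha hb hab) hφlam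
  have hΨ : ∀ t, 0 ≤ t → Φ t / φ lam = ∫ s in (0:ℝ)..t, φ s / φ lam := fun t ht => by
    rw [hΦ t ht, intervalIntegral.integral_div]
  have hψ0 : φ 0 / φ lam = 0 := by rw [hφ0, zero_div]
  exact existsUnique_forall_add_comp_norm_le (Young.continuousOn hΨ hψ.monotoneOn)
    (Young.strictMonoOn hΨ hψ hψ0) (Young.strictConvexOn hΨ hψ)
    (Young.exists_mul_sub_le hΨ hψ.monotoneOn hψ0 (hφtop.atTop_div_const hφlam))
    hfbot hfproper hfconv hflsc x

/-- Existence and uniqueness of the proximal point with a Young function in a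
uniformly convex Banach space. -/
theorem stmt_6 {X : Type*} [NormedAddCommGroup X] [NormedSpace ℝ X] [CompleteSpace X]
    (δX : ℝ → ℝ)
    (hδX : ∀ ε ∈ Set.Ioc (0:ℝ) 2, 0 < δX ε ∧ ∀ u v : X, ‖u‖ ≤ 1 → ‖v‖ ≤ 1 →
      ε ≤ ‖u - v‖ → ‖(1/2 : ℝ) • (u + v)‖ ≤ 1 - δX ε)
    (φ Φ : ℝ → ℝ)
    (hφmono : StrictMonoOn φ (Set.Ici 0)) (hφ0 : φ 0 = 0)
    (hφrc : ∀ t : ℝ, 0 ≤ t → ContinuousWithinAt φ (Set.Ici t) t)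
    (hφtop : Filter.Tendsto φ Filter.atTop Filter.atTop)
    (hΦ : ∀ t : ℝ, 0 ≤ t → Φ t = ∫ s in (0:ℝ)..t, φ s)
    (f : X → EReal) (hfbot : ∀ x, f x ≠ ⊥) (hfproper : ∃ x, f x ≠ ⊤)
    (hfconv : ∀ x y : X, ∀ t ∈ Set.Icc (0:ℝ) 1,
      f (t • x + (1 - t) • y) ≤ ((t : ℝ) : EReal) * f x + ((1 - t : ℝ) : EReal) * f y)
    (hflsc : LowerSemicontinuous f)
    (x : X) (lam : ℝ) (hlam : 0 < lam) :
    ∃! m : X, ∀ y : X,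
      f m + ((Φ ‖x - m‖ / φ lam : ℝ) : EReal) ≤ f y + ((Φ ‖x - y‖ / φ lam : ℝ) : EReal) :=
  stmt_6_general δX hδX φ Φ hφmono hφ0 hφtop hΦ f hfbot hfproper hfconv hflsc x lam hlam
end

section
/- Let X be a uniformly convex Banach space, Φ a Young function with derivative φ, f : X → ℝ ∪ {∞} proper convex lsc, and x ∈ X. For λ > 0 let x_λ be the unique minimizer of y ↦ f(y) + (1/φ(λ))Φ(‖x − y‖). Then the map λ ↦ ‖x − x_λ‖ is nondecreasing on (0,∞), and the map λ ↦ f(x_λ) is nonincreasing on (0,∞). -/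
open intervalIntegral MeasureTheory

-- Φ is strictly increasing on [0,∞)
lemma Phi_lt (φ Φ : ℝ → ℝ)
    (hφmono : StrictMonoOn φ (Set.Ici 0)) (hφ0 : φ 0 = 0)
    (hΦ : ∀ t : ℝ, 0 ≤ t → Φ t = ∫ s in (0:ℝ)..t, φ s)
    {s t : ℝ} (hs : 0 ≤ s) (hst : s < t) : Φ s < Φ t := by
  have ht : (0:ℝ) ≤ t := le_trans hs hst.le
  have hmono : MonotoneOn φ (Set.Ici 0) := hφmono.monotoneOn
  have hint : ∀ u v : ℝ, 0 ≤ u → 0 ≤ v →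
      IntervalIntegrable φ MeasureTheory.volume u v := by
    intro u v hu hv
    exact (hmono.mono (by
      intro z hz
      rcases Set.mem_uIcc.mp hz with h | h
      · exact le_trans hu h.1
      · exact le_trans hv h.1)).intervalIntegrable
  rw [hΦ s hs, hΦ t ht]
  have hsplit : (∫ u in (0:ℝ)..s, φ u) + ∫ u in s..t, φ u = ∫ u in (0:ℝ)..t, φ u :=
    integral_add_adjacent_intervals (hint 0 s le_rfl hs) (hint s t hs ht)
  have hpos : 0 < ∫ u in s..t, φ u := by
    set m := (s + t) / 2 with hm
    have hsm : s < m := by simp [hm]; linarith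
    have hmt : m < t := by simp [hm]; linarith
    have hm0 : 0 < m := lt_of_le_of_lt hs hsm
    have hφm : 0 < φ m := by
      have := hφmono (Set.mem_Ici.mpr le_rfl) (Set.mem_Ici.mpr hm0.le) hm0
      linarith [hφ0 ▸ this]
    have h1 : 0 ≤ ∫ u in s..m, φ u := by
      apply integral_nonneg hsm.le
      intro u hu
      have : φ 0 ≤ φ u := hmono (Set.mem_Ici.mpr le_rfl) (Set.mem_Ici.mpr (le_trans hs hu.1)) (le_trans hs hu.1)
      linarith [hφ0 ▸ this]
    have h2 : (t - m) * φ m ≤ ∫ u in m..t, φ u := by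
      have := integral_mono_on (μ := MeasureTheory.volume) hmt.le
        (_root_.intervalIntegrable_const (c := φ m)) (hint m t hm0.le ht)
        (fun u hu => hmono (Set.mem_Ici.mpr hm0.le) (Set.mem_Ici.mpr (le_trans hm0.le hu.1)) hu.1)
      simpa using this
    have h3 : 0 < (t - m) * φ m := mul_pos (by linarith) hφm
    have := integral_add_adjacent_intervals (hint s m hs hm0.le) (hint m t hm0.le ht)
    linarith
  linarith

/-- Monotonicity of `λ ↦ ‖x - x_λ‖` and `λ ↦ f(x_λ)` for the proximal points. -/
theorem stmt_7 {X : Type*} [NormedAddCommGroup X] [NormedSpace ℝ X] [CompleteSpace X]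
    (φ Φ : ℝ → ℝ)
    (hφmono : StrictMonoOn φ (Set.Ici 0)) (hφ0 : φ 0 = 0)
    (hφrc : ∀ t : ℝ, 0 ≤ t → ContinuousWithinAt φ (Set.Ici t) t)
    (hφtop : Filter.Tendsto φ Filter.atTop Filter.atTop)
    (hΦ : ∀ t : ℝ, 0 ≤ t → Φ t = ∫ s in (0:ℝ)..t, φ s)
    (f : X → EReal) (hfbot : ∀ x, f x ≠ ⊥) (hfproper : ∃ x, f x ≠ ⊤)
    (hfconv : ∀ x y : X, ∀ t ∈ Set.Icc (0:ℝ) 1,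
      f (t • x + (1 - t) • y) ≤ ((t : ℝ) : EReal) * f x + ((1 - t : ℝ) : EReal) * f y)
    (hflsc : LowerSemicontinuous f)
    (x : X) (prox : ℝ → X)
    (hprox : ∀ lam > (0:ℝ), ∀ y : X,
      f (prox lam) + ((Φ ‖x - prox lam‖ / φ lam : ℝ) : EReal) ≤
        f y + ((Φ ‖x - y‖ / φ lam : ℝ) : EReal)) :
    ∀ κ lam : ℝ, 0 < κ → κ ≤ lam →
      ‖x - prox κ‖ ≤ ‖x - prox lam‖ ∧ f (prox lam) ≤ f (prox κ) := by
  intro κ lam hκ hκlam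
  rcases eq_or_lt_of_le hκlam with rfl | hlt
  · exact ⟨le_rfl, le_rfl⟩
  have hlam : (0:ℝ) < lam := lt_trans hκ hlt
  -- positivity of φ values
  have hφpos : ∀ t : ℝ, 0 < t → 0 < φ t := fun t ht => by
    have := hφmono (Set.mem_Ici.mpr le_rfl) (Set.mem_Ici.mpr ht.le) ht
    linarith [hφ0 ▸ this]
  have hc : 0 < φ κ := hφpos κ hκ
  have hd : 0 < φ lam := hφpos lam hlam
  have hcd : φ κ < φ lam := hφmono (Set.mem_Ici.mpr hκ.le) (Set.mem_Ici.mpr hlam.le) hlt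
  -- finiteness of f at prox points
  obtain ⟨y0, hy0⟩ := hfproper
  have hfin : ∀ μ : ℝ, 0 < μ → f (prox μ) ≠ ⊤ := by
    intro μ hμ h
    have h1 := hprox μ hμ y0
    rw [h] at h1
    have : (⊤ : EReal) + ((Φ ‖x - prox μ‖ / φ μ : ℝ) : EReal) = ⊤ :=
      EReal.top_add_of_ne_bot (by exact_mod_cast EReal.coe_ne_bot _)
    rw [this, top_le_iff] at h1
    exact absurd h1 (EReal.add_lt_top hy0 (EReal.coe_ne_top _)).ne
  set A : ℝ := (f (prox κ)).toReal with hAdef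
  set B : ℝ := (f (prox lam)).toReal with hBdef
  have hA : f (prox κ) = (A : EReal) := (EReal.coe_toReal (hfin κ hκ) (hfbot _)).symm
  have hB : f (prox lam) = (B : EReal) := (EReal.coe_toReal (hfin lam hlam) (hfbot _)).symm
  set a : ℝ := ‖x - prox κ‖ with hadef
  set b : ℝ := ‖x - prox lam‖ with hbdef
  -- the two cross inequalities, as real inequalities
  have h1 : A + Φ a / φ κ ≤ B + Φ b / φ κ := by
    have := hprox κ hκ (prox lam)
    rw [hA, hB, ← EReal.coe_add, ← EReal.coe_add] at this
    exact_mod_cast this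
  have h2 : B + Φ b / φ lam ≤ A + Φ a / φ lam := by
    have := hprox lam hlam (prox κ)
    rw [hA, hB, ← EReal.coe_add, ← EReal.coe_add] at this
    exact_mod_cast this
  -- multiply and add
  have hBA : B ≤ A := by
    have m1 : A * φ κ + Φ a ≤ B * φ κ + Φ b := by
      have := mul_le_mul_of_nonneg_right h1 hc.le
      rw [add_mul, add_mul, div_mul_cancel₀ _ hc.ne', div_mul_cancel₀ _ hc.ne'] at this
      exact this
    have m2 : B * φ lam + Φ b ≤ A * φ lam + Φ a := by
      have := mul_le_mul_of_nonneg_right h2 hd.le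
      rw [add_mul, add_mul, div_mul_cancel₀ _ hd.ne', div_mul_cancel₀ _ hd.ne'] at this
      exact this
    nlinarith [m1, m2, hcd]
  have hΦab : Φ a ≤ Φ b := by
    have := mul_le_mul_of_nonneg_right h1 hc.le
    rw [add_mul, add_mul, div_mul_cancel₀ _ hc.ne', div_mul_cancel₀ _ hc.ne'] at this
    nlinarith [hBA, hc]
  constructor
  · by_contra hab
    push_neg at hab
    have : Φ b < Φ a := Phi_lt φ Φ hφmono hφ0 hΦ (norm_nonneg _) hab
    linarith
  · rw [hA, hB]; exact_mod_cast hBA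
end

section
/- Let X be a uniformly convex Banach space, Φ a Young function with derivative φ, f proper convex lsc, x ∈ X, λ ∈ (0,1], and x_λ = argmin_y [f(y) + Φ(‖x−y‖)/φ(λ)]. Let r₀ > ‖x_1 − x‖ (where x_1 corresponds to λ = 1) and let δ be a modulus of uniform convexity of Φ∘‖·‖ on B(0, r₀). Then for every y ∈ B(x, r₀): f(y) + Φ(‖x−y‖)/φ(λ) ≥ f(x_λ) + Φ(‖x−x_λ‖)/φ(λ) + (2/φ(λ))·δ(‖y − x_λ‖). -/
lemma phi_int_lt (φ Φ : ℝ → ℝ)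
    (hφmono : StrictMonoOn φ (Set.Ici 0)) (hφ0 : φ 0 = 0)
    (hΦint : ∀ t : ℝ, 0 ≤ t → Φ t = ∫ s in (0:ℝ)..t, φ s)
    {b a : ℝ} (hb : 0 ≤ b) (hba : b < a) : Φ b < Φ a := by
  have ha : 0 ≤ a := le_trans hb hba.le
  have hmono : MonotoneOn φ (Set.Ici 0) := hφmono.monotoneOn
  have hint : ∀ c d : ℝ, 0 ≤ c → 0 ≤ d → IntervalIntegrable φ MeasureTheory.volume c d := by
    intro c d hc hd
    apply MonotoneOn.intervalIntegrable
    apply hmono.mono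
    intro s hs
    have := hs.1
    have hmin : (0:ℝ) ≤ min c d := le_min hc hd
    exact le_trans hmin this
  have hsub : Φ a - Φ b = ∫ s in b..a, φ s := by
    rw [hΦint a ha, hΦint b hb]
    rw [intervalIntegral.integral_interval_sub_left (hint 0 a le_rfl ha) (hint 0 b le_rfl hb)]
  have hpos : 0 < ∫ s in b..a, φ s := by
    apply intervalIntegral.intervalIntegral_pos_of_pos_on (hint b a hb ha)
    · intro s hs
      have h0s : 0 < s := lt_of_le_of_lt hb hs.1
      have := hφmono (Set.self_mem_Ici) (Set.mem_Ici.2 h0s.le) h0s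
      rwa [hφ0] at this
    · exact hba
  linarith

/-- Variational inequality for the proximal mapping with a Young function, with a
modulus of uniform convexity of `Φ ∘ ‖·‖` on `B(0, r₀)` independent of `λ ∈ (0,1]`. -/
theorem stmt_8 {X : Type*} [NormedAddCommGroup X] [NormedSpace ℝ X] [CompleteSpace X]
    (φ Φ : ℝ → ℝ)
    (hφmono : StrictMonoOn φ (Set.Ici 0)) (hφ0 : φ 0 = 0)
    (hφrc : ∀ t : ℝ, 0 ≤ t → ContinuousWithinAt φ (Set.Ici t) t)
    (hφtop : Filter.Tendsto φ Filter.atTop Filter.atTop)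
    (hΦint : ∀ t : ℝ, 0 ≤ t → Φ t = ∫ s in (0:ℝ)..t, φ s)
    (f : X → EReal) (hfbot : ∀ x, f x ≠ ⊥) (hfproper : ∃ x, f x ≠ ⊤)
    (hfconv : ∀ x y : X, ∀ t ∈ Set.Icc (0:ℝ) 1,
      f (t • x + (1 - t) • y) ≤ ((t : ℝ) : EReal) * f x + ((1 - t : ℝ) : EReal) * f y)
    (hflsc : LowerSemicontinuous f)
    (x : X) (prox : ℝ → X)
    (hprox : ∀ lam > (0:ℝ), ∀ y : X,
      f (prox lam) + ((Φ ‖x - prox lam‖ / φ lam : ℝ) : EReal) ≤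
        f y + ((Φ ‖x - y‖ / φ lam : ℝ) : EReal))
    (r₀ : ℝ) (hr₀ : ‖prox 1 - x‖ < r₀)
    (δ : ℝ → ℝ)
    (hδ : ∀ u v : X, u ∈ Metric.closedBall (0 : X) r₀ → v ∈ Metric.closedBall (0 : X) r₀ →
      Φ ‖(1/2 : ℝ) • (u + v)‖ ≤ Φ ‖u‖ / 2 + Φ ‖v‖ / 2 - δ ‖u - v‖) :
    ∀ lam ∈ Set.Ioc (0:ℝ) 1, ∀ y ∈ Metric.closedBall x r₀,
      f (prox lam) + ((Φ ‖x - prox lam‖ / φ lam : ℝ) : EReal)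
        + ((2 / φ lam * δ ‖y - prox lam‖ : ℝ) : EReal)
      ≤ f y + ((Φ ‖x - y‖ / φ lam : ℝ) : EReal) := by
  have hφpos : ∀ t : ℝ, 0 < t → 0 < φ t := by
    intro t ht
    have := hφmono Set.self_mem_Ici (Set.mem_Ici.2 ht.le) ht
    rwa [hφ0] at this
  intro lam hlam y hy
  have hφl : 0 < φ lam := hφpos _ hlam.1
  have hφ1 : 0 < φ 1 := hφpos _ one_pos
  obtain ⟨z, hz⟩ := hfproper
  -- f (prox μ) is a real number for μ > 0
  have hreal : ∀ μ : ℝ, 0 < μ → ∃ c : ℝ, f (prox μ) = (c : EReal) := by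
    intro μ hμ
    have h := hprox μ hμ z
    obtain ⟨w, hw⟩ : ∃ w : ℝ, f z = (w : EReal) :=
      ⟨(f z).toReal, (EReal.coe_toReal hz (hfbot z)).symm⟩
    have htop : f (prox μ) ≠ ⊤ := by
      intro hT
      rw [hT, hw] at h
      have h1 : (⊤ : EReal) + ((Φ ‖x - prox μ‖ / φ μ : ℝ) : EReal) = ⊤ :=
        EReal.top_add_of_ne_bot (by exact_mod_cast EReal.coe_ne_bot _)
      rw [h1, ← EReal.coe_add, top_le_iff] at h
      exact EReal.coe_ne_top _ h
    exact ⟨(f (prox μ)).toReal, (EReal.coe_toReal htop (hfbot _)).symm⟩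
  obtain ⟨c₁, hc₁⟩ := hreal lam hlam.1
  obtain ⟨c₂, hc₂⟩ := hreal 1 one_pos
  set a := ‖x - prox lam‖ with ha_def
  set b := ‖x - prox 1‖ with hb_def
  -- monotonicity: a ≤ b
  have hab : a ≤ b := by
    rcases eq_or_lt_of_le hlam.2 with heq | hlt
    · rw [ha_def, hb_def, heq]
    · have h1 := hprox lam hlam.1 (prox 1)
      have h2 := hprox 1 one_pos (prox lam)
      rw [hc₁, hc₂, ← EReal.coe_add, ← EReal.coe_add] at h1 h2
      rw [EReal.coe_le_coe_iff] at h1 h2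
      rw [← ha_def, ← hb_def] at h1 h2
      have hφlt : φ lam < φ 1 := hφmono (Set.mem_Ici.2 hlam.1.le) (Set.mem_Ici.2 zero_le_one) hlt
      by_contra hcon
      push_neg at hcon
      have hΦab : Φ b < Φ a := phi_int_lt φ Φ hφmono hφ0 hΦint (norm_nonneg _) hcon
      have hpos : 0 < Φ a - Φ b := by linarith
      have hdiv : (Φ a - Φ b) / φ 1 < (Φ a - Φ b) / φ lam :=
        div_lt_div_of_pos_left hpos hφl hφlt
      have r1 : (Φ a - Φ b) / φ lam = Φ a / φ lam - Φ b / φ lam := by ring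
      have r2 : (Φ a - Φ b) / φ 1 = Φ a / φ 1 - Φ b / φ 1 := by ring
      linarith
  have hbr : b < r₀ := by rwa [hb_def, norm_sub_rev]
  have har : a ≤ r₀ := le_of_lt (lt_of_le_of_lt hab hbr)
  have hyr : ‖x - y‖ ≤ r₀ := by
    rw [norm_sub_rev, ← dist_eq_norm]
    exact Metric.mem_closedBall.mp hy
  -- case f y = ⊤
  rcases eq_or_ne (f y) ⊤ with hytop | hytop
  · rw [hytop]
    rw [EReal.top_add_of_ne_bot (by exact_mod_cast EReal.coe_ne_bot _)]
    exact le_top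
  obtain ⟨d, hd⟩ : ∃ d : ℝ, f y = (d : EReal) :=
    ⟨(f y).toReal, (EReal.coe_toReal hytop (hfbot _)).symm⟩
  -- midpoint
  set m := (1/2 : ℝ) • (prox lam + y) with hm_def
  have hconv := hfconv (prox lam) y (1/2) (by norm_num)
  have hmidpt : (1/2 : ℝ) • prox lam + (1 - 1/2 : ℝ) • y = m := by
    rw [hm_def, smul_add]; norm_num
  rw [hmidpt, hc₁, hd] at hconv
  have hconv' : f m ≤ ((c₁/2 + d/2 : ℝ) : EReal) := by
    calc f m ≤ ((1/2 : ℝ) : EReal) * (c₁ : EReal) + ((1 - 1/2 : ℝ) : EReal) * (d : EReal) := hconv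
    _ = ((c₁/2 + d/2 : ℝ) : EReal) := by norm_cast; ring
  obtain ⟨e, he⟩ : ∃ e : ℝ, f m = (e : EReal) := by
    refine ⟨(f m).toReal, (EReal.coe_toReal ?_ (hfbot _)).symm⟩
    intro hT
    rw [hT] at hconv'
    exact (EReal.coe_ne_top _) (top_le_iff.mp hconv')
  have hconvR : e ≤ c₁/2 + d/2 := by
    rw [he, EReal.coe_le_coe_iff] at hconv'
    exact hconv'
  have hm1 := hprox lam hlam.1 m
  rw [hc₁, he, ← EReal.coe_add, ← EReal.coe_add, EReal.coe_le_coe_iff] at hm1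
  -- uniform convexity
  have humem : x - prox lam ∈ Metric.closedBall (0 : X) r₀ := by
    rw [Metric.mem_closedBall, dist_zero_right]; exact har
  have hvmem : x - y ∈ Metric.closedBall (0 : X) r₀ := by
    rw [Metric.mem_closedBall, dist_zero_right]; exact hyr
  have hδ' := hδ (x - prox lam) (x - y) humem hvmem
  have hmid2 : (1/2 : ℝ) • ((x - prox lam) + (x - y)) = x - m := by
    rw [hm_def]; module
  have hsub2 : (x - prox lam) - (x - y) = y - prox lam := by abel
  rw [hmid2, hsub2] at hδ'
  -- conclude
  rw [hc₁, hd, ← EReal.coe_add, ← EReal.coe_add, ← EReal.coe_add, EReal.coe_le_coe_iff]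
  set δ' := δ ‖y - prox lam‖ with hδ'_def
  have e1 : (Φ a / 2 + Φ ‖x - y‖ / 2 - δ') / φ lam
      = Φ a / φ lam / 2 + Φ ‖x - y‖ / φ lam / 2 - δ' / φ lam := by ring
  have e2 : 2 / φ lam * δ' = 2 * (δ' / φ lam) := by ring
  have h3' : Φ ‖x - m‖ / φ lam ≤ (Φ a / 2 + Φ ‖x - y‖ / 2 - δ') / φ lam :=
    (div_le_div_iff_of_pos_right hφl).2 hδ'
  linarith [hm1, hconvR, h3', e1, e2]
end

section
/- Let X be a uniformly convex Banach space, Φ a Young function with Φ(t) = ∫₀ᵗ φ, and ρ_Φ : (0,∞) → (0,∞) satisfy Φ(ρ_Φ(t))/ρ_Φ(t) ≥ t for all t > 0. Let f be proper convex lsc, x ∈ X, r > 0. Set R₀ = ‖x − prox^Φ_{1,f}(x)‖. Then for every y ∈ B(x,r) and every λ ∈ (0,1], ‖y − prox^Φ_{λ,f}(y)‖ ≤ max{1, ρ_Φ(φ(R₀) + (r + R₀)φ(R₀) + Φ(r + R₀))}. -/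
/-!
Compare the two proximal problems. Testing the minimality of `p = prox_λ(y)` at `q = prox_1(x)`
gives `Φ(‖y - p‖) ≤ Φ(r + R₀) + φ(λ) (f q - f p)`. Minimality of `q` along the segment towards `p`,
together with convexity of `f` and right continuity of `φ`, gives the subgradient bound
`f q - f p ≤ ‖p - q‖ φ(R₀) / φ(1)`, and `‖p - q‖ ≤ ‖y - p‖ + r + R₀`. Hence `R = ‖y - p‖` satisfies
`Φ(R) ≤ R φ(R₀) + C` with `C = (r + R₀) φ(R₀) + Φ(r + R₀)`; since `Φ(t)/t` is nondecreasing this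
linear growth bound forces `R ≤ 1` or `R ≤ ρ(φ(R₀) + C)`.
-/

open MeasureTheory Filter Set Topology intervalIntegral

section YoungFunction

variable {φ Φ : ℝ → ℝ}

theorem intervalIntegrable_of_monotoneOn_Ici (hφ : MonotoneOn φ (Ici 0)) {a b : ℝ}
    (ha : 0 ≤ a) (hb : 0 ≤ b) : IntervalIntegrable φ volume a b :=
  (hφ.mono fun _ hz => (le_min ha hb).trans hz.1).intervalIntegrable

theorem youngFun_eq_add_integral (hφ : MonotoneOn φ (Ici 0))
    (hΦ : ∀ t, 0 ≤ t → Φ t = ∫ s in (0:ℝ)..t, φ s) {a b : ℝ} (ha : 0 ≤ a) (hab : a ≤ b) :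
    Φ b = Φ a + ∫ s in a..b, φ s := by
  rw [hΦ a ha, hΦ b (ha.trans hab), integral_add_adjacent_intervals
    (intervalIntegrable_of_monotoneOn_Ici hφ le_rfl ha)
    (intervalIntegrable_of_monotoneOn_Ici hφ ha (ha.trans hab))]

theorem youngFun_le_add_mul (hφ : MonotoneOn φ (Ici 0))
    (hΦ : ∀ t, 0 ≤ t → Φ t = ∫ s in (0:ℝ)..t, φ s) {a b : ℝ} (ha : 0 ≤ a) (hab : a ≤ b) :
    Φ b ≤ Φ a + (b - a) * φ b := by
  have hb : 0 ≤ b := ha.trans hab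
  have h := integral_mono_on hab (intervalIntegrable_of_monotoneOn_Ici hφ ha hb)
    intervalIntegrable_const fun s hs => hφ (ha.trans hs.1) hb hs.2
  rw [intervalIntegral.integral_const, smul_eq_mul] at h
  linarith [youngFun_eq_add_integral hφ hΦ ha hab]

theorem add_mul_le_youngFun (hφ : MonotoneOn φ (Ici 0))
    (hΦ : ∀ t, 0 ≤ t → Φ t = ∫ s in (0:ℝ)..t, φ s) {a b : ℝ} (ha : 0 ≤ a) (hab : a ≤ b) :
    Φ a + (b - a) * φ a ≤ Φ b := by
  have h := integral_mono_on hab intervalIntegrable_const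
    (intervalIntegrable_of_monotoneOn_Ici hφ ha (ha.trans hab))
    fun s hs => hφ ha (ha.trans hs.1) hs.1
  rw [intervalIntegral.integral_const, smul_eq_mul] at h
  linarith [youngFun_eq_add_integral hφ hΦ ha hab]

theorem youngFun_monotoneOn (hφ : MonotoneOn φ (Ici 0)) (hφ0 : 0 ≤ φ 0)
    (hΦ : ∀ t, 0 ≤ t → Φ t = ∫ s in (0:ℝ)..t, φ s) : MonotoneOn Φ (Ici 0) := by
  intro a ha b _ hab
  have hφa : 0 ≤ φ a := hφ0.trans (hφ self_mem_Ici ha ha)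
  nlinarith [add_mul_le_youngFun hφ hΦ ha hab]

theorem youngFun_div_monotoneOn (hφ : MonotoneOn φ (Ici 0))
    (hΦ : ∀ t, 0 ≤ t → Φ t = ∫ s in (0:ℝ)..t, φ s) : MonotoneOn (fun t => Φ t / t) (Ioi 0) := by
  intro a (ha : 0 < a) b (hb : 0 < b) hab
  have hΦ0 : Φ 0 = 0 := by simp [hΦ 0 le_rfl]
  have hupper := youngFun_le_add_mul hφ hΦ le_rfl ha.le
  have hlower := add_mul_le_youngFun hφ hΦ ha.le hab
  rw [hΦ0, sub_zero] at hupper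
  rw [div_le_div_iff₀ ha hb]
  nlinarith

theorem youngFun_pos (hφ : MonotoneOn φ (Ici 0)) (hφpos : ∀ t > 0, 0 < φ t)
    (hΦ : ∀ t, 0 ≤ t → Φ t = ∫ s in (0:ℝ)..t, φ s) {t : ℝ} (ht : 0 < t) : 0 < Φ t := by
  rw [hΦ t ht.le]
  exact intervalIntegral_pos_of_pos_on (intervalIntegrable_of_monotoneOn_Ici hφ le_rfl ht.le)
    (fun s hs => hφpos s hs.1) ht

theorem le_max_one_of_le_mul_add {ρ : ℝ → ℝ} (hΦ : MonotoneOn (fun t => Φ t / t) (Ioi 0))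
    (hρpos : ∀ t > 0, 0 < ρ t) (hρ : ∀ t > 0, t ≤ Φ (ρ t) / ρ t) {A C R : ℝ}
    (hA : 0 ≤ A) (hC : 0 < C) (h : Φ R ≤ R * A + C) : R ≤ max 1 (ρ (A + C)) := by
  by_contra! hR
  obtain ⟨hR1, hρR⟩ := max_lt_iff.mp hR
  have hK : 0 < A + C := by linarith
  have hslope : A + C ≤ Φ R / R :=
    (hρ _ hK).trans (hΦ (hρpos _ hK) (show 0 < R by linarith) hρR.le)
  rw [le_div_iff₀ (by linarith)] at hslope
  nlinarith

end YoungFunction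

section Prox

variable {X : Type*} [NormedAddCommGroup X]

/-- `p` minimizes `v ↦ f v + Φ ‖w - v‖ / c`; for `c = φ λ` this is `p = prox^Φ_{λ,f}(w)`. -/
def IsProxMin (f : X → EReal) (Φ : ℝ → ℝ) (c : ℝ) (w p : X) : Prop :=
  ∀ v, f p + ((Φ ‖w - p‖ / c : ℝ) : EReal) ≤ f v + ((Φ ‖w - v‖ / c : ℝ) : EReal)

variable {f : X → EReal} {φ Φ : ℝ → ℝ} {c : ℝ} {w p : X}

theorem IsProxMin.ne_top (h : IsProxMin f Φ c w p) (hf : ∃ v, f v ≠ ⊤) : f p ≠ ⊤ := by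
  obtain ⟨v, hv⟩ := hf
  intro hp
  have := h v
  rw [hp, EReal.top_add_coe, top_le_iff] at this
  exact EReal.add_lt_top hv (EReal.coe_ne_top _) |>.ne this

theorem IsProxMin.exists_eq_coe (h : IsProxMin f Φ c w p) (hf : ∃ v, f v ≠ ⊤)
    (hfbot : ∀ v, f v ≠ ⊥) : ∃ a : ℝ, f p = a :=
  ⟨(f p).toReal, (EReal.coe_toReal (h.ne_top hf) (hfbot p)).symm⟩

theorem IsProxMin.add_le_of_le_coe (h : IsProxMin f Φ c w p) {v : X} {a b : ℝ}
    (hp : f p = a) (hv : f v ≤ b) : a + Φ ‖w - p‖ / c ≤ b + Φ ‖w - v‖ / c := by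
  have := (h v).trans (add_le_add_left hv _)
  rw [hp] at this
  exact_mod_cast this

theorem IsProxMin.sub_le_of_mem_Ioc [NormedSpace ℝ X]
    (hfconv : ∀ x y : X, ∀ t ∈ Icc (0:ℝ) 1,
      f (t • x + (1 - t) • y) ≤ ((t : ℝ) : EReal) * f x + ((1 - t : ℝ) : EReal) * f y)
    (hφ : MonotoneOn φ (Ici 0)) (hφ0 : 0 ≤ φ 0)
    (hΦ : ∀ t, 0 ≤ t → Φ t = ∫ s in (0:ℝ)..t, φ s) (hc : 0 < c) {q : X}
    (hq : IsProxMin f Φ c w q) {a b : ℝ} (hpa : f p = a) (hqb : f q = b) {t : ℝ}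
    (ht : t ∈ Ioc (0:ℝ) 1) : b - a ≤ ‖p - q‖ * φ (‖w - q‖ + t * ‖p - q‖) / c := by
  set v := t • p + (1 - t) • q
  have hfv : f v ≤ ((t * a + (1 - t) * b : ℝ) : EReal) := by
    have := hfconv p q t (Ioc_subset_Icc_self ht)
    rw [hpa, hqb] at this
    exact_mod_cast this
  have hmin := hq.add_le_of_le_coe hqb hfv
  have hwv : ‖w - v‖ ≤ ‖w - q‖ + t * ‖p - q‖ :=
    calc ‖w - v‖ = ‖(w - q) - t • (p - q)‖ := by
          congr 1; simp only [v, smul_sub, sub_smul, one_smul]; abel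
      _ ≤ ‖w - q‖ + ‖t • (p - q)‖ := norm_sub_le _ _
      _ = ‖w - q‖ + t * ‖p - q‖ := by rw [norm_smul, Real.norm_of_nonneg ht.1.le]
  have hstep : 0 ≤ t * ‖p - q‖ := mul_nonneg ht.1.le (norm_nonneg _)
  have hΦv : Φ ‖w - v‖ ≤ Φ ‖w - q‖ + t * ‖p - q‖ * φ (‖w - q‖ + t * ‖p - q‖) := by
    have := youngFun_le_add_mul hφ hΦ (norm_nonneg (w - q)) (le_add_of_nonneg_right hstep)
    rw [add_sub_cancel_left] at this
    exact (youngFun_monotoneOn hφ hφ0 hΦ (norm_nonneg _) (mem_Ici.mpr (by positivity)) hwv).trans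
      this
  have hΦv' : Φ ‖w - v‖ / c ≤ Φ ‖w - q‖ / c + t * (‖p - q‖ * φ (‖w - q‖ + t * ‖p - q‖) / c) :=
    calc Φ ‖w - v‖ / c ≤ (Φ ‖w - q‖ + t * ‖p - q‖ * φ (‖w - q‖ + t * ‖p - q‖)) / c := by gcongr
      _ = _ := by ring
  exact le_of_mul_le_mul_left (by linarith) ht.1

/-- Subgradient inequality at a proximal point. -/
theorem IsProxMin.sub_le [NormedSpace ℝ X]
    (hfconv : ∀ x y : X, ∀ t ∈ Icc (0:ℝ) 1,
      f (t • x + (1 - t) • y) ≤ ((t : ℝ) : EReal) * f x + ((1 - t : ℝ) : EReal) * f y)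
    (hφ : MonotoneOn φ (Ici 0)) (hφ0 : 0 ≤ φ 0)
    (hφrc : ∀ t : ℝ, 0 ≤ t → ContinuousWithinAt φ (Ici t) t)
    (hΦ : ∀ t, 0 ≤ t → Φ t = ∫ s in (0:ℝ)..t, φ s) (hc : 0 < c) {q : X}
    (hq : IsProxMin f Φ c w q) {a b : ℝ} (hpa : f p = a) (hqb : f q = b) :
    b - a ≤ ‖p - q‖ * φ ‖w - q‖ / c := by
  have hshift : Tendsto (fun t : ℝ => ‖w - q‖ + t * ‖p - q‖) (𝓝[>] 0) (𝓝[≥] ‖w - q‖) := by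
    refine tendsto_nhdsWithin_iff.mpr ⟨?_, ?_⟩
    · have : Continuous fun t : ℝ => ‖w - q‖ + t * ‖p - q‖ := by fun_prop
      simpa using (this.tendsto 0).mono_left nhdsWithin_le_nhds
    · filter_upwards [self_mem_nhdsWithin] with t (ht : 0 < t)
      exact le_add_of_nonneg_right (mul_nonneg ht.le (norm_nonneg _))
  have hlim := (((hφrc _ (norm_nonneg _)).tendsto.comp hshift).const_mul ‖p - q‖).div_const c
  refine ge_of_tendsto hlim ?_
  filter_upwards [Ioc_mem_nhdsGT one_pos] with t ht
  exact hq.sub_le_of_mem_Ioc hfconv hφ hφ0 hΦ hc hpa hqb ht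

theorem IsProxMin.youngFun_le [NormedSpace ℝ X]
    (hfconv : ∀ x y : X, ∀ t ∈ Icc (0:ℝ) 1,
      f (t • x + (1 - t) • y) ≤ ((t : ℝ) : EReal) * f x + ((1 - t : ℝ) : EReal) * f y)
    (hfbot : ∀ v, f v ≠ ⊥) (hfproper : ∃ v, f v ≠ ⊤)
    (hφ : MonotoneOn φ (Ici 0)) (hφ0 : 0 ≤ φ 0)
    (hφrc : ∀ t : ℝ, 0 ≤ t → ContinuousWithinAt φ (Ici t) t)
    (hΦ : ∀ t, 0 ≤ t → Φ t = ∫ s in (0:ℝ)..t, φ s) {c' : ℝ} (hc : 0 < c) (hcc' : c ≤ c')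
    {x q : X} (hp : IsProxMin f Φ c w p) (hq : IsProxMin f Φ c' x q) :
    Φ ‖w - p‖ ≤ Φ ‖w - q‖ + ‖p - q‖ * φ ‖x - q‖ := by
  obtain ⟨a, hpa⟩ := hp.exists_eq_coe hfproper hfbot
  obtain ⟨b, hqb⟩ := hq.exists_eq_coe hfproper hfbot
  have hc' : 0 < c' := hc.trans_le hcc'
  have hslope : b - a ≤ ‖p - q‖ * φ ‖x - q‖ / c' :=
    hq.sub_le hfconv hφ hφ0 hφrc hΦ hc' hpa hqb
  have hmin := hp.add_le_of_le_coe hpa hqb.le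
  have hnum : 0 ≤ ‖p - q‖ * φ ‖x - q‖ :=
    mul_nonneg (norm_nonneg _) (hφ0.trans (hφ self_mem_Ici (norm_nonneg _) (norm_nonneg _)))
  have hscaled : c * (b - a) ≤ ‖p - q‖ * φ ‖x - q‖ :=
    calc c * (b - a) ≤ c * (‖p - q‖ * φ ‖x - q‖ / c') := mul_le_mul_of_nonneg_left hslope hc.le
      _ ≤ c' * (‖p - q‖ * φ ‖x - q‖ / c') :=
          mul_le_mul_of_nonneg_right hcc' (div_nonneg hnum hc'.le)
      _ = ‖p - q‖ * φ ‖x - q‖ := mul_div_cancel₀ _ hc'.ne'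
  have hdiff : (Φ ‖w - p‖ - Φ ‖w - q‖) / c ≤ b - a := by rw [sub_div]; linarith
  rw [div_le_iff₀ hc, mul_comm] at hdiff
  linarith

end Prox

theorem stmt_10_general {X : Type*} [NormedAddCommGroup X] [NormedSpace ℝ X]
    (φ Φ : ℝ → ℝ)
    (hφmono : StrictMonoOn φ (Set.Ici 0)) (hφ0 : φ 0 = 0)
    (hφrc : ∀ t : ℝ, 0 ≤ t → ContinuousWithinAt φ (Set.Ici t) t)
    (hΦint : ∀ t : ℝ, 0 ≤ t → Φ t = ∫ s in (0:ℝ)..t, φ s)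
    (ρ : ℝ → ℝ) (hρpos : ∀ t > (0:ℝ), 0 < ρ t)
    (hρ : ∀ t > (0:ℝ), t ≤ Φ (ρ t) / ρ t)
    (f : X → EReal) (hfbot : ∀ x, f x ≠ ⊥) (hfproper : ∃ x, f x ≠ ⊤)
    (hfconv : ∀ x y : X, ∀ t ∈ Set.Icc (0:ℝ) 1,
      f (t • x + (1 - t) • y) ≤ ((t : ℝ) : EReal) * f x + ((1 - t : ℝ) : EReal) * f y)
    (prox : ℝ → X → X)
    (hprox : ∀ lam > (0:ℝ), ∀ w y : X,
      f (prox lam w) + ((Φ ‖w - prox lam w‖ / φ lam : ℝ) : EReal) ≤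
        f y + ((Φ ‖w - y‖ / φ lam : ℝ) : EReal))
    (x : X) (r : ℝ) (hr : 0 < r) :
    ∀ y ∈ Metric.closedBall x r, ∀ lam ∈ Set.Ioc (0:ℝ) 1,
      ‖y - prox lam y‖ ≤
        max 1 (ρ (φ ‖x - prox 1 x‖ + (r + ‖x - prox 1 x‖) * φ ‖x - prox 1 x‖
          + Φ (r + ‖x - prox 1 x‖))) := by
  intro y hy lam ⟨hlam0, hlam1⟩
  have hφ : MonotoneOn φ (Ici 0) := hφmono.monotoneOn
  have hφpos : ∀ t > 0, 0 < φ t := fun t ht => hφ0 ▸ hφmono self_mem_Ici ht.le ht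
  set R₀ := ‖x - prox 1 x‖
  have hR₀ : 0 ≤ R₀ := norm_nonneg _
  have hφR₀ : 0 ≤ φ R₀ := hφ0.ge.trans (hφ self_mem_Ici hR₀ hR₀)
  have hyq : ‖y - prox 1 x‖ ≤ r + R₀ := by
    linarith [norm_sub_le_norm_sub_add_norm_sub y x (prox 1 x), mem_closedBall_iff_norm.mp hy]
  have hpq : ‖prox lam y - prox 1 x‖ ≤ ‖y - prox lam y‖ + (r + R₀) := by
    linarith [norm_sub_le_norm_sub_add_norm_sub (prox lam y) y (prox 1 x),
      norm_sub_rev (prox lam y) y]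
  have hgrowth :
      Φ ‖y - prox lam y‖ ≤ ‖y - prox lam y‖ * φ R₀ + ((r + R₀) * φ R₀ + Φ (r + R₀)) :=
    calc Φ ‖y - prox lam y‖ ≤ Φ ‖y - prox 1 x‖ + ‖prox lam y - prox 1 x‖ * φ R₀ :=
          IsProxMin.youngFun_le hfconv hfbot hfproper hφ hφ0.ge hφrc hΦint (hφpos _ hlam0)
            (hφ hlam0.le (mem_Ici.mpr zero_le_one) hlam1) (hprox lam hlam0 y) (hprox 1 one_pos x)
      _ ≤ Φ (r + R₀) + (‖y - prox lam y‖ + (r + R₀)) * φ R₀ := by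
          gcongr
          exact youngFun_monotoneOn hφ hφ0.ge hΦint (norm_nonneg _)
            (mem_Ici.mpr (by positivity)) hyq
      _ = _ := by ring
  rw [add_assoc]
  exact le_max_one_of_le_mul_add (youngFun_div_monotoneOn hφ hΦint) hρpos hρ
    hφR₀ (add_pos_of_nonneg_of_pos (by positivity) (youngFun_pos hφ hφpos hΦint (by positivity)))
    hgrowth

/-- Uniform bound on `‖y − prox^Φ_{λ,f}(y)‖` for `y` in a ball and `λ ∈ (0,1]`. -/
theorem stmt_10 {X : Type*} [NormedAddCommGroup X] [NormedSpace ℝ X] [CompleteSpace X]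
    (δX : ℝ → ℝ)
    (hδX : ∀ ε ∈ Set.Ioc (0:ℝ) 2, 0 < δX ε ∧ ∀ u v : X, ‖u‖ ≤ 1 → ‖v‖ ≤ 1 →
      ε ≤ ‖u - v‖ → ‖(1/2 : ℝ) • (u + v)‖ ≤ 1 - δX ε)
    (φ Φ : ℝ → ℝ)
    (hφmono : StrictMonoOn φ (Set.Ici 0)) (hφ0 : φ 0 = 0)
    (hφrc : ∀ t : ℝ, 0 ≤ t → ContinuousWithinAt φ (Set.Ici t) t)
    (hφtop : Filter.Tendsto φ Filter.atTop Filter.atTop)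
    (hΦint : ∀ t : ℝ, 0 ≤ t → Φ t = ∫ s in (0:ℝ)..t, φ s)
    (ρ : ℝ → ℝ) (hρpos : ∀ t > (0:ℝ), 0 < ρ t)
    (hρ : ∀ t > (0:ℝ), t ≤ Φ (ρ t) / ρ t)
    (f : X → EReal) (hfbot : ∀ x, f x ≠ ⊥) (hfproper : ∃ x, f x ≠ ⊤)
    (hfconv : ∀ x y : X, ∀ t ∈ Set.Icc (0:ℝ) 1,
      f (t • x + (1 - t) • y) ≤ ((t : ℝ) : EReal) * f x + ((1 - t : ℝ) : EReal) * f y)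
    (hflsc : LowerSemicontinuous f)
    (prox : ℝ → X → X)
    (hprox : ∀ lam > (0:ℝ), ∀ w y : X,
      f (prox lam w) + ((Φ ‖w - prox lam w‖ / φ lam : ℝ) : EReal) ≤
        f y + ((Φ ‖w - y‖ / φ lam : ℝ) : EReal))
    (x : X) (r : ℝ) (hr : 0 < r) :
    ∀ y ∈ Metric.closedBall x r, ∀ lam ∈ Set.Ioc (0:ℝ) 1,
      ‖y - prox lam y‖ ≤
        max 1 (ρ (φ ‖x - prox 1 x‖ + (r + ‖x - prox 1 x‖) * φ ‖x - prox 1 x‖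
          + Φ (r + ‖x - prox 1 x‖))) :=
  stmt_10_general φ Φ hφmono hφ0 hφrc hΦint ρ hρpos hρ f hfbot hfproper hfconv prox hprox x r hr
end

section
/- Let X be a uniformly convex Banach space, Φ a Young function with derivative φ, and f proper convex lsc. Fix z ∈ X, r > 0, and let R > 0 satisfy ‖x − prox^Φ_{λ,f}(x)‖ ≤ R for all x ∈ B(z,r) and λ ∈ (0,1]. Let δ_R be a modulus of uniform convexity of Φ∘‖·‖ on B(0,R). Define δ(ε) = min{ε/2, (2/φ(R))·δ_R(ε/2)}. Then for all x, y ∈ B(z,r) and λ ∈ (0,1]: ‖x − y‖ < δ(ε) implies ‖prox^Φ_{λ,f}(x) − prox^Φ_{λ,f}(y)‖ < ε. -/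
/-- Main theorem: the proximal mapping with a Young function is uniformly continuous
on bounded sets, with an explicit modulus independent of `λ ∈ (0,1]`. -/
theorem stmt_11 {X : Type*} [NormedAddCommGroup X] [NormedSpace ℝ X] [CompleteSpace X]
    (δX : ℝ → ℝ)
    (hδX : ∀ ε ∈ Set.Ioc (0:ℝ) 2, 0 < δX ε ∧ ∀ u v : X, ‖u‖ ≤ 1 → ‖v‖ ≤ 1 →
      ε ≤ ‖u - v‖ → ‖(1/2 : ℝ) • (u + v)‖ ≤ 1 - δX ε)
    (φ Φ : ℝ → ℝ)
    (hφmono : StrictMonoOn φ (Set.Ici 0)) (hφ0 : φ 0 = 0)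
    (hφrc : ∀ t : ℝ, 0 ≤ t → ContinuousWithinAt φ (Set.Ici t) t)
    (hφtop : Filter.Tendsto φ Filter.atTop Filter.atTop)
    (hΦint : ∀ t : ℝ, 0 ≤ t → Φ t = ∫ s in (0:ℝ)..t, φ s)
    (f : X → EReal) (hfbot : ∀ x, f x ≠ ⊥) (hfproper : ∃ x, f x ≠ ⊤)
    (hfconv : ∀ x y : X, ∀ t ∈ Set.Icc (0:ℝ) 1,
      f (t • x + (1 - t) • y) ≤ ((t : ℝ) : EReal) * f x + ((1 - t : ℝ) : EReal) * f y)
    (hflsc : LowerSemicontinuous f)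
    (prox : ℝ → X → X)
    (hprox : ∀ lam > (0:ℝ), ∀ w y : X,
      f (prox lam w) + ((Φ ‖w - prox lam w‖ / φ lam : ℝ) : EReal) ≤
        f y + ((Φ ‖w - y‖ / φ lam : ℝ) : EReal))
    (z : X) (r : ℝ) (hr : 0 < r)
    (R : ℝ) (hRpos : 0 < R)
    (hR : ∀ x ∈ Metric.closedBall z r, ∀ lam ∈ Set.Ioc (0:ℝ) 1, ‖x - prox lam x‖ ≤ R)
    (δR : ℝ → ℝ) (hδRpos : ∀ ε > (0:ℝ), 0 < δR ε)
    (hδR : ∀ ε > (0:ℝ), ∀ u v : X, u ∈ Metric.closedBall (0 : X) R →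
      v ∈ Metric.closedBall (0 : X) R → ε ≤ ‖u - v‖ →
      Φ ‖(1/2 : ℝ) • (u + v)‖ ≤ Φ ‖u‖ / 2 + Φ ‖v‖ / 2 - δR ε) :
    ∀ ε > (0:ℝ), ∀ x ∈ Metric.closedBall z r, ∀ y ∈ Metric.closedBall z r,
      ∀ lam ∈ Set.Ioc (0:ℝ) 1,
      ‖x - y‖ < min (ε / 2) (2 / φ R * δR (ε / 2)) →
      ‖prox lam x - prox lam y‖ < ε := by
  
  intro ε hε x hx y hy lam hlam hxy
  by_contra hcon
  push_neg at hcon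
  obtain ⟨hlam0, hlam1⟩ := hlam
  obtain ⟨x₀, hx₀⟩ := hfproper
  -- basic monotonicity facts about φ and Φ
  have hmono : MonotoneOn φ (Set.Ici 0) := hφmono.monotoneOn
  have hφnn : ∀ t : ℝ, 0 ≤ t → 0 ≤ φ t := by
    intro t ht
    have := hmono (Set.mem_Ici.mpr le_rfl) (Set.mem_Ici.mpr ht) ht
    rwa [hφ0] at this
  have hphilam : 0 < φ lam := by
    have := hφmono (Set.mem_Ici.mpr le_rfl) (Set.mem_Ici.mpr hlam0.le) hlam0
    rwa [hφ0] at this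
  have hφR : 0 < φ R := by
    have := hφmono (Set.mem_Ici.mpr le_rfl) (Set.mem_Ici.mpr hRpos.le) hRpos
    rwa [hφ0] at this
  have hInt : ∀ s t : ℝ, 0 ≤ s → s ≤ t → IntervalIntegrable φ MeasureTheory.volume s t := by
    intro s t hs hst
    apply MonotoneOn.intervalIntegrable
    apply hmono.mono
    rw [Set.uIcc_of_le hst]
    intro r hr
    exact Set.mem_Ici.mpr (hs.trans hr.1)
  have hΦdiff : ∀ s t : ℝ, 0 ≤ s → s ≤ t → Φ t = Φ s + ∫ r in s..t, φ r := by
    intro s t hs hst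
    rw [hΦint t (hs.trans hst), hΦint s hs,
      ← intervalIntegral.integral_add_adjacent_intervals (hInt 0 s le_rfl hs) (hInt s t hs hst)]
  have hIntNN : ∀ s t : ℝ, 0 ≤ s → s ≤ t → 0 ≤ ∫ r in s..t, φ r := by
    intro s t hs hst
    apply intervalIntegral.integral_nonneg hst
    intro r hr
    exact hφnn r (hs.trans hr.1)
  have hIntUB : ∀ s t : ℝ, 0 ≤ s → s ≤ t → (∫ r in s..t, φ r) ≤ φ t * (t - s) := by
    intro s t hs hst
    have h1 : (∫ r in s..t, φ r) ≤ ∫ _r in s..t, φ t := by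
      apply intervalIntegral.integral_mono_on hst (hInt s t hs hst) intervalIntegrable_const
      intro r hr
      exact hmono (Set.mem_Ici.mpr (hs.trans hr.1)) (Set.mem_Ici.mpr (hs.trans hst)) hr.2
    have h2 : (∫ _r in s..t, φ t) = (t - s) * φ t := by
      rw [intervalIntegral.integral_const]; simp [smul_eq_mul]
    rw [h2] at h1
    linarith [h1]
  have hΦmono : ∀ s t : ℝ, 0 ≤ s → s ≤ t → Φ s ≤ Φ t := by
    intro s t hs hst
    have := hΦdiff s t hs hst
    have := hIntNN s t hs hst
    linarith
  have hΦub : ∀ s t : ℝ, 0 ≤ s → s ≤ t → Φ t ≤ Φ s + φ t * (t - s) := by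
    intro s t hs hst
    have := hΦdiff s t hs hst
    have := hIntUB s t hs hst
    linarith
  -- names
  set p := prox lam x with hp
  set q := prox lam y with hq
  set u := x - p with hudef
  set v := y - q with hvdef
  set w := (1/2 : ℝ) • (u + v) with hwdef
  set m := (1/2 : ℝ) • p + (1/2 : ℝ) • q with hmdef
  set δ := δR (ε/2) with hδdef
  set d := ‖x - y‖ with hddef
  set h := d / 2 with hhdef
  set a := ‖w‖ with hadef
  have hδ0 : 0 < δ := hδRpos _ (by positivity)
  have hd0 : 0 ≤ d := norm_nonneg _
  have hh0 : 0 ≤ h := by positivity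
  have ha0 : 0 ≤ a := norm_nonneg _
  have hu : ‖u‖ ≤ R := hR x hx lam ⟨hlam0, hlam1⟩
  have hv : ‖v‖ ≤ R := hR y hy lam ⟨hlam0, hlam1⟩
  have hd_half : d < ε / 2 := lt_of_lt_of_le hxy (min_le_left _ _)
  have hd_delta : d < 2 / φ R * δ := lt_of_lt_of_le hxy (min_le_right _ _)
  -- φ R * h < δ
  have hφRh : φ R * h < δ := by
    have h2 : (2 / φ R * δ) * φ R = 2 * δ := by field_simp
    have h3 := mul_lt_mul_of_pos_right hd_delta hφR
    rw [h2] at h3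
    rw [hhdef]
    nlinarith
  -- ε/2 ≤ ‖u - v‖
  have hpq : p - q = (x - y) - (u - v) := by rw [hudef, hvdef]; abel
  have hdiffuv : ε / 2 ≤ ‖u - v‖ := by
    have h1 : ‖p - q‖ ≤ ‖x - y‖ + ‖u - v‖ := by
      rw [hpq]; exact norm_sub_le _ _
    have h2 : ε ≤ ‖p - q‖ := hcon
    rw [← hddef] at h1
    linarith
  -- uniform convexity application
  have hδRapp : Φ a ≤ Φ ‖u‖ / 2 + Φ ‖v‖ / 2 - δ := by
    have := hδR (ε/2) (by positivity) u v
      (mem_closedBall_zero_iff.mpr hu) (mem_closedBall_zero_iff.mpr hv) hdiffuv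
    rw [← hwdef, ← hadef] at this
    rw [hδdef]
    exact this
  -- geometry of the midpoint
  have hxm : x - m = w + (1/2 : ℝ) • (x - y) := by
    rw [hwdef, hmdef, hudef, hvdef]; module
  have hym : y - m = w - (1/2 : ℝ) • (x - y) := by
    rw [hwdef, hmdef, hudef, hvdef]; module
  have hhalfnorm : ‖(1/2 : ℝ) • (x - y)‖ = h := by
    rw [norm_smul, hhdef, hddef]
    simp [Real.norm_eq_abs]
    ring
  have hb1 : ‖x - m‖ ≤ a + h := by
    rw [hxm]
    calc ‖w + (1/2 : ℝ) • (x - y)‖ ≤ ‖w‖ + ‖(1/2 : ℝ) • (x - y)‖ := norm_add_le _ _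
    _ = a + h := by rw [hhalfnorm, hadef]
  have hb2 : ‖y - m‖ ≤ a + h := by
    rw [hym]
    calc ‖w - (1/2 : ℝ) • (x - y)‖ ≤ ‖w‖ + ‖(1/2 : ℝ) • (x - y)‖ := norm_sub_le _ _
    _ = a + h := by rw [hhalfnorm, hadef]
  -- finiteness of f at p, q, m
  have hfp_top : f p ≠ ⊤ := by
    intro htop
    have h₀ := hprox lam hlam0 x x₀
    rw [← hp, htop, EReal.top_add_of_ne_bot (EReal.coe_ne_bot _)] at h₀
    exact absurd (top_le_iff.mp h₀) (EReal.add_lt_top hx₀ (EReal.coe_ne_top _)).ne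
  have hfq_top : f q ≠ ⊤ := by
    intro htop
    have h₀ := hprox lam hlam0 y x₀
    rw [← hq, htop, EReal.top_add_of_ne_bot (EReal.coe_ne_bot _)] at h₀
    exact absurd (top_le_iff.mp h₀) (EReal.add_lt_top hx₀ (EReal.coe_ne_top _)).ne
  set P := (f p).toReal with hPdef
  set Q := (f q).toReal with hQdef
  have hPcoe : ((P : ℝ) : EReal) = f p := EReal.coe_toReal hfp_top (hfbot p)
  have hQcoe : ((Q : ℝ) : EReal) = f q := EReal.coe_toReal hfq_top (hfbot q)
  -- convexity at midpoint
  have hconv : f m ≤ ((1/2 * P + 1/2 * Q : ℝ) : EReal) := by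
    have h12 : (1 - (1/2 : ℝ)) = 1/2 := by norm_num
    have hc := hfconv p q (1/2) ⟨by norm_num, by norm_num⟩
    rw [h12, ← hPcoe, ← hQcoe, ← EReal.coe_mul, ← EReal.coe_mul, ← EReal.coe_add] at hc
    rw [hmdef]
    exact hc
  have hfm_top : f m ≠ ⊤ := ne_top_of_le_ne_top (EReal.coe_ne_top _) hconv
  set M := (f m).toReal with hMdef
  have hMcoe : ((M : ℝ) : EReal) = f m := EReal.coe_toReal hfm_top (hfbot m)
  have hC : M ≤ 1/2 * P + 1/2 * Q := by
    rw [← hMcoe] at hconv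
    exact_mod_cast hconv
  -- prox inequalities against m
  have hA : P + Φ ‖u‖ / φ lam ≤ M + Φ ‖x - m‖ / φ lam := by
    have h₀ := hprox lam hlam0 x m
    rw [← hp, ← hudef, ← hPcoe, ← hMcoe, ← EReal.coe_add, ← EReal.coe_add] at h₀
    exact_mod_cast h₀
  have hB : Q + Φ ‖v‖ / φ lam ≤ M + Φ ‖y - m‖ / φ lam := by
    have h₀ := hprox lam hlam0 y m
    rw [← hq, ← hvdef, ← hQcoe, ← hMcoe, ← EReal.coe_add, ← EReal.coe_add] at h₀
    exact_mod_cast h₀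
  -- key inequality 2
  have key2 : Φ ‖u‖ + Φ ‖v‖ ≤ Φ ‖x - m‖ + Φ ‖y - m‖ := by
    have hsum : (Φ ‖u‖ + Φ ‖v‖) / φ lam ≤ (Φ ‖x - m‖ + Φ ‖y - m‖) / φ lam := by
      rw [add_div, add_div]
      linarith
    have h2 := mul_le_mul_of_nonneg_right hsum (le_of_lt hphilam)
    rwa [div_mul_cancel₀ _ (ne_of_gt hphilam), div_mul_cancel₀ _ (ne_of_gt hphilam)] at h2
  have key3a : Φ ‖x - m‖ ≤ Φ (a + h) := hΦmono _ _ (norm_nonneg _) hb1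
  have key3b : Φ ‖y - m‖ ≤ Φ (a + h) := hΦmono _ _ (norm_nonneg _) hb2
  have keychain : Φ a + δ ≤ Φ (a + h) := by linarith
  have ΦuR : Φ ‖u‖ ≤ Φ R := hΦmono _ _ (norm_nonneg _) hu
  have ΦvR : Φ ‖v‖ ≤ Φ R := hΦmono _ _ (norm_nonneg _) hv
  have ΦaR : Φ a ≤ Φ R - δ := by linarith
  -- final contradiction
  rcases le_or_gt (a + h) R with hc1 | hc1
  · have hφah : φ (a + h) ≤ φ R :=
      hmono (Set.mem_Ici.mpr (by linarith)) (Set.mem_Ici.mpr hRpos.le) hc1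
    have h1 : Φ (a + h) ≤ Φ a + φ (a + h) * (a + h - a) := hΦub a (a + h) ha0 (by linarith)
    have h2 : φ (a + h) * (a + h - a) ≤ φ R * h := by
      have : a + h - a = h := by ring
      rw [this]
      exact mul_le_mul_of_nonneg_right hφah hh0
    linarith
  · rcases le_or_gt a R with hc2 | hc2
    · have h1 : Φ R ≤ Φ a + φ R * (R - a) := hΦub a R ha0 hc2
      have h2 : φ R * (R - a) ≤ φ R * h := mul_le_mul_of_nonneg_left (by linarith) hφR.le
      linarith
    · have h1 : Φ R ≤ Φ a := hΦmono R a hRpos.le hc2.le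
      linarith
end

section
/- Let X be a Banach space with a norm whose modulus of uniform convexity is of power type p ≥ 2 with constant A, i.e. ‖(x+y)/2‖ ≤ 1 − A‖x−y‖ᵖ for x, y in the unit ball, and let Ψ : [0,∞) → [0,∞) be convex nondecreasing with modulus of uniform convexity δ_Ψ(ε) = Bεᵖ and right derivative Ψ′₊(t) ≥ K t^{p−1} for all t > 0, where A ∈ (0, 1/2], B, K > 0. Then x ↦ Ψ(‖x‖) is uniformly convex on X with modulus of power type p; concretely, ½Ψ(‖x‖) + ½Ψ(‖y‖) − Ψ(‖(x+y)/2‖) ≥ min{B/2ᵖ, AK/8ᵖ}·‖x−y‖ᵖ for all x, y ∈ X. -/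
/-!
Write `a = ‖x‖ ≥ b = ‖y‖`, `d = ‖x - y‖` and `t = (a + b) / 2`. If `a - b ≥ d / 2`, the
uniform convexity of `Ψ` alone gives the gain `B (d/2)ᵖ`. Otherwise `b > 0`, and replacing `x`
by its radial projection `x'` onto the sphere of radius `b` moves it by `a - b` while keeping
`‖x' - y‖ ≥ d / 2`; the uniform convexity of the norm on that sphere then pushes the midpoint
norm below `t` by `c = A (d/2)ᵖ / t^(p-1) ≤ t / 2`, and since `Ψ′₊ ≥ K (t/2)^(p-1)` on
`[t/2, t]`, convexity of `Ψ` turns this into the gain `K (t/2)^(p-1) c ≥ A K (d/8)ᵖ`.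
-/

open Set

section RealFunction

variable {Ψ : ℝ → ℝ} {B p : ℝ}

lemma le_half_add_sub_of_le_midpoint (hΨmono : MonotoneOn Ψ (Ici 0))
    (hΨuc : ∀ a b : ℝ, 0 ≤ a → 0 ≤ b → Ψ ((a + b) / 2) ≤ Ψ a / 2 + Ψ b / 2 - B * |a - b| ^ p)
    {a b m : ℝ} (ha : 0 ≤ a) (hb : 0 ≤ b) (hm : 0 ≤ m) (hmab : m ≤ (a + b) / 2) :
    Ψ m ≤ Ψ a / 2 + Ψ b / 2 - B * |a - b| ^ p :=
  (hΨmono hm (by simp only [mem_Ici]; positivity) hmab).trans (hΨuc a b ha hb)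

lemma mul_rpow_sub_one_mul_le_sub (hΨconv : ConvexOn ℝ (Ici 0) Ψ)
    (hΨmono : MonotoneOn Ψ (Ici 0)) {Ψ' : ℝ → ℝ}
    (hΨd : ∀ t > (0:ℝ), HasDerivWithinAt Ψ (Ψ' t) (Ici t) t) {K : ℝ}
    (hΨ'K : ∀ t > (0:ℝ), K * t ^ (p - 1) ≤ Ψ' t) (hp : 1 ≤ p) (hK : 0 ≤ K)
    {t c m : ℝ} (ht : 0 < t) (hc : 0 ≤ c) (hct : c ≤ t / 2) (hm : 0 ≤ m) (hmt : m ≤ t - c) :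
    K * (t / 2) ^ (p - 1) * c ≤ Ψ t - Ψ m := by
  have hΨm : Ψ m ≤ Ψ (t - c) := hΨmono hm (by simp only [mem_Ici]; linarith) hmt
  rcases hc.eq_or_lt with rfl | hc
  · simpa using hΨm
  set u := t - c
  have hu : 0 < u := by linarith
  have hslope : Ψ' u ≤ (Ψ t - Ψ u) / c := by
    have := hΨconv.le_slope_of_hasDerivWithinAt_Ioi hu.le ht.le (by linarith : u < t)
      ((hΨd u hu).mono Ioi_subset_Ici_self)
    rwa [slope_def_field, sub_sub_cancel] at this
  have hKu : K * (t / 2) ^ (p - 1) ≤ Ψ' u :=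
    calc K * (t / 2) ^ (p - 1) ≤ K * u ^ (p - 1) := by
          gcongr
          linarith
      _ ≤ Ψ' u := hΨ'K u hu
  have := (le_div_iff₀ hc).mp (hKu.trans hslope)
  linarith

end RealFunction

lemma rpow_div_rpow_sub_one_le {e t p : ℝ} (he : 0 ≤ e) (het : e ≤ t) (ht : 0 < t) (hp : 0 ≤ p) :
    e ^ p / t ^ (p - 1) ≤ t := by
  rw [Real.rpow_sub_one ht.ne', div_div_eq_mul_div, div_le_iff₀ (by positivity), mul_comm t]
  gcongr

lemma div_eight_rpow_le {d t p : ℝ} (hd : 0 ≤ d) (ht : 0 < t) (hp : 0 ≤ p) :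
    (d / 8) ^ p ≤ (t / 2) ^ (p - 1) * ((d / 2) ^ p / t ^ (p - 1)) := by
  have h2 : (2 : ℝ) ^ (p - 1) ≤ 2 ^ p :=
    Real.rpow_le_rpow_of_exponent_le (by norm_num) (by linarith)
  calc (d / 8) ^ p ≤ (d / 4) ^ p := by gcongr; norm_num
    _ = (d / 2) ^ p / 2 ^ p := by rw [← Real.div_rpow (by positivity) (by norm_num)]; ring_nf
    _ ≤ (d / 2) ^ p / 2 ^ (p - 1) := by gcongr
    _ = (t / 2) ^ (p - 1) * ((d / 2) ^ p / t ^ (p - 1)) := by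
      rw [Real.div_rpow ht.le (by norm_num)]
      field_simp

section NormedSpace

variable {X : Type*} [NormedAddCommGroup X] [NormedSpace ℝ X]

lemma exists_norm_eq_norm_sub_eq {x : X} {r : ℝ} (hr : 0 ≤ r) (hrx : r ≤ ‖x‖) :
    ∃ x' : X, ‖x'‖ = r ∧ ‖x - x'‖ = ‖x‖ - r := by
  rcases (norm_nonneg x).eq_or_lt with hx | hx
  · exact ⟨0, by simp; linarith, by simp; linarith⟩
  refine ⟨(r / ‖x‖) • x, ?_, ?_⟩
  · rw [norm_smul, Real.norm_of_nonneg (by positivity), div_mul_cancel₀ _ hx.ne']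
  · have hcoef : 0 ≤ 1 - r / ‖x‖ := sub_nonneg.mpr (div_le_one_of_le₀ hrx hx.le)
    rw [show x - (r / ‖x‖) • x = (1 - r / ‖x‖) • x by rw [sub_smul, one_smul], norm_smul,
      Real.norm_of_nonneg hcoef, sub_mul, one_mul, div_mul_cancel₀ _ hx.ne']

lemma norm_midpoint_le_of_norm_le {A p : ℝ}
    (hX : ∀ u v : X, ‖u‖ ≤ 1 → ‖v‖ ≤ 1 → ‖(1/2 : ℝ) • (u + v)‖ ≤ 1 - A * ‖u - v‖ ^ p)
    {u v : X} {r : ℝ} (hr : 0 < r) (hu : ‖u‖ ≤ r) (hv : ‖v‖ ≤ r) :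
    ‖(1/2 : ℝ) • (u + v)‖ ≤ r - A * ‖u - v‖ ^ p / r ^ (p - 1) := by
  have hunit : ∀ w : X, ‖w‖ ≤ r → ‖r⁻¹ • w‖ ≤ 1 := fun w hw => by
    rw [norm_smul, Real.norm_of_nonneg (by positivity), inv_mul_le_one₀ hr]; exact hw
  have := hX _ _ (hunit u hu) (hunit v hv)
  rw [← smul_add, ← smul_sub, smul_comm, norm_smul r⁻¹ ((1/2 : ℝ) • (u + v)),
    norm_smul r⁻¹ (u - v), Real.norm_of_nonneg (by positivity : (0:ℝ) ≤ r⁻¹),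
    Real.mul_rpow (by positivity) (norm_nonneg _), Real.inv_rpow hr.le] at this
  rw [Real.rpow_sub_one hr.ne']
  have hrp : 0 < r ^ p := by positivity
  field_simp at this ⊢
  linarith

lemma norm_midpoint_le (x y : X) : ‖(1/2 : ℝ) • (x + y)‖ ≤ (‖x‖ + ‖y‖) / 2 := by
  rw [norm_smul, Real.norm_of_nonneg (by norm_num)]
  linarith [norm_add_le x y]

lemma norm_midpoint_le_of_sub_le {A p : ℝ} (hA : 0 ≤ A) (hp : 1 ≤ p)
    (hX : ∀ u v : X, ‖u‖ ≤ 1 → ‖v‖ ≤ 1 → ‖(1/2 : ℝ) • (u + v)‖ ≤ 1 - A * ‖u - v‖ ^ p)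
    {x y : X} (hyx : ‖y‖ ≤ ‖x‖) (hy : 0 < ‖y‖) (hxy : ‖x‖ - ‖y‖ ≤ ‖x - y‖ / 2) :
    ‖(1/2 : ℝ) • (x + y)‖ ≤
      (‖x‖ + ‖y‖) / 2 - A * (‖x - y‖ / 2) ^ p / ((‖x‖ + ‖y‖) / 2) ^ (p - 1) := by
  obtain ⟨x', hx'y, hxx'⟩ := exists_norm_eq_norm_sub_eq hy.le hyx
  have hsep : ‖x - y‖ / 2 ≤ ‖x' - y‖ := by
    have := norm_sub_le_norm_sub_add_norm_sub x x' y
    linarith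
  have hsphere := norm_midpoint_le_of_norm_le hX hy hx'y.le le_rfl
  have hshift : ‖(1/2 : ℝ) • (x + y)‖ ≤ ‖(1/2 : ℝ) • (x' + y)‖ + (‖x‖ - ‖y‖) / 2 := by
    have hhalf : ‖(1/2 : ℝ) • (x - x')‖ = (‖x‖ - ‖y‖) / 2 := by
      rw [norm_smul, hxx', Real.norm_of_nonneg (by norm_num)]; ring
    rw [show x + y = (x' + y) + (x - x') by abel, smul_add, ← hhalf]
    exact norm_add_le _ _
  have hgain : A * (‖x - y‖ / 2) ^ p / ((‖x‖ + ‖y‖) / 2) ^ (p - 1) ≤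
      A * ‖x' - y‖ ^ p / ‖y‖ ^ (p - 1) := by
    gcongr
    linarith
  linarith

end NormedSpace

/-- Borwein–Vanderwerff (power type case): if the norm has modulus of uniform
convexity of power type `p` with constant `A` and `Ψ` is convex nondecreasing with
power type `p` modulus `B εᵖ` and right derivative `Ψ′₊(t) ≥ K t^{p−1}`, then
`Ψ ∘ ‖·‖` is uniformly convex with modulus `min{B/2ᵖ, AK/8ᵖ}·εᵖ`. -/
theorem stmt_13 {X : Type*} [NormedAddCommGroup X] [NormedSpace ℝ X]
    (p A B K : ℝ) (hp : 2 ≤ p) (hA : 0 < A) (hA2 : A ≤ 1/2) (hB : 0 < B) (hK : 0 < K)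
    (hX : ∀ u v : X, ‖u‖ ≤ 1 → ‖v‖ ≤ 1 → ‖(1/2 : ℝ) • (u + v)‖ ≤ 1 - A * ‖u - v‖ ^ p)
    (Ψ : ℝ → ℝ) (hΨconv : ConvexOn ℝ (Set.Ici 0) Ψ) (hΨmono : MonotoneOn Ψ (Set.Ici 0))
    (hΨuc : ∀ a b : ℝ, 0 ≤ a → 0 ≤ b →
      Ψ ((a + b) / 2) ≤ Ψ a / 2 + Ψ b / 2 - B * |a - b| ^ p)
    (Ψ' : ℝ → ℝ)
    (hΨd : ∀ t > (0:ℝ), HasDerivWithinAt Ψ (Ψ' t) (Set.Ici t) t)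
    (hΨ'K : ∀ t > (0:ℝ), K * t ^ (p - 1) ≤ Ψ' t) :
    ∀ x y : X,
      min (B / 2 ^ p) (A * K / 8 ^ p) * ‖x - y‖ ^ p ≤
        Ψ ‖x‖ / 2 + Ψ ‖y‖ / 2 - Ψ ‖(1/2 : ℝ) • (x + y)‖ := by
  intro x y
  wlog hyx : ‖y‖ ≤ ‖x‖ generalizing x y
  · have := this y x (le_of_not_ge hyx)
    rwa [norm_sub_rev, add_comm y, add_comm (Ψ ‖y‖ / 2)] at this
  have hdt : ‖x - y‖ / 2 ≤ (‖x‖ + ‖y‖) / 2 := by linarith [norm_sub_le x y]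
  set d := ‖x - y‖
  set t := (‖x‖ + ‖y‖) / 2 with ht_def
  have hd : 0 ≤ d := norm_nonneg _
  have hmid {m : ℝ} (hm : 0 ≤ m) (hmt : m ≤ t) :=
    le_half_add_sub_of_le_midpoint hΨmono hΨuc (norm_nonneg x) (norm_nonneg y) hm hmt
  rcases le_or_gt (d / 2) (‖x‖ - ‖y‖) with hfar | hnear
  · calc min (B / 2 ^ p) (A * K / 8 ^ p) * d ^ p ≤ B / 2 ^ p * d ^ p := by
          gcongr; apply min_le_left
      _ = B * (d / 2) ^ p := by rw [Real.div_rpow hd (by norm_num)]; ring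
      _ ≤ B * |‖x‖ - ‖y‖| ^ p := by gcongr; exact hfar.trans (le_abs_self _)
      _ ≤ _ := by linarith [hmid (norm_nonneg _) (norm_midpoint_le x y)]
  · have hy : 0 < ‖y‖ := by linarith [norm_nonneg x, ht_def]
    have ht : 0 < t := by positivity
    calc min (B / 2 ^ p) (A * K / 8 ^ p) * d ^ p ≤ A * K / 8 ^ p * d ^ p := by
          gcongr; apply min_le_right
      _ = A * K * (d / 8) ^ p := by rw [Real.div_rpow hd (by norm_num)]; ring
      _ ≤ A * K * ((t / 2) ^ (p - 1) * ((d / 2) ^ p / t ^ (p - 1))) := by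
          gcongr; exact div_eight_rpow_le hd ht (by linarith)
      _ = K * (t / 2) ^ (p - 1) * (A * (d / 2) ^ p / t ^ (p - 1)) := by ring
      _ ≤ Ψ t - Ψ ‖(1/2 : ℝ) • (x + y)‖ := by
          refine mul_rpow_sub_one_mul_le_sub hΨconv hΨmono hΨd hΨ'K (by linarith) hK.le ht
            (by positivity) ?_ (norm_nonneg _) ?_
          · -- the gain is at most `A t`, and `A ≤ 1/2`
            rw [mul_div_assoc]
            nlinarith [rpow_div_rpow_sub_one_le (by positivity) hdt ht (by linarith : (0:ℝ) ≤ p)]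
          · exact norm_midpoint_le_of_sub_le hA.le (by linarith) hX hyx hy hnear.le
      _ ≤ _ := by
          have : 0 ≤ B * |‖x‖ - ‖y‖| ^ p := by positivity
          linarith [hmid ht.le le_rfl]
end

section
/- Let X be a Banach space whose norm has modulus of uniform convexity δ_X(ε) = Aεᵖ for all ε ∈ (0,2], with A ∈ (0,1/2) and p ≥ 2. Then the function x ↦ (1/p)‖x‖ᵖ is uniformly convex on all of X with modulus (A/8ᵖ)εᵖ; that is, for all x, y ∈ X with ‖x−y‖ ≥ ε > 0: (1/p)‖(x+y)/2‖ᵖ ≤ (1/2p)‖x‖ᵖ + (1/2p)‖y‖ᵖ − (A/8ᵖ)εᵖ. -/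
/-!
Write `a = ‖x‖`, `b = ‖y‖`, `d = ‖x - y‖`. If `d ≤ 2 |a - b|`, Clarkson's inequality on `ℝ`,
`((a + b) / 2) ^ p + (|a - b| / 2) ^ p ≤ (a ^ p + b ^ p) / 2` (convexity and superadditivity of
`t ↦ t ^ (p / 2)`), already gives the gain. Otherwise, for `b ≤ a`, we have `a < 3 b`, and the
modulus applied to `x / a` and `y / b` at `ε = d / (2 a)` pushes `‖(x + y) / 2‖` below
`M = (a + b) / 2` by `τ = b A εᵖ`; then `(M - τ) ^ p ≤ M ^ p - M ^ (p - 1) τ`. In both cases the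
constant `8` comes from `3 p / 2 ≤ 2 ^ p`.
-/

open Real Set

namespace Real

theorem two_mul_le_two_rpow {p : ℝ} (hp : 2 ≤ p) : 2 * p ≤ 2 ^ p := by
  have bernoulli := one_add_mul_self_le_rpow_one_add (by norm_num : (-1 : ℝ) ≤ 1)
    (by linarith : 1 ≤ p - 1)
  rw [← sub_add_cancel p 1, rpow_add_one (by norm_num)]
  norm_num at bernoulli
  linarith

theorem mul_div_eight_rpow_le {p d : ℝ} (hp : 2 ≤ p) (hd : 0 ≤ d) :
    p * (d / 8) ^ p ≤ 2 / 3 * (d / 4) ^ p := by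
  have h : (d / 4) ^ p = 2 ^ p * (d / 8) ^ p := by
    rw [← mul_rpow (by norm_num) (by positivity)]; ring_nf
  rw [h]
  have := two_mul_le_two_rpow hp
  have : 0 ≤ (d / 8) ^ p := by positivity
  nlinarith

theorem sub_rpow_le_rpow_sub_mul {p M t : ℝ} (hp : 1 ≤ p) (ht : 0 ≤ t) (htM : t ≤ M) :
    (M - t) ^ p ≤ M ^ p - M ^ (p - 1) * t := by
  have hsplit : ∀ x : ℝ, 0 ≤ x → x ^ p = x ^ (p - 1) * x := fun x hx => by
    simpa using rpow_add_one' hx (y := p - 1) (by linarith)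
  rw [hsplit _ (by linarith), hsplit _ (by linarith)]
  have : (M - t) ^ (p - 1) ≤ M ^ (p - 1) := by gcongr; linarith
  nlinarith

theorem clarkson {p a b : ℝ} (hp : 2 ≤ p) (ha : 0 ≤ a) (hb : 0 ≤ b) :
    ((a + b) / 2) ^ p + (|a - b| / 2) ^ p ≤ (a ^ p + b ^ p) / 2 := by
  have hq : 1 ≤ p / 2 := by linarith
  have hsq : ∀ t : ℝ, 0 ≤ t → t ^ p = (t ^ 2) ^ (p / 2) := fun t ht => by
    rw [← rpow_natCast, ← rpow_mul ht]; ring_nf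
  have jensen := (convexOn_rpow hq).2 (sq_nonneg a) (sq_nonneg b)
    (by norm_num : (0 : ℝ) ≤ 1 / 2) (by norm_num : (0 : ℝ) ≤ 1 / 2) (add_halves 1)
  simp only [smul_eq_mul] at jensen
  calc ((a + b) / 2) ^ p + (|a - b| / 2) ^ p
      = (((a + b) / 2) ^ 2) ^ (p / 2) + ((|a - b| / 2) ^ 2) ^ (p / 2) := by
        rw [hsq _ (by positivity), hsq _ (by positivity)]
    _ ≤ (((a + b) / 2) ^ 2 + (|a - b| / 2) ^ 2) ^ (p / 2) :=
        add_rpow_le_rpow_add (by positivity) (by positivity) hq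
    _ = (1 / 2 * a ^ 2 + 1 / 2 * b ^ 2) ^ (p / 2) := by
        congr 1; rw [div_pow, div_pow, sq_abs]; ring
    _ ≤ 1 / 2 * (a ^ 2) ^ (p / 2) + 1 / 2 * (b ^ 2) ^ (p / 2) := jensen
    _ = (a ^ p + b ^ p) / 2 := by rw [← hsq a ha, ← hsq b hb]; ring

theorem rpow_add_mul_div_eight_rpow_le {p A a b d m : ℝ} (hp : 2 ≤ p) (hA : 0 ≤ A)
    (hd : 0 ≤ d) (hm : 0 ≤ m) (hba : b ≤ a) (hb : a < 3 * b)
    (hm_le : m ≤ (a + b) / 2 - b * (A * (d / (2 * a)) ^ p)) :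
    m ^ p + p * A * (d / 8) ^ p ≤ (a ^ p + b ^ p) / 2 := by
  have ha : 0 < a := by linarith
  have hb0 : 0 ≤ b := by linarith
  have hτ : 0 ≤ b * (A * (d / (2 * a)) ^ p) := by positivity
  have hpow :
      m ^ p ≤ ((a + b) / 2) ^ p - ((a + b) / 2) ^ (p - 1) * (b * (A * (d / (2 * a)) ^ p)) :=
    (rpow_le_rpow hm hm_le (by linarith)).trans
      (sub_rpow_le_rpow_sub_mul (by linarith) hτ (by linarith))
  have hmean : ((a + b) / 2) ^ p ≤ (a ^ p + b ^ p) / 2 := by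
    linarith [clarkson hp ha.le hb0, show 0 ≤ (|a - b| / 2) ^ p by positivity]
  have hsplit : (a / 2) ^ p = (a / 2) ^ (p - 1) * (a / 2) := by
    simpa using rpow_add_one' (x := a / 2) (y := p - 1) (by positivity) (by linarith)
  have hprod : (a / 2) ^ p * (d / (2 * a)) ^ p = (d / 4) ^ p := by
    rw [← mul_rpow (by positivity) (by positivity)]; congr 1; field_simp; ring
  have hgain :
      p * A * (d / 8) ^ p ≤ ((a + b) / 2) ^ (p - 1) * (b * (A * (d / (2 * a)) ^ p)) := calc
    p * A * (d / 8) ^ p ≤ A * (2 / 3 * (d / 4) ^ p) := by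
      rw [mul_comm p A, mul_assoc]
      exact mul_le_mul_of_nonneg_left (mul_div_eight_rpow_le hp hd) hA
    _ = (a / 2) ^ (p - 1) * (a / 3 * (A * (d / (2 * a)) ^ p)) := by
      rw [← hprod, hsplit]; ring
    _ ≤ ((a + b) / 2) ^ (p - 1) * (b * (A * (d / (2 * a)) ^ p)) := by
      have : 0 ≤ ((a + b) / 2) ^ (p - 1) := rpow_nonneg (by linarith) _
      gcongr
      all_goals linarith
  linarith

end Real

def UniformlyConvexWithPowerModulus (X : Type*) [NormedAddCommGroup X] [NormedSpace ℝ X]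
    (A p : ℝ) : Prop :=
  ∀ ε ∈ Ioc (0 : ℝ) 2, ∀ u v : X, ‖u‖ ≤ 1 → ‖v‖ ≤ 1 → ε ≤ ‖u - v‖ →
    ‖(1 / 2 : ℝ) • (u + v)‖ ≤ 1 - A * ε ^ p

section

variable {X : Type*} [NormedAddCommGroup X] [NormedSpace ℝ X] {A p : ℝ}

theorem norm_half_smul_add_rpow_add_abs_sub_rpow_le (hp : 2 ≤ p) (x y : X) :
    ‖(1 / 2 : ℝ) • (x + y)‖ ^ p + (|‖x‖ - ‖y‖| / 2) ^ p ≤ (‖x‖ ^ p + ‖y‖ ^ p) / 2 := by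
  have hmid : ‖(1 / 2 : ℝ) • (x + y)‖ ≤ (‖x‖ + ‖y‖) / 2 := by
    rw [norm_smul_of_nonneg (by norm_num)]
    linarith [norm_add_le x y]
  have := Real.clarkson hp (norm_nonneg x) (norm_nonneg y)
  have : ‖(1 / 2 : ℝ) • (x + y)‖ ^ p ≤ ((‖x‖ + ‖y‖) / 2) ^ p := by gcongr
  linarith

/-- `hεd` guarantees `ε ≤ ‖x / ‖x‖ - y / ‖y‖‖`, so the modulus applies to the normalised vectors. -/
theorem UniformlyConvexWithPowerModulus.norm_add_le_of_norm_le
    (hX : UniformlyConvexWithPowerModulus X A p) {x y : X} {ε : ℝ} (hyx : ‖y‖ ≤ ‖x‖)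
    (hy : 0 < ‖y‖) (hε : 0 < ε) (hεd : ε * ‖x‖ + (‖x‖ - ‖y‖) ≤ ‖x - y‖) :
    ‖x + y‖ ≤ ‖x‖ + ‖y‖ - 2 * ‖y‖ * (A * ε ^ p) := by
  set a := ‖x‖
  set b := ‖y‖
  have ha : 0 < a := hy.trans_le hyx
  set u := a⁻¹ • x
  set v := b⁻¹ • y
  have hu : ‖u‖ = 1 := by simp [u, norm_smul, ha.ne', a]
  have hv : ‖v‖ = 1 := by simp [v, norm_smul, hy.ne', b]
  have hxu : x = a • u := (smul_inv_smul₀ ha.ne' x).symm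
  have hyv : y = b • v := (smul_inv_smul₀ hy.ne' y).symm
  have hεuv : ε ≤ ‖u - v‖ := by
    have : ‖x - y‖ ≤ a * ‖u - v‖ + (a - b) := calc
      ‖x - y‖ = ‖a • (u - v) + (a - b) • v‖ := by rw [hxu, hyv]; congr 1; module
      _ ≤ ‖a • (u - v)‖ + ‖(a - b) • v‖ := _root_.norm_add_le _ _
      _ = a * ‖u - v‖ + (a - b) := by
        rw [norm_smul_of_nonneg ha.le, norm_smul_of_nonneg (by linarith), hv, mul_one]
    nlinarith
  have hε2 : ε ≤ 2 := hεuv.trans ((norm_sub_le u v).trans (by rw [hu, hv]; norm_num))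
  have huv := hX ε ⟨hε, hε2⟩ u v hu.le hv.le hεuv
  rw [norm_smul_of_nonneg (by norm_num)] at huv
  calc ‖x + y‖ = ‖b • (u + v) + (a - b) • u‖ := by rw [hxu, hyv]; congr 1; module
    _ ≤ ‖b • (u + v)‖ + ‖(a - b) • u‖ := _root_.norm_add_le _ _
    _ = b * ‖u + v‖ + (a - b) := by
      rw [norm_smul_of_nonneg hy.le, norm_smul_of_nonneg (by linarith), hu, mul_one]
    _ ≤ a + b - 2 * b * (A * ε ^ p) := by nlinarith

theorem norm_half_smul_add_rpow_add_le_of_far (hp : 2 ≤ p) (hA : A < 1 / 2) {x y : X}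
    (hfar : ‖x - y‖ ≤ 2 * |‖x‖ - ‖y‖|) :
    ‖(1 / 2 : ℝ) • (x + y)‖ ^ p + p * A * (‖x - y‖ / 8) ^ p ≤ (‖x‖ ^ p + ‖y‖ ^ p) / 2 := by
  have hd : 0 ≤ ‖x - y‖ := norm_nonneg _
  have hgap : p * A * (‖x - y‖ / 8) ^ p ≤ (|‖x‖ - ‖y‖| / 2) ^ p := calc
    p * A * (‖x - y‖ / 8) ^ p ≤ p * (‖x - y‖ / 8) ^ p := by
      have : 0 ≤ p * (‖x - y‖ / 8) ^ p := by positivity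
      nlinarith
    _ ≤ 2 / 3 * (‖x - y‖ / 4) ^ p := Real.mul_div_eight_rpow_le hp hd
    _ ≤ (‖x - y‖ / 4) ^ p := by linarith [show 0 ≤ (‖x - y‖ / 4) ^ p by positivity]
    _ ≤ (|‖x‖ - ‖y‖| / 2) ^ p := rpow_le_rpow (by positivity) (by linarith) (by linarith)
  linarith [norm_half_smul_add_rpow_add_abs_sub_rpow_le hp x y]

theorem UniformlyConvexWithPowerModulus.norm_half_smul_add_rpow_add_le_of_near
    (hX : UniformlyConvexWithPowerModulus X A p) (hp : 2 ≤ p) (hA : 0 ≤ A) {x y : X}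
    (hyx : ‖y‖ ≤ ‖x‖) (hnear : 2 * (‖x‖ - ‖y‖) < ‖x - y‖) :
    ‖(1 / 2 : ℝ) • (x + y)‖ ^ p + p * A * (‖x - y‖ / 8) ^ p ≤ (‖x‖ ^ p + ‖y‖ ^ p) / 2 := by
  have hb : ‖x‖ < 3 * ‖y‖ := by linarith [norm_sub_le x y]
  have hy : 0 < ‖y‖ := by linarith [norm_nonneg x]
  have hx : 0 < ‖x‖ := hy.trans_le hyx
  have hε : 0 < ‖x - y‖ / (2 * ‖x‖) := div_pos (by linarith) (by positivity)
  have hεx : ‖x - y‖ / (2 * ‖x‖) * ‖x‖ = ‖x - y‖ / 2 := by field_simp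
  have hsum := hX.norm_add_le_of_norm_le hyx hy hε (by linarith)
  refine Real.rpow_add_mul_div_eight_rpow_le hp hA (norm_nonneg _) (norm_nonneg _) hyx hb ?_
  rw [norm_smul_of_nonneg (by norm_num)]
  linarith

theorem UniformlyConvexWithPowerModulus.norm_half_smul_add_rpow_add_le
    (hX : UniformlyConvexWithPowerModulus X A p) (hp : 2 ≤ p) (hA : 0 ≤ A) (hA2 : A < 1 / 2)
    (x y : X) :
    ‖(1 / 2 : ℝ) • (x + y)‖ ^ p + p * A * (‖x - y‖ / 8) ^ p ≤ (‖x‖ ^ p + ‖y‖ ^ p) / 2 := by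
  wlog hyx : ‖y‖ ≤ ‖x‖ generalizing x y
  · have := this y x (by linarith)
    rwa [add_comm y x, norm_sub_rev, add_comm (‖y‖ ^ p)] at this
  by_cases hfar : ‖x - y‖ ≤ 2 * |‖x‖ - ‖y‖|
  · exact norm_half_smul_add_rpow_add_le_of_far hp hA2 hfar
  · rw [abs_of_nonneg (by linarith)] at hfar
    exact hX.norm_half_smul_add_rpow_add_le_of_near hp hA hyx (by linarith)

end

/-- If `X` has modulus of uniform convexity `A εᵖ`, then `x ↦ (1/p)‖x‖ᵖ` is uniformly
convex on all of `X` with modulus `(A/8ᵖ) εᵖ`. -/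
theorem stmt_14 {X : Type*} [NormedAddCommGroup X] [NormedSpace ℝ X]
    (p A : ℝ) (hp : 2 ≤ p) (hA : 0 < A) (hA2 : A < 1/2)
    (hX : ∀ ε ∈ Set.Ioc (0:ℝ) 2, ∀ u v : X, ‖u‖ ≤ 1 → ‖v‖ ≤ 1 → ε ≤ ‖u - v‖ →
      ‖(1/2 : ℝ) • (u + v)‖ ≤ 1 - A * ε ^ p) :
    ∀ ε > (0:ℝ), ∀ x y : X, ε ≤ ‖x - y‖ →
      (1 / p) * ‖(1/2 : ℝ) • (x + y)‖ ^ p ≤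
        (1 / (2 * p)) * ‖x‖ ^ p + (1 / (2 * p)) * ‖y‖ ^ p - (A / 8 ^ p) * ε ^ p := by
  intro ε hε x y hεd
  have hp0 : 0 < p := by linarith
  have key := UniformlyConvexWithPowerModulus.norm_half_smul_add_rpow_add_le hX hp hA.le hA2 x y
  have hεp : p * A * (ε / 8) ^ p ≤ p * A * (‖x - y‖ / 8) ^ p := by gcongr
  calc (1 / p) * ‖(1 / 2 : ℝ) • (x + y)‖ ^ p
      ≤ 1 / p * ((‖x‖ ^ p + ‖y‖ ^ p) / 2 - p * A * (ε / 8) ^ p) := by gcongr; linarith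
    _ = (1 / (2 * p)) * ‖x‖ ^ p + (1 / (2 * p)) * ‖y‖ ^ p - (A / 8 ^ p) * ε ^ p := by
      rw [div_rpow hε.le (by norm_num)]; field_simp
end

section
/- Let X be a Banach space with modulus of uniform convexity δ_X(ε) = Aεᵖ for ε ∈ (0,2], A ∈ (0,1/2), p ≥ 2, let Φ(t) = (1/p)tᵖ, and let f be proper convex lsc. Fix z ∈ X and r ≥ max{1, ‖z − prox^Φ_{1,f}(z)‖}. Then with L = 16r·((3p + 2ᵖ)/(2A))^{1/p}, for all x, y ∈ B(z,r) and λ ∈ (0,1]: ‖prox^Φ_{λ,f}(x) − prox^Φ_{λ,f}(y)‖ ≤ max{2‖x−y‖, L‖x−y‖^{1/p}}. -/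
/-!
Comparing `u` with its radial projection onto the sphere of radius `‖v‖` when the norms of `u`
and `v` are close, and using Clarkson's inequality when they are far apart, turns the modulus
`A εᵖ` into the `p`-uniform convexity inequality
`2A (‖u - v‖ / 4)ᵖ ≤ (‖u‖ᵖ + ‖v‖ᵖ) / 2 - ‖(u + v) / 2‖ᵖ`.
Testing the minimality of `prox λ x` and of `prox λ y` against their midpoint and adding the two
instances of this inequality at `u - v = prox λ y - prox λ x` bounds `‖prox λ x - prox λ y‖ᵖ` by
differences `‖x - prox λ y‖ᵖ - ‖y - prox λ y‖ᵖ ≤ p ‖x - y‖ (7r)ᵖ⁻¹`, which is linear in `‖x - y‖`.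
The radius `7r` needs every displacement `α = ‖w - prox λ w‖` on the ball to be at most `5r`:
testing `prox λ w` and `prox 1 z` against the convex combinations of the two with weight
`t = r / (r + α)` and adding leaves `αᵖ - ((1 - t) α + 2rt)ᵖ ≤ (γ + r)ᵖ - γᵖ` with
`γ = ‖z - prox 1 z‖ ≤ r`, and the left side is the larger one as soon as `α > 5r`.
-/

open Real Set

lemma self_mul_rpow_sub_one {b p : ℝ} (hb : 0 ≤ b) (hp : p ≠ 0) : b * b ^ (p - 1) = b ^ p := by
  conv_rhs => rw [show p = 1 + (p - 1) by ring, rpow_add' hb (by simpa using hp), rpow_one]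

lemma rpow_tangent_le {p c d : ℝ} (hp : 1 ≤ p) (hc : 0 ≤ c) (hd : 0 ≤ d) :
    c ^ p + p * c ^ (p - 1) * (d - c) ≤ d ^ p := by
  rcases hc.eq_or_lt with rfl | hc
  · rcases hp.eq_or_lt with rfl | hp
    · simp
    · simp [zero_rpow (by linarith : p ≠ 0), zero_rpow (by linarith : p - 1 ≠ 0),
        rpow_nonneg hd]
  · have hbern := one_add_mul_self_le_rpow_one_add (by linarith [div_nonneg hd hc.le] :
      -1 ≤ d / c - 1) hp
    rw [add_sub_cancel, div_rpow hd hc.le, le_div_iff₀ (rpow_pos_of_pos hc p)] at hbern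
    calc c ^ p + p * c ^ (p - 1) * (d - c) = (1 + p * (d / c - 1)) * c ^ p := by
          rw [← self_mul_rpow_sub_one hc.le (by linarith : p ≠ 0)]; field_simp
      _ ≤ d ^ p := hbern

lemma rpow_sub_rpow_le_of_le_add {p a b d R : ℝ} (hp : 1 ≤ p) (ha : 0 ≤ a) (hb : 0 ≤ b)
    (hd : 0 ≤ d) (had : a ≤ b + d) (hR : b + d ≤ R) :
    a ^ p - b ^ p ≤ p * d * R ^ (p - 1) := by
  have hbd : 0 ≤ b + d := by linarith
  have htan := rpow_tangent_le hp hbd hb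
  have hmono : a ^ p ≤ (b + d) ^ p := rpow_le_rpow ha had (by linarith)
  have hR' : (b + d) ^ (p - 1) ≤ R ^ (p - 1) := rpow_le_rpow hbd hR (by linarith)
  nlinarith [mul_le_mul_of_nonneg_left hR' (by positivity : 0 ≤ p * d)]

lemma mul_rpow_sub_one_le_rpow_sub_rpow {p a b : ℝ} (hp : 1 ≤ p) (ha : 0 ≤ a) (hab : a ≤ b) :
    (b - a) * b ^ (p - 1) ≤ b ^ p - a ^ p := by
  have h : a * a ^ (p - 1) ≤ a * b ^ (p - 1) :=
    mul_le_mul_of_nonneg_left (rpow_le_rpow ha hab (by linarith)) ha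
  rw [self_mul_rpow_sub_one ha (by linarith)] at h
  rw [← self_mul_rpow_sub_one (ha.trans hab) (by linarith : p ≠ 0)]
  linarith

lemma sq_rpow_half {p x : ℝ} (hx : 0 ≤ x) : (x ^ 2) ^ (p / 2) = x ^ p := by
  rw [← rpow_natCast, ← rpow_mul hx]
  norm_num [mul_div_cancel₀]

lemma half_add_rpow_add_half_sub_rpow_le {p a b : ℝ} (hp : 2 ≤ p) (hb : 0 ≤ b) (hba : b ≤ a) :
    ((a + b) / 2) ^ p + ((a - b) / 2) ^ p ≤ (a ^ p + b ^ p) / 2 := by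
  have ha : 0 ≤ a := hb.trans hba
  have hq : 1 ≤ p / 2 := by linarith
  have hsuper := add_rpow_le_rpow_add (sq_nonneg ((a + b) / 2)) (sq_nonneg ((a - b) / 2)) hq
  have hconv := (convexOn_rpow hq).2 (mem_Ici.2 (sq_nonneg a)) (mem_Ici.2 (sq_nonneg b))
    (by norm_num : (0:ℝ) ≤ 1 / 2) (by norm_num : (0:ℝ) ≤ 1 / 2) (by norm_num)
  rw [sq_rpow_half (by linarith), sq_rpow_half (by linarith)] at hsuper
  simp only [smul_eq_mul, sq_rpow_half ha, sq_rpow_half hb] at hconv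
  calc ((a + b) / 2) ^ p + ((a - b) / 2) ^ p
      ≤ (((a + b) / 2) ^ 2 + ((a - b) / 2) ^ 2) ^ (p / 2) := hsuper
    _ = (1 / 2 * a ^ 2 + 1 / 2 * b ^ 2) ^ (p / 2) := by ring_nf
    _ ≤ (a ^ p + b ^ p) / 2 := by linarith

lemma rpow_sub_rpow_lt_of_five_mul_lt {p r γ α t : ℝ} (hp : 2 ≤ p) (hr : 0 < r) (hγ : 0 ≤ γ)
    (hγr : γ ≤ r) (hα : 5 * r < α) (ht : t * (r + α) = r) :
    ((1 - t) * γ + t * (r + α)) ^ p - γ ^ p < α ^ p - ((1 - t) * α + t * (2 * r)) ^ p := by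
  have ht0 : 0 < t := by nlinarith
  have ht1 : t ≤ 1 := by nlinarith
  set u := (1 - t) * α + t * (2 * r)
  have hu : 4 * r ≤ u := by nlinarith
  have hαu : r / 2 < α - u := by nlinarith
  have hupper : ((1 - t) * γ + t * (r + α)) ^ p - γ ^ p ≤ p * r * (2 * r) ^ (p - 1) :=
    rpow_sub_rpow_le_of_le_add (by linarith) (by nlinarith) hγ hr.le (by nlinarith) (by linarith)
  have hlower := rpow_tangent_le (by linarith : 1 ≤ p) (by linarith : 0 ≤ u) (by linarith : 0 ≤ α)
  have hpow : 2 * (2 * r) ^ (p - 1) ≤ u ^ (p - 1) :=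
    calc 2 * (2 * r) ^ (p - 1) ≤ 2 ^ (p - 1) * (2 * r) ^ (p - 1) := by
          gcongr
          simpa using
            rpow_le_rpow_of_exponent_le (by norm_num : (1:ℝ) ≤ 2) (by linarith : 1 ≤ p - 1)
      _ = (4 * r) ^ (p - 1) := by rw [← mul_rpow (by norm_num) (by linarith)]; ring_nf
      _ ≤ u ^ (p - 1) := rpow_le_rpow (by linarith) hu (by linarith)
  have hpos : 0 < p * (2 * r) ^ (p - 1) := by positivity
  have hαu0 : 0 ≤ p * (α - u) := mul_nonneg (by linarith) (by linarith)
  nlinarith [mul_le_mul_of_nonneg_left hpow hαu0]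

def HasPowerConvexityModulus (X : Type*) [NormedAddCommGroup X] [NormedSpace ℝ X] (A p : ℝ) :
    Prop :=
  ∀ ε ∈ Ioc (0:ℝ) 2, ∀ u v : X, ‖u‖ ≤ 1 → ‖v‖ ≤ 1 → ε ≤ ‖u - v‖ →
    ‖(1/2 : ℝ) • (u + v)‖ ≤ 1 - A * ε ^ p

namespace HasPowerConvexityModulus

variable {X : Type*} [NormedAddCommGroup X] [NormedSpace ℝ X] {A p : ℝ}

lemma norm_midpoint_le (hX : HasPowerConvexityModulus X A p) {u v : X} {b δ : ℝ} (hb : 0 < b)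
    (hu : ‖u‖ ≤ b) (hv : ‖v‖ ≤ b) (hδ : 0 < δ) (hδuv : δ ≤ ‖u - v‖) :
    ‖(1/2 : ℝ) • (u + v)‖ ≤ b * (1 - A * (δ / b) ^ p) := by
  have hscale : ∀ w : X, ‖w‖ ≤ b → ‖b⁻¹ • w‖ ≤ 1 := fun w hw => by
    rw [norm_smul, norm_inv, Real.norm_of_nonneg hb.le]
    exact inv_mul_le_one_of_le₀ hw hb.le
  have hε : δ / b ∈ Ioc (0:ℝ) 2 := by
    refine ⟨div_pos hδ hb, (div_le_iff₀ hb).2 ?_⟩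
    linarith [norm_sub_le_of_le hu hv]
  have hεuv : δ / b ≤ ‖b⁻¹ • u - b⁻¹ • v‖ := by
    rw [← smul_sub, norm_smul, norm_inv, Real.norm_of_nonneg hb.le, div_eq_inv_mul]
    gcongr
  have hscaled := hX (δ / b) hε _ _ (hscale u hu) (hscale v hv) hεuv
  have hmid : (1/2 : ℝ) • (u + v) = b • ((1/2 : ℝ) • (b⁻¹ • u + b⁻¹ • v)) := by
    match_scalars <;> field_simp
  rw [hmid, norm_smul, Real.norm_of_nonneg hb.le]
  gcongr

/-- Comparing `u` with its radial projection `(‖v‖ / ‖u‖) • u` onto the sphere of radius `‖v‖`. -/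
lemma norm_midpoint_le_of_norm_le (hX : HasPowerConvexityModulus X A p) {u v : X}
    (hvu : ‖v‖ ≤ ‖u‖) (hv : 0 < ‖v‖) (hgap : ‖u‖ - ‖v‖ < ‖u - v‖) :
    ‖(1/2 : ℝ) • (u + v)‖ ≤
      (‖u‖ + ‖v‖) / 2 - ‖v‖ * A * ((‖u - v‖ - (‖u‖ - ‖v‖)) / ‖v‖) ^ p := by
  have hu : 0 < ‖u‖ := hv.trans_le hvu
  set w := (‖v‖ / ‖u‖) • u with hw
  have hw_norm : ‖w‖ = ‖v‖ := by
    rw [hw, norm_smul, Real.norm_of_nonneg (by positivity), div_mul_cancel₀ _ hu.ne']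
  have huw : ‖u - w‖ = ‖u‖ - ‖v‖ := by
    have hcoef : 0 ≤ 1 - ‖v‖ / ‖u‖ := sub_nonneg.2 ((div_le_one hu).2 hvu)
    have hsub : u - w = (1 - ‖v‖ / ‖u‖) • u := by rw [hw, sub_smul, one_smul]
    rw [hsub, norm_smul, Real.norm_of_nonneg hcoef, sub_mul, one_mul, div_mul_cancel₀ _ hu.ne']
  have hwv : ‖u - v‖ - (‖u‖ - ‖v‖) ≤ ‖w - v‖ := by
    have := norm_sub_le_norm_sub_add_norm_sub u w v
    linarith
  have hmid := hX.norm_midpoint_le hv hw_norm.le le_rfl (by linarith) hwv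
  have hsplit : (1/2 : ℝ) • (u + v) = (1/2 : ℝ) • (w + v) + (1/2 : ℝ) • (u - w) := by module
  calc ‖(1/2 : ℝ) • (u + v)‖ ≤ ‖(1/2 : ℝ) • (w + v)‖ + ‖(1/2 : ℝ) • (u - w)‖ :=
        hsplit ▸ norm_add_le _ _
    _ ≤ _ := by
        rw [norm_smul _ (u - w), huw, Real.norm_of_nonneg (by norm_num)]
        linarith

lemma two_mul_rpow_le (hX : HasPowerConvexityModulus X A p) (hp : 2 ≤ p) (hA : 0 ≤ A)
    (hA2 : A ≤ 1/2) (u v : X) :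
    2 * A * (‖u - v‖ / 4) ^ p ≤ (‖u‖ ^ p + ‖v‖ ^ p) / 2 - ‖(1/2 : ℝ) • (u + v)‖ ^ p := by
  wlog hvu : ‖v‖ ≤ ‖u‖ generalizing u v
  · have := this v u (le_of_not_ge hvu)
    rwa [norm_sub_rev, add_comm v, add_comm (‖v‖ ^ p)] at this
  set a := ‖u‖
  set b := ‖v‖
  set s := ‖u - v‖
  have hb : 0 ≤ b := norm_nonneg v
  have hs : 0 ≤ s := norm_nonneg _
  have hclarkson := half_add_rpow_add_half_sub_rpow_le hp hb hvu
  have hmid : ‖(1/2 : ℝ) • (u + v)‖ ≤ (a + b) / 2 := by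
    rw [norm_smul, Real.norm_of_nonneg (by norm_num)]
    linarith [norm_add_le u v]
  rcases le_or_gt (s / 2) (a - b) with hgap | hgap
  · have h1 : ‖(1/2 : ℝ) • (u + v)‖ ^ p ≤ ((a + b) / 2) ^ p :=
      rpow_le_rpow (norm_nonneg _) hmid (by linarith)
    have h2 : (s / 4) ^ p ≤ ((a - b) / 2) ^ p :=
      rpow_le_rpow (by positivity) (by linarith) (by linarith)
    nlinarith [rpow_nonneg (by positivity : 0 ≤ s / 4) p]
  · have hbpos : 0 < b := by
      refine hb.lt_of_ne fun hb0 => ?_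
      have hsa : s = a := by simp [s, a, norm_eq_zero.1 hb0.symm]
      linarith [norm_nonneg u]
    set δ := s - (a - b)
    have hδ0 : 0 ≤ δ := by linarith
    set M := (a + b) / 2 with hM
    set H := b * A * (δ / b) ^ p
    have hH0 : 0 ≤ H := by positivity
    have hmidH : ‖(1/2 : ℝ) • (u + v)‖ ≤ M - H :=
      hX.norm_midpoint_le_of_norm_le hvu hbpos (by linarith)
    have hpow : ‖(1/2 : ℝ) • (u + v)‖ ^ p ≤ (M - H) ^ p :=
      rpow_le_rpow (norm_nonneg _) hmidH (by linarith)
    have hdrop : H * M ^ (p - 1) ≤ M ^ p - (M - H) ^ p := by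
      simpa using mul_rpow_sub_one_le_rpow_sub_rpow (p := p) (by linarith)
        ((norm_nonneg _).trans hmidH) (by linarith : M - H ≤ M)
    have hHM : A * δ ^ p ≤ H * M ^ (p - 1) := by
      have hHb : H * b ^ (p - 1) = A * δ ^ p := by
        calc H * b ^ (p - 1) = A * ((δ / b) ^ p * b ^ p) := by
              rw [← self_mul_rpow_sub_one hb (by linarith : p ≠ 0)]; ring
          _ = A * δ ^ p := by
              rw [← mul_rpow (by positivity) hb, div_mul_cancel₀ _ hbpos.ne']
      rw [← hHb]
      exact mul_le_mul_of_nonneg_left (rpow_le_rpow hb (by linarith) (by linarith)) hH0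
    have hδs : 2 * (s / 4) ^ p ≤ δ ^ p := by
      have h2p : (2:ℝ) ≤ 2 ^ p := by
        simpa using rpow_le_rpow_of_exponent_le (by norm_num : (1:ℝ) ≤ 2) (by linarith : 1 ≤ p)
      calc 2 * (s / 4) ^ p ≤ 2 ^ p * (s / 4) ^ p := by gcongr
        _ = (s / 2) ^ p := by rw [← mul_rpow (by norm_num) (by positivity)]; ring_nf
        _ ≤ δ ^ p := rpow_le_rpow (by positivity) (by linarith) (by linarith)
    nlinarith [mul_le_mul_of_nonneg_left hδs hA, rpow_nonneg (by linarith : 0 ≤ (a - b) / 2) p]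

end HasPowerConvexityModulus

lemma norm_sub_convex_combination_le {X : Type*} [NormedAddCommGroup X] [NormedSpace ℝ X]
    (w a b : X) {t : ℝ} (ht : t ∈ Icc (0:ℝ) 1) :
    ‖w - (t • a + (1 - t) • b)‖ ≤ t * ‖w - a‖ + (1 - t) * ‖w - b‖ := by
  have hsplit : w - (t • a + (1 - t) • b) = t • (w - a) + (1 - t) • (w - b) := by module
  rw [hsplit]
  refine (norm_add_le _ _).trans_eq ?_
  rw [norm_smul, norm_smul, Real.norm_of_nonneg ht.1, Real.norm_of_nonneg (sub_nonneg.2 ht.2)]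

structure IsProperConvex {X : Type*} [AddCommGroup X] [Module ℝ X] (f : X → EReal) : Prop where
  ne_bot : ∀ x, f x ≠ ⊥
  exists_ne_top : ∃ x, f x ≠ ⊤
  convex : ∀ x y : X, ∀ t ∈ Icc (0:ℝ) 1,
    f (t • x + (1 - t) • y) ≤ ((t : ℝ) : EReal) * f x + ((1 - t : ℝ) : EReal) * f y

def IsPowerProx {X : Type*} [NormedAddCommGroup X] [NormedSpace ℝ X]
    (f : X → EReal) (p : ℝ) (prox : ℝ → X → X) : Prop :=
  ∀ lam > (0:ℝ), ∀ w y : X,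
    f (prox lam w) + ((‖w - prox lam w‖ ^ p / (p * lam ^ (p - 1)) : ℝ) : EReal) ≤
      f y + ((‖w - y‖ ^ p / (p * lam ^ (p - 1)) : ℝ) : EReal)

namespace IsPowerProx

variable {X : Type*} [NormedAddCommGroup X] [NormedSpace ℝ X] {f : X → EReal} {p : ℝ}
  {prox : ℝ → X → X} {lam : ℝ}

lemma apply_ne_top (hprox : IsPowerProx f p prox) (hf : ∃ x, f x ≠ ⊤) (hlam : 0 < lam) (w : X) :
    f (prox lam w) ≠ ⊤ := by
  obtain ⟨y, hy⟩ := hf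
  intro htop
  have h := hprox lam hlam w y
  rw [htop, EReal.top_add_of_ne_bot (EReal.coe_ne_bot _), top_le_iff] at h
  exact (EReal.add_lt_top hy (EReal.coe_ne_top _)).ne h

lemma variational (hprox : IsPowerProx f p prox) (hf : IsProperConvex f) (hlam : 0 < lam)
    (w q : X) (hq : f q ≠ ⊤) {t : ℝ} (ht : t ∈ Icc (0:ℝ) 1) :
    t * ((f (prox lam w)).toReal - (f q).toReal) ≤
      (‖w - (t • q + (1 - t) • prox lam w)‖ ^ p - ‖w - prox lam w‖ ^ p) / (p * lam ^ (p - 1)) := by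
  set P := prox lam w
  obtain ⟨FP, hFP⟩ : ∃ F : ℝ, f P = F :=
    ⟨_, (EReal.coe_toReal (hprox.apply_ne_top hf.exists_ne_top hlam w) (hf.ne_bot P)).symm⟩
  obtain ⟨Fq, hFq⟩ : ∃ F : ℝ, f q = F := ⟨_, (EReal.coe_toReal hq (hf.ne_bot q)).symm⟩
  have hmin := hprox lam hlam w (t • q + (1 - t) • P)
  have hconv := hf.convex q P t ht
  rw [hFP, hFq] at hconv
  rw [hFP] at hmin
  have hreal : FP + ‖w - P‖ ^ p / (p * lam ^ (p - 1)) ≤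
      t * Fq + (1 - t) * FP + ‖w - (t • q + (1 - t) • P)‖ ^ p / (p * lam ^ (p - 1)) := by
    have := hmin.trans (add_le_add hconv le_rfl)
    exact_mod_cast this
  rw [hFP, hFq, EReal.toReal_coe, EReal.toReal_coe, sub_div]
  linarith

lemma rpow_sub_rpow_le_rpow_sub_rpow (hprox : IsPowerProx f p prox) (hf : IsProperConvex f)
    (hp : 1 ≤ p) (hlam : lam ∈ Ioc (0:ℝ) 1) (w z : X) {t β ρ : ℝ} (ht : t ∈ Icc (0:ℝ) 1)
    (hβ : ‖w - prox 1 z‖ ≤ β) (hβα : β ≤ ‖w - prox lam w‖) (hρ : ‖z - prox lam w‖ ≤ ρ) :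
    ‖w - prox lam w‖ ^ p - ((1 - t) * ‖w - prox lam w‖ + t * β) ^ p ≤
      ((1 - t) * ‖z - prox 1 z‖ + t * ρ) ^ p - ‖z - prox 1 z‖ ^ p := by
  have hp0 : 0 < p := by linarith
  have ht1 : 0 ≤ 1 - t := sub_nonneg.2 ht.2
  have hD : 0 < p * lam ^ (p - 1) := by have := hlam.1; positivity
  have hDp : p * lam ^ (p - 1) ≤ p :=
    mul_le_of_le_one_right hp0.le (rpow_le_one hlam.1.le hlam.2 (by linarith))
  have hP := hprox.variational hf hlam.1 w (prox 1 z)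
    (hprox.apply_ne_top hf.exists_ne_top one_pos z) ht
  have hQ := hprox.variational hf one_pos z (prox lam w)
    (hprox.apply_ne_top hf.exists_ne_top hlam.1 w) ht
  rw [one_rpow, mul_one] at hQ
  set P := prox lam w
  set Q := prox 1 z
  have hwP : ‖w - (t • Q + (1 - t) • P)‖ ≤ (1 - t) * ‖w - P‖ + t * β := by
    have := norm_sub_convex_combination_le w Q P ht
    nlinarith [ht.1]
  have hzQ : ‖z - (t • P + (1 - t) • Q)‖ ≤ (1 - t) * ‖z - Q‖ + t * ρ := by
    have := norm_sub_convex_combination_le z P Q ht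
    nlinarith [ht.1]
  set Δw := ((1 - t) * ‖w - P‖ + t * β) ^ p - ‖w - P‖ ^ p
  set Δz := ((1 - t) * ‖z - Q‖ + t * ρ) ^ p - ‖z - Q‖ ^ p
  have hΔw : Δw ≤ 0 := sub_nonpos.2 <| rpow_le_rpow ((norm_nonneg _).trans hwP)
    (by nlinarith [ht.1]) hp0.le
  have hwbound : t * ((f P).toReal - (f Q).toReal) ≤ Δw / p := by
    calc _ ≤ _ := hP
      _ ≤ Δw / (p * lam ^ (p - 1)) := div_le_div_of_nonneg_right
          (sub_le_sub_right (rpow_le_rpow (norm_nonneg _) hwP hp0.le) _) hD.le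
      _ ≤ Δw / p := by
          rw [div_le_div_iff₀ hD hp0]
          exact mul_le_mul_of_nonpos_left hDp hΔw
  have hzbound : t * ((f Q).toReal - (f P).toReal) ≤ Δz / p :=
    hQ.trans <| div_le_div_of_nonneg_right
      (sub_le_sub_right (rpow_le_rpow (norm_nonneg _) hzQ hp0.le) _) hp0.le
  have hsum : 0 ≤ (Δw + Δz) / p := by rw [add_div]; linarith
  linarith [(le_div_iff₀ hp0).1 hsum]

lemma norm_sub_le_five_mul (hprox : IsPowerProx f p prox) (hf : IsProperConvex f) (hp : 2 ≤ p)
    (hlam : lam ∈ Ioc (0:ℝ) 1) {z w : X} {r : ℝ} (hr : 0 < r) (hz : ‖z - prox 1 z‖ ≤ r)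
    (hw : ‖w - z‖ ≤ r) :
    ‖w - prox lam w‖ ≤ 5 * r := by
  by_contra! hα
  set α := ‖w - prox lam w‖
  set t := r / (r + α)
  have ht : t * (r + α) = r := div_mul_cancel₀ _ (by linarith)
  have htI : t ∈ Icc (0:ℝ) 1 :=
    ⟨by positivity, (div_le_one (by linarith)).2 (by linarith)⟩
  have hβ : ‖w - prox 1 z‖ ≤ 2 * r := by
    linarith [norm_sub_le_norm_sub_add_norm_sub w z (prox 1 z)]
  have hρ : ‖z - prox lam w‖ ≤ r + α := by
    linarith [norm_sub_le_norm_sub_add_norm_sub z w (prox lam w), norm_sub_rev z w]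
  have hcomp := hprox.rpow_sub_rpow_le_rpow_sub_rpow hf (by linarith) hlam w z htI hβ
    (by linarith) hρ
  linarith [rpow_sub_rpow_lt_of_five_mul_lt hp hr (norm_nonneg _) hz hα ht]

lemma rpow_add_rpow_le_midpoint (hprox : IsPowerProx f p prox) (hf : IsProperConvex f)
    (hp : 0 < p) (hlam : 0 < lam) (x y : X) :
    ‖x - prox lam x‖ ^ p + ‖y - prox lam y‖ ^ p ≤
      ‖(1/2 : ℝ) • ((x - prox lam x) + (x - prox lam y))‖ ^ p +
        ‖(1/2 : ℝ) • ((y - prox lam y) + (y - prox lam x))‖ ^ p := by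
  have ht : (1/2 : ℝ) ∈ Icc (0:ℝ) 1 := by norm_num
  have hx := hprox.variational hf hlam x (prox lam y)
    (hprox.apply_ne_top hf.exists_ne_top hlam y) ht
  have hy := hprox.variational hf hlam y (prox lam x)
    (hprox.apply_ne_top hf.exists_ne_top hlam x) ht
  rw [show x - ((1/2 : ℝ) • prox lam y + (1 - 1/2 : ℝ) • prox lam x) =
    (1/2 : ℝ) • ((x - prox lam x) + (x - prox lam y)) by module] at hx
  rw [show y - ((1/2 : ℝ) • prox lam x + (1 - 1/2 : ℝ) • prox lam y) =
    (1/2 : ℝ) • ((y - prox lam y) + (y - prox lam x)) by module] at hy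
  have hD : 0 < p * lam ^ (p - 1) := by positivity
  have hsum := add_le_add hx hy
  rw [← add_div, le_div_iff₀ hD] at hsum
  linarith

lemma four_mul_rpow_le {A R : ℝ} (hprox : IsPowerProx f p prox) (hf : IsProperConvex f)
    (hX : HasPowerConvexityModulus X A p) (hp : 2 ≤ p) (hA : 0 ≤ A)
    (hA2 : A ≤ 1/2) (hlam : 0 < lam) {x y : X} (hRx : ‖x - prox lam x‖ + ‖x - y‖ ≤ R)
    (hRy : ‖y - prox lam y‖ + ‖x - y‖ ≤ R) :
    4 * A * (‖prox lam x - prox lam y‖ / 4) ^ p ≤ p * ‖x - y‖ * R ^ (p - 1) := by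
  have hmid := hprox.rpow_add_rpow_le_midpoint hf (by linarith) hlam x y
  have hx := hX.two_mul_rpow_le hp hA hA2 (x - prox lam x) (x - prox lam y)
  have hy := hX.two_mul_rpow_le hp hA hA2 (y - prox lam y) (y - prox lam x)
  rw [sub_sub_sub_cancel_left, norm_sub_rev] at hx
  rw [sub_sub_sub_cancel_left] at hy
  have hxPy : ‖x - prox lam y‖ ≤ ‖y - prox lam y‖ + ‖x - y‖ := by
    linarith [norm_sub_le_norm_sub_add_norm_sub x y (prox lam y)]
  have hyPx : ‖y - prox lam x‖ ≤ ‖x - prox lam x‖ + ‖x - y‖ := by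
    linarith [norm_sub_le_norm_sub_add_norm_sub y x (prox lam x), norm_sub_rev y x]
  have hxy := rpow_sub_rpow_le_of_le_add (p := p) (by linarith) (norm_nonneg _) (norm_nonneg _)
    (norm_nonneg _) hxPy hRy
  have hyx := rpow_sub_rpow_le_of_le_add (p := p) (by linarith) (norm_nonneg _) (norm_nonneg _)
    (norm_nonneg _) hyPx hRx
  linarith

end IsPowerProx

lemma mul_rpow_sub_one_le_holder_constant {p r : ℝ} (hp : 2 ≤ p) (hr : 1 ≤ r) :
    p * (28 * r) ^ (p - 1) ≤ (16 * r) ^ p * (3 * p + 2 ^ p) / 2 := by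
  have hbern : 1 + (p - 1) * (1 / 7) ≤ (8 / 7 : ℝ) ^ (p - 1) := by
    have := one_add_mul_self_le_rpow_one_add (by norm_num : (-1:ℝ) ≤ 1 / 7)
      (by linarith : 1 ≤ p - 1)
    norm_num at this ⊢
    linarith
  have h28 : 0 < (28 * r) ^ (p - 1) := by positivity
  calc p * (28 * r) ^ (p - 1) ≤ 16 * ((8 / 7) ^ (p - 1) * (28 * r) ^ (p - 1)) := by
        nlinarith [mul_le_mul_of_nonneg_right hbern h28.le]
    _ = 16 * (32 * r) ^ (p - 1) := by rw [← mul_rpow (by norm_num) (by positivity)]; ring_nf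
    _ ≤ 16 * r * (32 * r) ^ (p - 1) := by gcongr; linarith
    _ = (16 * r) ^ p * 2 ^ p / 2 := by
        rw [← mul_rpow (by positivity) (by norm_num), ← self_mul_rpow_sub_one (by positivity)
          (by linarith : p ≠ 0)]
        ring_nf
    _ ≤ (16 * r) ^ p * (3 * p + 2 ^ p) / 2 := by gcongr; linarith

lemma holder_bound_of_four_mul_rpow_le {p A r s d : ℝ} (hp : 2 ≤ p) (hA : 0 < A) (hr : 1 ≤ r)
    (hs : 0 ≤ s) (hd : 0 ≤ d) (h : 4 * A * (s / 4) ^ p ≤ p * d * (7 * r) ^ (p - 1)) :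
    s ≤ 16 * r * ((3 * p + 2 ^ p) / (2 * A)) ^ (1 / p) * d ^ (1 / p) := by
  have hp0 : 0 < p := by linarith
  set C := (3 * p + 2 ^ p) / (2 * A)
  have hC : 0 ≤ C := by positivity
  have hsp : A * s ^ p ≤ p * (28 * r) ^ (p - 1) * d := by
    have h4 : (4:ℝ) ^ p * (s / 4) ^ p = s ^ p := by
      rw [← mul_rpow (by norm_num) (by positivity)]; ring_nf
    have h28 : (4:ℝ) ^ (p - 1) * (7 * r) ^ (p - 1) = (28 * r) ^ (p - 1) := by
      rw [← mul_rpow (by norm_num) (by positivity)]; ring_nf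
    rw [← h4, ← self_mul_rpow_sub_one (by norm_num : (0:ℝ) ≤ 4) hp0.ne', ← h28]
    nlinarith [mul_le_mul_of_nonneg_left h (by positivity : (0:ℝ) ≤ 4 ^ (p - 1))]
  have hK : (16 * r * C ^ (1 / p) * d ^ (1 / p)) ^ p = (16 * r) ^ p * C * d := by
    rw [mul_rpow (by positivity) (by positivity), mul_rpow (by positivity) (by positivity),
      ← rpow_mul hC, ← rpow_mul hd, one_div_mul_cancel hp0.ne', rpow_one, rpow_one]
  rw [← rpow_le_rpow_iff hs (by positivity) hp0, hK]
  have : A * s ^ p ≤ A * ((16 * r) ^ p * C * d) := by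
    calc A * s ^ p ≤ p * (28 * r) ^ (p - 1) * d := hsp
      _ ≤ (16 * r) ^ p * (3 * p + 2 ^ p) / 2 * d :=
          mul_le_mul_of_nonneg_right (mul_rpow_sub_one_le_holder_constant hp hr) hd
      _ = A * ((16 * r) ^ p * C * d) := by simp only [C]; field_simp
  exact le_of_mul_le_mul_left this hA

theorem stmt_16_general {X : Type*} [NormedAddCommGroup X] [NormedSpace ℝ X]
    (p A : ℝ) (hp : 2 ≤ p) (hA : 0 < A) (hA2 : A < 1/2)
    (hX : ∀ ε ∈ Set.Ioc (0:ℝ) 2, ∀ u v : X, ‖u‖ ≤ 1 → ‖v‖ ≤ 1 → ε ≤ ‖u - v‖ →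
      ‖(1/2 : ℝ) • (u + v)‖ ≤ 1 - A * ε ^ p)
    (f : X → EReal) (hfbot : ∀ x, f x ≠ ⊥) (hfproper : ∃ x, f x ≠ ⊤)
    (hfconv : ∀ x y : X, ∀ t ∈ Set.Icc (0:ℝ) 1,
      f (t • x + (1 - t) • y) ≤ ((t : ℝ) : EReal) * f x + ((1 - t : ℝ) : EReal) * f y)
    (prox : ℝ → X → X)
    (hprox : ∀ lam > (0:ℝ), ∀ w y : X,
      f (prox lam w) + ((‖w - prox lam w‖ ^ p / (p * lam ^ (p - 1)) : ℝ) : EReal) ≤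
        f y + ((‖w - y‖ ^ p / (p * lam ^ (p - 1)) : ℝ) : EReal))
    (z : X) (r : ℝ) (hr : max 1 ‖z - prox 1 z‖ ≤ r) :
    ∀ x ∈ Metric.closedBall z r, ∀ y ∈ Metric.closedBall z r, ∀ lam ∈ Set.Ioc (0:ℝ) 1,
      ‖prox lam x - prox lam y‖ ≤
        max (2 * ‖x - y‖)
          (16 * r * ((3 * p + 2 ^ p) / (2 * A)) ^ (1 / p) * ‖x - y‖ ^ (1 / p)) := by
  intro x hx y hy lam hlam
  have hf : IsProperConvex f := ⟨hfbot, hfproper, hfconv⟩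
  have hr1 : 1 ≤ r := (le_max_left _ _).trans hr
  have hzr : ‖z - prox 1 z‖ ≤ r := (le_max_right _ _).trans hr
  rw [Metric.mem_closedBall, dist_eq_norm] at hx hy
  have hxy : ‖x - y‖ ≤ 2 * r := by
    linarith [norm_sub_le_norm_sub_add_norm_sub x z y, norm_sub_rev z y]
  have hdx := IsPowerProx.norm_sub_le_five_mul hprox hf hp hlam (by linarith) hzr hx
  have hdy := IsPowerProx.norm_sub_le_five_mul hprox hf hp hlam (by linarith) hzr hy
  have hkey := IsPowerProx.four_mul_rpow_le (x := x) (y := y) (R := 7 * r) hprox hf hX hp hA.le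
    hA2.le hlam.1 (by linarith) (by linarith)
  exact (holder_bound_of_four_mul_rpow_le hp hA hr1 (norm_nonneg _) (norm_nonneg _) hkey).trans
    (le_max_right _ _)

/-- Hölder continuity of the proximal mapping for `Φ(t) = (1/p)tᵖ` in a space with
modulus of uniform convexity `A εᵖ`. -/
theorem stmt_16 {X : Type*} [NormedAddCommGroup X] [NormedSpace ℝ X] [CompleteSpace X]
    (p A : ℝ) (hp : 2 ≤ p) (hA : 0 < A) (hA2 : A < 1/2)
    (hX : ∀ ε ∈ Set.Ioc (0:ℝ) 2, ∀ u v : X, ‖u‖ ≤ 1 → ‖v‖ ≤ 1 → ε ≤ ‖u - v‖ →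
      ‖(1/2 : ℝ) • (u + v)‖ ≤ 1 - A * ε ^ p)
    (f : X → EReal) (hfbot : ∀ x, f x ≠ ⊥) (hfproper : ∃ x, f x ≠ ⊤)
    (hfconv : ∀ x y : X, ∀ t ∈ Set.Icc (0:ℝ) 1,
      f (t • x + (1 - t) • y) ≤ ((t : ℝ) : EReal) * f x + ((1 - t : ℝ) : EReal) * f y)
    (hflsc : LowerSemicontinuous f)
    (prox : ℝ → X → X)
    (hprox : ∀ lam > (0:ℝ), ∀ w y : X,
      f (prox lam w) + ((‖w - prox lam w‖ ^ p / (p * lam ^ (p - 1)) : ℝ) : EReal) ≤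
        f y + ((‖w - y‖ ^ p / (p * lam ^ (p - 1)) : ℝ) : EReal))
    (z : X) (r : ℝ) (hr : max 1 ‖z - prox 1 z‖ ≤ r) :
    ∀ x ∈ Metric.closedBall z r, ∀ y ∈ Metric.closedBall z r, ∀ lam ∈ Set.Ioc (0:ℝ) 1,
      ‖prox lam x - prox lam y‖ ≤
        max (2 * ‖x - y‖)
          (16 * r * ((3 * p + 2 ^ p) / (2 * A)) ^ (1 / p) * ‖x - y‖ ^ (1 / p)) :=
  stmt_16_general p A hp hA hA2 hX f hfbot hfproper hfconv prox hprox z r hr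
end

section
/- Let X be a Banach space, f : B_X → ℝ ∪ {∞} symmetric (f(x) = f(−x)), f(0) = 0, uniformly convex on B_X with modulus δ and continuous at 0 with modulus ω. Fix M > 0 with ω(M) < 1, set α = ω(M)/2 and β = ω(δ(α)), and let B = {x ∈ B_X : f(x) ≤ δ(α)}. Then B(0,β) ⊆ B ⊆ B(0,α), so the Minkowski functional of B defines an equivalent norm |||·||| on X with (1/α)‖x‖ ≤ |||x||| ≤ (1/β)‖x‖ for all x ∈ X. -/
/-- Renorming from a uniformly convex function: with `α = ω(M)/2`, `β = ω(δ(α))` and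
`B = {x ∈ B_X : f x ≤ δ(α)}` one has `B(0,β) ⊆ B ⊆ B(0,α)`, and the Minkowski
functional of `B` satisfies `(1/α)‖x‖ ≤ |||x||| ≤ (1/β)‖x‖`. -/
theorem stmt_18 {X : Type*} [NormedAddCommGroup X] [NormedSpace ℝ X]
    (f : X → EReal) (hfbot : ∀ x, f x ≠ ⊥) (hf0 : f 0 = 0)
    (hfsym : ∀ x : X, f (-x) = f x)
    (hfconv : ∀ x y : X, ‖x‖ ≤ 1 → ‖y‖ ≤ 1 → ∀ t ∈ Set.Icc (0:ℝ) 1,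
      f (t • x + (1 - t) • y) ≤ ((t : ℝ) : EReal) * f x + ((1 - t : ℝ) : EReal) * f y)
    (ω : ℝ → ℝ) (hωpos : ∀ ε > (0:ℝ), 0 < ω ε)
    (hω : ∀ ε > (0:ℝ), ∀ x : X, ‖x‖ ≤ ω ε → f x < ((ε : ℝ) : EReal))
    (δ : ℝ → ℝ) (hδpos : ∀ ε > (0:ℝ), 0 < δ ε)
    (hδ : ∀ ε > (0:ℝ), ∀ x y : X, ‖x‖ ≤ 1 → ‖y‖ ≤ 1 → f x ≠ ⊤ → f y ≠ ⊤ →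
      ε ≤ ‖x - y‖ →
      ((δ ε : ℝ) : EReal) ≤ ((1/2 : ℝ) : EReal) * f x + ((1/2 : ℝ) : EReal) * f y
        - f ((1/2 : ℝ) • (x + y)))
    (M : ℝ) (hM : 0 < M) (hωM : ω M < 1) :
    Metric.closedBall (0 : X) (ω (δ (ω M / 2))) ⊆
        {x : X | ‖x‖ ≤ 1 ∧ f x ≤ ((δ (ω M / 2) : ℝ) : EReal)} ∧
    {x : X | ‖x‖ ≤ 1 ∧ f x ≤ ((δ (ω M / 2) : ℝ) : EReal)} ⊆
        Metric.closedBall (0 : X) (ω M / 2) ∧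
    ∀ x : X,
      (1 / (ω M / 2)) * ‖x‖ ≤ gauge {x : X | ‖x‖ ≤ 1 ∧ f x ≤ ((δ (ω M / 2) : ℝ) : EReal)} x ∧
      gauge {x : X | ‖x‖ ≤ 1 ∧ f x ≤ ((δ (ω M / 2) : ℝ) : EReal)} x ≤
        (1 / ω (δ (ω M / 2))) * ‖x‖ := by
  set α := ω M / 2 with hα_def
  have hαpos : 0 < α := by have := hωpos M hM; positivity
  have hα1 : α < 1 / 2 := by simp only [hα_def]; linarith
  set d := δ α with hd_def
  have hdpos : 0 < d := hδpos α hαpos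
  set β := ω d with hβ_def
  have hβpos : 0 < β := hωpos d hdpos
  set B := {x : X | ‖x‖ ≤ 1 ∧ f x ≤ ((d : ℝ) : EReal)} with hB_def
  -- key lemma: membership in B forces small norm
  have key : ∀ u : X, ‖u‖ ≤ 1 → f u ≤ ((d : ℝ) : EReal) → ‖u‖ ≤ α := by
    intro u hu1 hfu
    by_contra h
    push_neg at h
    have hfu_top : f u ≠ ⊤ := fun ht => by simp [ht] at hfu
    obtain ⟨r, hr⟩ : ∃ r : ℝ, f u = (r : EReal) :=
      ⟨(f u).toReal, (EReal.coe_toReal hfu_top (hfbot u)).symm⟩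
    have hrd : r ≤ d := by rwa [hr, EReal.coe_le_coe_iff] at hfu
    -- f (u/2) ≤ r/2 by convexity with 0
    have hconv := hfconv u 0 hu1 (by simp) (1/2) (by norm_num)
    simp only [smul_zero, add_zero, hf0, mul_zero] at hconv
    rw [hr] at hconv
    have hconv' : f ((1/2 : ℝ) • u) ≤ ((r/2 : ℝ) : EReal) := by
      calc f ((1/2 : ℝ) • u) ≤ ((1/2 : ℝ) : EReal) * (r : EReal) := hconv
        _ = ((r/2 : ℝ) : EReal) := by
            norm_cast; ring
    have hhalf_top : f ((1/2 : ℝ) • u) ≠ ⊤ := fun ht => by rw [ht] at hconv'; simp at hconv'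
    obtain ⟨s, hs⟩ : ∃ s : ℝ, f ((1/2 : ℝ) • u) = (s : EReal) :=
      ⟨(f _).toReal, (EReal.coe_toReal hhalf_top (hfbot _)).symm⟩
    have hsr : s ≤ r / 2 := by rwa [hs, EReal.coe_le_coe_iff] at hconv'
    -- apply uniform convexity to u/2 and -(u/2)
    have hnorm_half : ‖(1/2 : ℝ) • u‖ ≤ 1 := by
      rw [norm_smul]; simp only [Real.norm_eq_abs]
      rw [abs_of_pos (by norm_num : (0:ℝ) < 1/2)]; linarith
    have hneg_norm : ‖-((1/2 : ℝ) • u)‖ ≤ 1 := by rwa [norm_neg]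
    have hneg_top : f (-((1/2 : ℝ) • u)) ≠ ⊤ := by rw [hfsym]; exact hhalf_top
    have hdist : α ≤ ‖(1/2 : ℝ) • u - -((1/2 : ℝ) • u)‖ := by
      rw [sub_neg_eq_add, ← two_smul ℝ, smul_smul]
      norm_num
      linarith
    have hkey := hδ α hαpos ((1/2 : ℝ) • u) (-((1/2 : ℝ) • u)) hnorm_half hneg_norm
      hhalf_top hneg_top hdist
    rw [add_neg_cancel, smul_zero, hf0, hfsym, hs] at hkey
    have : ((d : ℝ) : EReal) ≤ ((s : ℝ) : EReal) := by
      refine hkey.trans_eq ?_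
      rw [sub_zero]
      norm_cast
      ring
    rw [EReal.coe_le_coe_iff] at this
    linarith
  have hsub2 : B ⊆ Metric.closedBall (0 : X) α := by
    intro x hx
    rw [Metric.mem_closedBall, dist_zero_right]
    exact key x hx.1 hx.2
  have hsub1 : Metric.closedBall (0 : X) β ⊆ B := by
    intro x hx
    rw [Metric.mem_closedBall, dist_zero_right] at hx
    have hx1 : ‖x‖ ≤ 1 := by
      by_contra h
      push_neg at h
      have hxne : x ≠ 0 := by intro h0; rw [h0, norm_zero] at h; linarith
      set v := ‖x‖⁻¹ • x with hv_def
      have hvnorm : ‖v‖ = 1 := norm_smul_inv_norm hxne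
      have hvβ : ‖v‖ ≤ β := by rw [hvnorm]; linarith
      have hfv : f v < ((d : ℝ) : EReal) := hω d hdpos v hvβ
      have := key v (le_of_eq hvnorm) (le_of_lt hfv)
      rw [hvnorm] at this
      linarith
    exact ⟨hx1, (hω d hdpos x hx).le⟩
  refine ⟨hsub1, hsub2, fun x => ?_⟩
  have habs : Absorbent ℝ B :=
    ((absorbent_ball_zero hβpos).mono (Metric.ball_subset_closedBall.trans hsub1))
  constructor
  · have h1 := gauge_mono habs hsub2 x
    rw [gauge_closedBall hαpos.le] at h1
    calc (1 / α) * ‖x‖ = ‖x‖ / α := by ring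
      _ ≤ _ := h1
  · have h2 := gauge_mono ((absorbent_ball_zero hβpos).mono Metric.ball_subset_closedBall) hsub1 x
    rw [gauge_closedBall hβpos.le] at h2
    calc gauge B x ≤ ‖x‖ / β := h2
      _ = (1 / β) * ‖x‖ := by ring
end
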